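/- arXiv:2201.02173 — 5 statements merged into one kernel-verified Lean document; each statement's English description precedes it below -/
import Mathlib

section
/- For every finite simple graph G with at least one vertex, the clique-preserving 2-pathwidth satisfies 2-cpw(G) ≤ 2·tpw(G) − 1, where tpw(G) is the tree-partition width of G. -/
namespace CPWAux
open SimpleGraph

variable {α : Type} [DecidableEq α] {T : SimpleGraph α}

/-- If `P` is a shortest walk from `r` to `b` and `a` is on it, the two pieces bound dists. -/
lemma dist_add_dist_le_of_mem_support {r a b : α} (P : T.Walk r b)
    (hlen : P.length = T.dist r b) (ha : a ∈ P.support) :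
    T.dist r a + T.dist a b ≤ T.dist r b := by
  have hspec := P.take_spec ha
  have hl : (P.takeUntil a ha).length + (P.dropUntil a ha).length = P.length := by
    rw [← SimpleGraph.Walk.length_append, hspec]
  calc T.dist r a + T.dist a b ≤ (P.takeUntil a ha).length + (P.dropUntil a ha).length :=
        Nat.add_le_add (SimpleGraph.dist_le _) (SimpleGraph.dist_le _)
    _ = T.dist r b := by rw [hl, hlen]

/-- Adjacent vertices reachable from `r` in an acyclic graph have different distances to `r`. -/
lemma dist_ne_of_adj (hT : T.IsAcyclic) {r a b : α} (hr : T.Reachable r a)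
    (hab : T.Adj a b) : T.dist r a ≠ T.dist r b := by
  intro h
  have hrb : T.Reachable r b := hr.trans hab.reachable
  obtain ⟨Pa, hPa, hPalen⟩ := hr.exists_path_of_dist
  obtain ⟨Pb, hPb, hPblen⟩ := hrb.exists_path_of_dist
  have hne : a ≠ b := hab.ne
  -- a is not on Pb
  have hna : a ∉ Pb.support := by
    intro hmem
    have h1 := dist_add_dist_le_of_mem_support Pb hPblen hmem
    have h2 : 0 < T.dist a b := hab.reachable.pos_dist_of_ne hne
    omega
  have hQpath : (Pb.concat hab.symm).IsPath := by
    rw [← SimpleGraph.Walk.isPath_reverse_iff, SimpleGraph.Walk.reverse_concat]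
    exact SimpleGraph.Walk.IsPath.cons (by rwa [SimpleGraph.Walk.isPath_reverse_iff])
      (by rwa [SimpleGraph.Walk.support_reverse, List.mem_reverse])
  have heq : Pa = Pb.concat hab.symm :=
    congrArg Subtype.val (hT.path_unique ⟨Pa, hPa⟩ ⟨Pb.concat hab.symm, hQpath⟩)
  have hlen := congrArg SimpleGraph.Walk.length heq
  rw [SimpleGraph.Walk.length_concat] at hlen
  omega

/-- Any vertex at positive distance from `r` has a neighbor strictly closer to `r`. -/
lemma exists_lower_neighbor {r t : α} (hr : T.Reachable r t) (h : 0 < T.dist r t) :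
    ∃ u, T.Adj t u ∧ T.dist r u + 1 = T.dist r t := by
  obtain ⟨P, hP, hPlen⟩ := hr.exists_path_of_dist
  have hne : t ≠ r := by
    intro h'; subst h'; simp [SimpleGraph.dist_self] at h
  obtain ⟨u, hadj, Q, hQ⟩ := SimpleGraph.Walk.exists_eq_cons_of_ne hne P.reverse
  refine ⟨u, hadj, ?_⟩
  have h1 : T.dist r u ≤ Q.reverse.length := SimpleGraph.dist_le _
  have hQl : Q.length + 1 = P.length := by
    have := congrArg SimpleGraph.Walk.length hQ
    simp only [SimpleGraph.Walk.length_cons, SimpleGraph.Walk.length_reverse] at this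
    omega
  rw [SimpleGraph.Walk.length_reverse] at h1
  have h2 : T.dist r t ≤ T.dist r u + 1 := by
    obtain ⟨W, hW⟩ := (hr.trans hadj.reachable).exists_walk_length_eq_dist
    have := SimpleGraph.dist_le (W.concat hadj.symm)
    rwa [SimpleGraph.Walk.length_concat, hW] at this
  omega

/-- In an acyclic graph the closer neighbor is unique. -/
lemma lower_neighbor_unique (hT : T.IsAcyclic) {r t u1 u2 : α}
    (hr1 : T.Reachable r u1) (hr2 : T.Reachable r u2)
    (h1 : T.Adj t u1) (h2 : T.Adj t u2)
    (hd1 : T.dist r u1 + 1 = T.dist r t) (hd2 : T.dist r u2 + 1 = T.dist r t) :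
    u1 = u2 := by
  obtain ⟨P1, hP1, hP1len⟩ := hr1.exists_path_of_dist
  obtain ⟨P2, hP2, hP2len⟩ := hr2.exists_path_of_dist
  have key : ∀ {u : α} (P : T.Walk r u) (hadj : T.Adj t u), P.IsPath → P.length = T.dist r u →
      T.dist r u + 1 = T.dist r t → (P.concat hadj.symm).IsPath := by
    intro u P hadj hP hPlen hd
    rw [← SimpleGraph.Walk.isPath_reverse_iff, SimpleGraph.Walk.reverse_concat]
    refine SimpleGraph.Walk.IsPath.cons (by rwa [SimpleGraph.Walk.isPath_reverse_iff]) ?_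
    rw [SimpleGraph.Walk.support_reverse, List.mem_reverse]
    intro hmem
    have := dist_add_dist_le_of_mem_support P hPlen hmem
    have ht0 : 0 < T.dist t u := hadj.reachable.pos_dist_of_ne hadj.ne
    omega
  have k1 := key P1 h1 hP1 hP1len hd1
  have k2 := key P2 h2 hP2 hP2len hd2
  have heq : P1.concat h1.symm = P2.concat h2.symm :=
    congrArg Subtype.val (hT.path_unique ⟨_, k1⟩ ⟨_, k2⟩)
  obtain ⟨hv, -⟩ := SimpleGraph.Walk.concat_inj heq
  exact hv

/-- Acyclic graphs have no triangles. -/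
lemma no_triangle (hT : T.IsAcyclic) {a b c : α} (hab : T.Adj a b) (hbc : T.Adj b c)
    (hac : T.Adj a c) : False := by
  have p1 : (SimpleGraph.Walk.cons hac SimpleGraph.Walk.nil : T.Walk a c).IsPath := by
    simp [SimpleGraph.Walk.cons_isPath_iff, hac.ne]
  have p2 : (SimpleGraph.Walk.cons hab (SimpleGraph.Walk.cons hbc SimpleGraph.Walk.nil) :
      T.Walk a c).IsPath := by
    simp [SimpleGraph.Walk.cons_isPath_iff, hab.ne, hbc.ne, hac.ne]
  have heq := congrArg Subtype.val (hT.path_unique ⟨_, p1⟩ ⟨_, p2⟩)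
  have := congrArg SimpleGraph.Walk.length heq
  simp at this

/-- canonical representative of the component of `t` -/
noncomputable def root (T : SimpleGraph α) (t : α) : α := Quot.out (T.connectedComponentMk t)

lemma root_reachable (T : SimpleGraph α) (t : α) : T.Reachable (root T t) t :=
  SimpleGraph.ConnectedComponent.exact (Quot.out_eq (T.connectedComponentMk t))

lemma root_eq_of_adj {a b : α} (hab : T.Adj a b) : root T a = root T b :=
  congrArg Quot.out (SimpleGraph.ConnectedComponent.sound hab.reachable)

/-- depth of a node: distance to the root of its component -/
noncomputable def depth (T : SimpleGraph α) (t : α) : ℕ := T.dist (root T t) t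

lemma dist_le_add_one' {r a b : α} (hr : T.Reachable r a) (hab : T.Adj a b) :
    T.dist r b ≤ T.dist r a + 1 := by
  obtain ⟨W, hW⟩ := hr.exists_walk_length_eq_dist
  have := SimpleGraph.dist_le (W.concat hab)
  rwa [SimpleGraph.Walk.length_concat, hW] at this

/-- parent of a node: a canonical neighbor one step closer to the root (or itself at a root) -/
noncomputable def parent (T : SimpleGraph α) (t : α) : α :=
  if h : 0 < depth T t then Classical.choose (exists_lower_neighbor (root_reachable T t) h)
  else t

lemma parent_spec {t : α} (h : 0 < depth T t) :
    T.Adj t (parent T t) ∧ T.dist (root T t) (parent T t) + 1 = depth T t := by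
  rw [parent, dif_pos h]
  exact Classical.choose_spec (exists_lower_neighbor (root_reachable T t) h)

lemma parent_depth {t : α} (h : parent T t ≠ t) :
    T.Adj t (parent T t) ∧ depth T (parent T t) + 1 = depth T t := by
  have hpos : 0 < depth T t := by
    by_contra h'
    exact h (by rw [parent, dif_neg h'])
  obtain ⟨hadj, hd⟩ := parent_spec hpos
  refine ⟨hadj, ?_⟩
  rwa [depth, ← root_eq_of_adj hadj]

lemma parent_self_of_depth_zero {t : α} (h : depth T t = 0) : parent T t = t := by
  rw [parent, dif_neg (by omega)]

/-- in an acyclic graph, each edge is a parent edge -/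
lemma adj_parent (hT : T.IsAcyclic) {a b : α} (hab : T.Adj a b) :
    (parent T a = b ∧ depth T a = depth T b + 1) ∨
    (parent T b = a ∧ depth T b = depth T a + 1) := by
  have hroot : root T a = root T b := root_eq_of_adj hab
  have hra : T.Reachable (root T a) a := root_reachable T a
  have hrb : T.Reachable (root T a) b := hroot ▸ root_reachable T b
  have hne : T.dist (root T a) a ≠ T.dist (root T a) b := dist_ne_of_adj hT hra hab
  have h1 : T.dist (root T a) b ≤ T.dist (root T a) a + 1 := dist_le_add_one' hra hab
  have h2 : T.dist (root T a) a ≤ T.dist (root T a) b + 1 := dist_le_add_one' hrb hab.symm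
  have hda : depth T a = T.dist (root T a) a := rfl
  have hdb : depth T b = T.dist (root T a) b := by rw [depth, ← hroot]
  rcases Nat.lt_or_ge (T.dist (root T a) a) (T.dist (root T a) b) with hlt | hge
  · -- b is deeper; parent of b is a
    right
    have hposb : 0 < depth T b := by omega
    obtain ⟨hadj, hd⟩ := parent_spec hposb
    rw [← hroot] at hd
    have hd' : T.dist (root T a) (parent T b) + 1 = T.dist (root T a) b := by omega
    have : parent T b = a :=
      lower_neighbor_unique hT (hrb.trans hadj.reachable) hra hadj hab.symm hd' (by omega)
    exact ⟨this, by omega⟩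
  · left
    have hposa : 0 < depth T a := by omega
    obtain ⟨hadj, hd⟩ := parent_spec hposa
    have hd' : T.dist (root T a) (parent T a) + 1 = T.dist (root T a) a := hd
    have : parent T a = b :=
      lower_neighbor_unique hT (hra.trans hadj.reachable) hrb hadj hab hd' (by omega)
    exact ⟨this, by omega⟩

lemma parent_parity {t : α} (h : parent T t ≠ t) :
    depth T (parent T t) % 2 ≠ depth T t % 2 := by
  have := (parent_depth h).2
  omega

end CPWAux

-- statement definitions (copied verbatim)
/-- A path decomposition of a simple graph `G`: a sequence of bags covering all
vertices and edges such that the bags containing any fixed vertex form an interval. -/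
structure PathDecomp {V : Type} (G : SimpleGraph V) where
  len : ℕ
  bag : Fin len → Finset V
  cover_vertex : ∀ v : V, ∃ i, v ∈ bag i
  cover_edge : ∀ ⦃u v : V⦄, G.Adj u v → ∃ i, u ∈ bag i ∧ v ∈ bag i
  interval : ∀ (v : V) (i j k : Fin len), i ≤ j → j ≤ k → v ∈ bag i → v ∈ bag k → v ∈ bag j

/-- The pathwidth of a simple graph: minimum over path decompositions of
(maximum bag size minus one). -/
noncomputable def pathwidth {V : Type} (G : SimpleGraph V) : ℕ :=
  sInf {k | ∃ D : PathDecomp G, ∀ i, (D.bag i).card ≤ k + 1}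

/-- The `d`-pathwidth of `G`: the smallest `k` such that `G` is the union of `d`
subgraphs each of pathwidth at most `k`. -/
noncomputable def dPathwidth {V : Type} (d : ℕ) (G : SimpleGraph V) : ℕ :=
  sInf {k | ∃ f : Fin d → SimpleGraph V,
    (∀ i, f i ≤ G) ∧ (⨆ i, f i) = G ∧ ∀ i, pathwidth (f i) ≤ k}

/-- The clique-preserving `d`-pathwidth of `G`: as `dPathwidth`, with the extra
requirement that every clique of `G` is a subgraph of some member of the union. -/
noncomputable def cliquePreservingDPathwidth {V : Type} (d : ℕ) (G : SimpleGraph V) : ℕ :=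
  sInf {k | ∃ f : Fin d → SimpleGraph V,
    (∀ i, f i ≤ G) ∧ (⨆ i, f i) = G ∧ (∀ i, pathwidth (f i) ≤ k) ∧
    ∀ s : Set V, G.IsClique s → ∃ i, (f i).IsClique s}

/-- The tree-partition width of a simple graph: minimum width (largest bag size)
of a tree-partition decomposition (a forest whose bags partition `V(G)`, two
distinct nodes being adjacent iff their bags carry an edge of `G`). -/
noncomputable def treePartitionWidth {V : Type} (G : SimpleGraph V) : ℕ :=
  sInf {w | ∃ (n : ℕ) (T : SimpleGraph (Fin n)), T.IsAcyclic ∧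
    ∃ B : Fin n → Finset V,
      (∀ v : V, ∃! t, v ∈ B t) ∧
      (∀ t1 t2 : Fin n, t1 ≠ t2 →
        ((∃ u ∈ B t1, ∃ v ∈ B t2, G.Adj u v) ↔ T.Adj t1 t2)) ∧
      ∀ t, (B t).card ≤ w}

/-- For every finite simple graph with at least one vertex,
`2-cpw(G) ≤ 2·tpw(G) − 1`. -/
theorem cliquePreservingTwoPathwidth_le_treePartitionWidth
    {V : Type} [Fintype V] [Nonempty V] (G : SimpleGraph V) :
    cliquePreservingDPathwidth 2 G ≤ 2 * treePartitionWidth G - 1 := by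
  classical
  -- the set defining treePartitionWidth is nonempty
  have hne : {w | ∃ (n : ℕ) (T : SimpleGraph (Fin n)), T.IsAcyclic ∧
      ∃ B : Fin n → Finset V,
        (∀ v : V, ∃! t, v ∈ B t) ∧
        (∀ t1 t2 : Fin n, t1 ≠ t2 →
          ((∃ u ∈ B t1, ∃ v ∈ B t2, G.Adj u v) ↔ T.Adj t1 t2)) ∧
        ∀ t, (B t).card ≤ w}.Nonempty := by
    refine ⟨Fintype.card V, 1, ⊥, SimpleGraph.isAcyclic_bot, fun _ => Finset.univ, ?_, ?_, ?_⟩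
    · intro v
      exact ⟨0, Finset.mem_univ v, fun t _ => Subsingleton.elim t 0⟩
    · intro t1 t2 h
      exact absurd (Subsingleton.elim t1 t2) h
    · intro t
      exact Finset.card_le_univ _
  obtain ⟨n, T, hT, B, huniq, hiff, hcard⟩ := Nat.sInf_mem hne
  set w := treePartitionWidth G with hw
  have hcardw : ∀ t, (B t).card ≤ w := hcard
  -- the node of each vertex
  let nd : V → Fin n := fun v => (huniq v).exists.choose
  have hnd : ∀ v, v ∈ B (nd v) := fun v => (huniq v).exists.choose_spec
  have hnd_uniq : ∀ v t, v ∈ B t → t = nd v := by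
    intro v t ht
    exact ((huniq v).unique ht (hnd v))
  have hw1 : 1 ≤ w := by
    obtain ⟨v0⟩ := (inferInstance : Nonempty V)
    have h1 : 1 ≤ (B (nd v0)).card := Finset.card_pos.mpr ⟨v0, hnd v0⟩
    exact le_trans h1 (hcard _)
  -- the two subgraphs
  let f : Fin 2 → SimpleGraph V := fun i =>
    { Adj := fun u v => G.Adj u v ∧ ∃ t : Fin n, CPWAux.depth T t % 2 = i.val ∧
        u ∈ B t ∪ B (CPWAux.parent T t) ∧ v ∈ B t ∪ B (CPWAux.parent T t)
      symm := by
        constructor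
        rintro u v ⟨h, t, hp, hu, hv⟩
        exact ⟨h.symm, t, hp, hv, hu⟩
      loopless := ⟨fun v hv => G.loopless.irrefl v hv.1⟩ }
  have hfadj : ∀ (i : Fin 2) (u v : V), (f i).Adj u v ↔ (G.Adj u v ∧
      ∃ t : Fin n, CPWAux.depth T t % 2 = i.val ∧
        u ∈ B t ∪ B (CPWAux.parent T t) ∧ v ∈ B t ∪ B (CPWAux.parent T t)) := by
    intro i u v; rfl
  -- every nonempty clique fits in a bag together with a parent bag
  have hcliquebag : ∀ S : Set V, G.IsClique S → S.Nonempty →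
      ∃ t : Fin n, ∀ x ∈ S, x ∈ B t ∪ B (CPWAux.parent T t) := by
    intro S hS ⟨u0, hu0⟩
    by_cases hall : ∀ x ∈ S, nd x = nd u0
    · refine ⟨nd u0, fun x hx => Finset.mem_union_left _ ?_⟩
      rw [← hall x hx]; exact hnd x
    · push_neg at hall
      obtain ⟨v0, hv0S, hv0ne⟩ := hall
      have hxy_ne : u0 ≠ v0 := fun h => hv0ne (h ▸ rfl)
      have hTadj : T.Adj (nd u0) (nd v0) := by
        refine (hiff (nd u0) (nd v0) (fun h => hv0ne h.symm)).mp ?_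
        exact ⟨u0, hnd u0, v0, hnd v0, hS hu0 hv0S hxy_ne⟩
      have hsub : ∀ x ∈ S, nd x = nd u0 ∨ nd x = nd v0 := by
        intro x hx
        by_contra hcon
        push_neg at hcon
        obtain ⟨hxa, hxb⟩ := hcon
        have hxu : x ≠ u0 := fun h => hxa (h ▸ rfl)
        have hxv : x ≠ v0 := fun h => hxb (h ▸ rfl)
        have h1 : T.Adj (nd x) (nd u0) :=
          (hiff _ _ hxa).mp ⟨x, hnd x, u0, hnd u0, hS hx hu0 hxu⟩
        have h2 : T.Adj (nd x) (nd v0) :=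
          (hiff _ _ hxb).mp ⟨x, hnd x, v0, hnd v0, hS hx hv0S hxv⟩
        exact CPWAux.no_triangle hT h1 hTadj h2
      rcases CPWAux.adj_parent hT hTadj with ⟨hp, -⟩ | ⟨hp, -⟩
      · -- parent (nd u0) = nd v0
        refine ⟨nd u0, fun x hx => ?_⟩
        rcases hsub x hx with h | h
        · exact Finset.mem_union_left _ (h ▸ hnd x)
        · exact Finset.mem_union_right _ (by rw [hp, ← h]; exact hnd x)
      · refine ⟨nd v0, fun x hx => ?_⟩
        rcases hsub x hx with h | h
        · exact Finset.mem_union_right _ (by rw [hp, ← h]; exact hnd x)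
        · exact Finset.mem_union_left _ (h ▸ hnd x)
  -- clique preservation
  have hcliques : ∀ S : Set V, G.IsClique S → ∃ i, (f i).IsClique S := by
    intro S hS
    rcases S.eq_empty_or_nonempty with rfl | hSne
    · exact ⟨0, fun x hx => absurd hx (Set.notMem_empty x)⟩
    obtain ⟨t, ht⟩ := hcliquebag S hS hSne
    refine ⟨⟨CPWAux.depth T t % 2, Nat.mod_lt _ (by norm_num)⟩, ?_⟩
    intro x hx y hy hxy
    exact ⟨hS hx hy hxy, t, rfl, ht x hx, ht y hy⟩
  -- each part is a subgraph
  have hle : ∀ i, f i ≤ G := fun i _ _ h => h.1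
  -- union
  have hsup : (⨆ i, f i) = G := by
    apply le_antisymm
    · exact iSup_le hle
    · intro u v h
      have hclq : G.IsClique {u, v} := by
        intro x hx y hy hxy
        rcases hx with rfl | hx <;> rcases hy with rfl | hy
        · exact absurd rfl hxy
        · rw [Set.mem_singleton_iff] at hy; subst hy; exact h
        · rw [Set.mem_singleton_iff] at hx; subst hx; exact h.symm
        · rw [Set.mem_singleton_iff] at hx hy; subst hx; subst hy; exact absurd rfl hxy
      obtain ⟨t, ht⟩ := hcliquebag _ hclq ⟨u, Set.mem_insert u {v}⟩
      refine SimpleGraph.iSup_adj.mpr ⟨⟨CPWAux.depth T t % 2, Nat.mod_lt _ (by norm_num)⟩, ?_⟩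
      exact ⟨h, t, rfl, ht u (Set.mem_insert u {v}), ht v (Set.mem_insert_of_mem u rfl)⟩
  -- path decompositions
  have hpw : ∀ i, pathwidth (f i) ≤ 2 * w - 1 := by
    intro i
    set Q : Fin n → Finset V := fun s =>
      if CPWAux.depth T s % 2 = i.val then B s ∪ B (CPWAux.parent T s) else B s with hQ
    set anchor : Fin n → Fin n := fun s =>
      if CPWAux.depth T s % 2 = i.val then CPWAux.parent T s else s with hanchor
    set σ := Tuple.sort anchor with hσ
    have hmono : Monotone (anchor ∘ σ) := Tuple.monotone_sort anchor
    have hmemQ : ∀ (v : V) (s : Fin n), v ∈ Q s ↔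
        (s = nd v ∨ (CPWAux.depth T s % 2 = i.val ∧ CPWAux.parent T s = nd v)) := by
      intro v s
      by_cases hp : CPWAux.depth T s % 2 = i.val
      · rw [hQ]
        simp only [if_pos hp, Finset.mem_union]
        constructor
        · rintro (h | h)
          · exact Or.inl (hnd_uniq v s h)
          · exact Or.inr ⟨hp, hnd_uniq v _ h⟩
        · rintro (rfl | ⟨-, h⟩)
          · exact Or.inl (hnd v)
          · exact Or.inr (h ▸ hnd v)
      · rw [hQ]
        simp only [if_neg hp]
        constructor
        · intro h
          exact Or.inl (hnd_uniq v s h)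
        · rintro (rfl | ⟨h, -⟩)
          · exact hnd v
          · exact absurd h hp
    have hD : ∀ j : Fin n, True := fun _ => trivial
    refine Nat.sInf_le ⟨⟨n, fun j => Q (σ j), ?_, ?_, ?_⟩, ?_⟩
    · -- cover_vertex
      intro v
      refine ⟨σ.symm (nd v), ?_⟩
      simp only [Equiv.apply_symm_apply]
      exact (hmemQ v _).mpr (Or.inl rfl)
    · -- cover_edge
      rintro u v ⟨-, t, hp, hu, hv⟩
      refine ⟨σ.symm t, ?_, ?_⟩ <;>
        · simp only [Equiv.apply_symm_apply, hQ, if_pos hp, Finset.mem_union]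
          first
            | exact (Finset.mem_union.mp hu).imp id id
            | exact (Finset.mem_union.mp hv).imp id id
    · -- interval
      intro v j1 j2 j3 h12 h23 h1 h3
      by_cases hpa : CPWAux.depth T (nd v) % 2 = i.val
      · have hsingle : ∀ s : Fin n, v ∈ Q s → s = nd v := by
          intro s hs
          rcases (hmemQ v s).mp hs with h | ⟨hps, hpar⟩
          · exact h
          · by_contra hne'
            have hps_ne : CPWAux.parent T s ≠ s := by
              rw [hpar]; exact fun h => hne' h.symm
            have := CPWAux.parent_parity hps_ne
            rw [hpar] at this
            omega
        have e1 : σ j1 = σ j3 := (hsingle _ h1).trans (hsingle _ h3).symm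
        have : j1 = j3 := σ.injective e1
        subst this
        have : j2 = j1 := le_antisymm h23 h12
        subst this
        exact h1
      · have hkey : ∀ s : Fin n, v ∈ Q s ↔ anchor s = nd v := by
          intro s
          rw [hmemQ]
          constructor
          · rintro (rfl | ⟨hps, hpar⟩)
            · rw [hanchor]; simp only [if_neg hpa]
            · rw [hanchor]; simp only [if_pos hps]; exact hpar
          · intro h
            by_cases hps : CPWAux.depth T s % 2 = i.val
            · rw [hanchor] at h; simp only [if_pos hps] at h
              exact Or.inr ⟨hps, h⟩
            · rw [hanchor] at h; simp only [if_neg hps] at h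
              exact Or.inl h
        have a1 : anchor (σ j1) = nd v := (hkey _).mp h1
        have a3 : anchor (σ j3) = nd v := (hkey _).mp h3
        have le1 : anchor (σ j1) ≤ anchor (σ j2) := hmono h12
        have le2 : anchor (σ j2) ≤ anchor (σ j3) := hmono h23
        have : anchor (σ j2) = nd v := le_antisymm (a3 ▸ le2) (a1 ▸ le1)
        exact (hkey _).mpr this
    · -- bag sizes
      intro j
      show (Q (σ j)).card ≤ 2 * w - 1 + 1
      have : (Q (σ j)).card ≤ 2 * w := by
        simp only [hQ]
        by_cases hp : CPWAux.depth T (σ j) % 2 = i.val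
        · rw [if_pos hp]
          have h1 := Finset.card_union_le (B (σ j)) (B (CPWAux.parent T (σ j)))
          have h2 := hcardw (σ j)
          have h3 := hcardw (CPWAux.parent T (σ j))
          omega
        · rw [if_neg hp]
          have := hcardw (σ j)
          omega
      omega
  -- conclude
  exact Nat.sInf_le ⟨f, hle, hsup, hpw, hcliques⟩
end

section
/- Let G be a finite simple graph without isolated vertices and let H be the graph obtained from G by adding, for every edge e = {u, v} of G, a new vertex x_e adjacent exactly to u and v, while keeping all vertices and edges of G (H is the primal graph of the CNF ψ(G)). Then for every integer d ≥ 1, d-pw(G) ≤ d-pw(H) ≤ d-pw(G) + 1. -/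
/-- The primal graph `H` of the CNF `ψ(G)`: the graph obtained from `G` by
adding, for each edge `e = {u,v}` of `G`, a new vertex (named by `e` itself)
adjacent exactly to `u` and `v`. -/
def psiPrimal {V : Type} (G : SimpleGraph V) : SimpleGraph (V ⊕ Sym2 V) where
  Adj x y :=
    match x, y with
    | Sum.inl u, Sum.inl v => G.Adj u v
    | Sum.inl u, Sum.inr e => e ∈ G.edgeSet ∧ u ∈ e
    | Sum.inr e, Sum.inl u => e ∈ G.edgeSet ∧ u ∈ e
    | Sum.inr _, Sum.inr _ => False
  symm := by
    refine ⟨?_⟩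
    rintro (u | e) (v | f) h
    · exact h.symm
    · exact h
    · exact h
    · exact h.elim
  loopless := by
    refine ⟨?_⟩
    rintro (u | e) h
    · exact G.irrefl h
    · exact h



set_option linter.unusedSectionVars false

section Attach

variable {V : Type} [Fintype V] [DecidableEq V]

/-- The graph obtained from `F` by attaching, for each `e ∈ S`, a new vertex `inr e`
adjacent to the members of `e`. -/
def attach (F : SimpleGraph V) (S : Set (Sym2 V)) : SimpleGraph (V ⊕ Sym2 V) where
  Adj x y :=
    match x, y with
    | Sum.inl u, Sum.inl v => F.Adj u v
    | Sum.inl u, Sum.inr e => e ∈ S ∧ u ∈ e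
    | Sum.inr e, Sum.inl u => e ∈ S ∧ u ∈ e
    | Sum.inr _, Sum.inr _ => False
  symm := by
    refine ⟨?_⟩
    rintro (u | e) (v | f) h
    · exact h.symm
    · exact h
    · exact h
    · exact h.elim
  loopless := by
    refine ⟨?_⟩
    rintro (u | e) h
    · exact F.irrefl h
    · exact h

open Classical in
/-- Position (bag index) assigned to an edge `e`: a bag containing all members of `e`. -/
noncomputable def pJ (F : SimpleGraph V) (D : PathDecomp F) (e : Sym2 V) : ℕ :=
  if h : ∃ j : Fin D.len, ∀ u ∈ e, u ∈ D.bag j then (h.choose : ℕ) else 0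

lemma pJ_spec {F : SimpleGraph V} {D : PathDecomp F} {e : Sym2 V}
    (h : ∃ j : Fin D.len, ∀ u ∈ e, u ∈ D.bag j) :
    ∃ hj : pJ F D e < D.len, ∀ u ∈ e, u ∈ D.bag ⟨pJ F D e, hj⟩ := by
  classical
  simp only [pJ, dif_pos h]
  exact ⟨h.choose.isLt, h.choose_spec⟩

noncomputable def auxBase (F : SimpleGraph V) (D : PathDecomp F) (j : ℕ) :
    Finset (V ⊕ Sym2 V) :=
  if hj : j < D.len then (D.bag ⟨j, hj⟩).image Sum.inl else ∅

open Classical in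
noncomputable def auxExtra (F : SimpleGraph V) (D : PathDecomp F) (S : Set (Sym2 V)) (j r : ℕ) :
    Finset (V ⊕ Sym2 V) :=
  if h : 1 ≤ r ∧ r - 1 < Fintype.card (Sym2 V) then
    (if (Fintype.equivFin (Sym2 V)).symm ⟨r - 1, h.2⟩ ∈ S ∧
        pJ F D ((Fintype.equivFin (Sym2 V)).symm ⟨r - 1, h.2⟩) = j
      then {Sum.inr ((Fintype.equivFin (Sym2 V)).symm ⟨r - 1, h.2⟩)} else ∅)
  else ∅

open Classical in
noncomputable def auxEnd (S : Set (Sym2 V)) (s : ℕ) : Finset (V ⊕ Sym2 V) :=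
  if h : s < Fintype.card (Sym2 V) then
    (if (Fintype.equivFin (Sym2 V)).symm ⟨s, h⟩ ∈ S then ∅
     else {Sum.inr ((Fintype.equivFin (Sym2 V)).symm ⟨s, h⟩)})
  else ∅

noncomputable def auxBag (F : SimpleGraph V) (D : PathDecomp F) (S : Set (Sym2 V)) (t : ℕ) :
    Finset (V ⊕ Sym2 V) :=
  if t < D.len * (Fintype.card (Sym2 V) + 1) then
    auxBase F D (t / (Fintype.card (Sym2 V) + 1)) ∪
      auxExtra F D S (t / (Fintype.card (Sym2 V) + 1)) (t % (Fintype.card (Sym2 V) + 1))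
  else auxEnd S (t - D.len * (Fintype.card (Sym2 V) + 1))

lemma mem_auxBase_inl {F : SimpleGraph V} {D : PathDecomp F} {j : ℕ} {v : V} :
    Sum.inl v ∈ auxBase F D j ↔ ∃ hj : j < D.len, v ∈ D.bag ⟨j, hj⟩ := by
  by_cases hj : j < D.len <;> simp [auxBase, hj]

lemma not_mem_auxBase_inr {F : SimpleGraph V} {D : PathDecomp F} {j : ℕ} {e : Sym2 V} :
    Sum.inr e ∉ auxBase F D j := by
  by_cases hj : j < D.len <;> simp [auxBase, hj]

lemma not_mem_auxExtra_inl {F : SimpleGraph V} {D : PathDecomp F} {S : Set (Sym2 V)}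
    {j r : ℕ} {v : V} : Sum.inl v ∉ auxExtra F D S j r := by
  classical
  unfold auxExtra
  split_ifs <;> simp

lemma mem_auxExtra_inr {F : SimpleGraph V} {D : PathDecomp F} {S : Set (Sym2 V)}
    {j r : ℕ} {e : Sym2 V} :
    Sum.inr e ∈ auxExtra F D S j r ↔
      r = (Fintype.equivFin (Sym2 V) e : ℕ) + 1 ∧ e ∈ S ∧ pJ F D e = j := by
  classical
  unfold auxExtra
  split_ifs with h h2
  · simp only [Finset.mem_singleton, Sum.inr.injEq]
    constructor
    · rintro rfl
      refine ⟨?_, h2.1, h2.2⟩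
      have : Fintype.equivFin (Sym2 V) ((Fintype.equivFin (Sym2 V)).symm ⟨r - 1, h.2⟩)
          = ⟨r - 1, h.2⟩ := Equiv.apply_symm_apply _ _
      rw [this]
      simp only [Fin.val_mk]
      omega
    · rintro ⟨hr, _, _⟩
      have hr1 : r - 1 = (Fintype.equivFin (Sym2 V) e : ℕ) := by omega
      have : (⟨r - 1, h.2⟩ : Fin (Fintype.card (Sym2 V))) = Fintype.equivFin (Sym2 V) e :=
        Fin.ext hr1
      rw [this, Equiv.symm_apply_apply]
  · simp only [Finset.notMem_empty, false_iff]
    rintro ⟨hr, hS, hpJ⟩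
    have hr1 : r - 1 = (Fintype.equivFin (Sym2 V) e : ℕ) := by omega
    have : (⟨r - 1, h.2⟩ : Fin (Fintype.card (Sym2 V))) = Fintype.equivFin (Sym2 V) e :=
      Fin.ext hr1
    rw [this, Equiv.symm_apply_apply] at h2
    exact h2 ⟨hS, hpJ⟩
  · simp only [Finset.notMem_empty, false_iff]
    rintro ⟨hr, hS, hpJ⟩
    exact h ⟨by omega, by have := (Fintype.equivFin (Sym2 V) e).isLt; omega⟩

lemma not_mem_auxEnd_inl {S : Set (Sym2 V)} {s : ℕ} {v : V} :
    Sum.inl v ∉ auxEnd S s := by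
  classical
  unfold auxEnd
  split_ifs <;> simp

lemma mem_auxEnd_inr {S : Set (Sym2 V)} {s : ℕ} {e : Sym2 V} :
    Sum.inr e ∈ auxEnd S s ↔ s = (Fintype.equivFin (Sym2 V) e : ℕ) ∧ e ∉ S := by
  classical
  unfold auxEnd
  split_ifs with h h2
  · simp only [Finset.notMem_empty, false_iff]
    rintro ⟨hs, hS⟩
    have : (⟨s, h⟩ : Fin (Fintype.card (Sym2 V))) = Fintype.equivFin (Sym2 V) e := Fin.ext hs
    rw [this, Equiv.symm_apply_apply] at h2
    exact hS h2
  · simp only [Finset.mem_singleton, Sum.inr.injEq]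
    constructor
    · rintro rfl
      refine ⟨?_, h2⟩
      rw [Equiv.apply_symm_apply]
    · rintro ⟨hs, _⟩
      have : (⟨s, h⟩ : Fin (Fintype.card (Sym2 V))) = Fintype.equivFin (Sym2 V) e := Fin.ext hs
      rw [this, Equiv.symm_apply_apply]
  · simp only [Finset.notMem_empty, false_iff]
    rintro ⟨hs, _⟩
    exact h (by rw [hs]; exact (Fintype.equivFin (Sym2 V) e).isLt)

lemma card_auxBase {F : SimpleGraph V} {D : PathDecomp F} {j : ℕ} {k : ℕ}
    (h : ∀ i, (D.bag i).card ≤ k) : (auxBase F D j).card ≤ k := by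
  unfold auxBase
  split_ifs with hj
  · exact le_trans Finset.card_image_le (h _)
  · simp

lemma card_auxExtra {F : SimpleGraph V} {D : PathDecomp F} {S : Set (Sym2 V)} {j r : ℕ} :
    (auxExtra F D S j r).card ≤ 1 := by
  classical
  unfold auxExtra
  split_ifs <;> simp

lemma card_auxEnd {S : Set (Sym2 V)} {s : ℕ} : (auxEnd S s).card ≤ 1 := by
  classical
  unfold auxEnd
  split_ifs <;> simp

end Attach

lemma pathwidth_le {V : Type} (G : SimpleGraph V) (k : ℕ)
    (h : ∃ D : PathDecomp G, ∀ i, (D.bag i).card ≤ k + 1) : pathwidth G ≤ k :=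
  Nat.sInf_le h

lemma pathwidth_set_nonempty {V : Type} [Fintype V] (G : SimpleGraph V) :
    {k | ∃ D : PathDecomp G, ∀ i, (D.bag i).card ≤ k + 1}.Nonempty := by
  classical
  refine ⟨Fintype.card V, ⟨⟨1, fun _ => Finset.univ, fun v => ⟨0, Finset.mem_univ v⟩,
    fun u v _ => ⟨0, Finset.mem_univ u, Finset.mem_univ v⟩,
    fun v i j k _ _ _ _ => Finset.mem_univ v⟩, fun i => ?_⟩⟩
  simp [Finset.card_univ]

lemma exists_decomp {V : Type} [Fintype V] (G : SimpleGraph V) :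
    ∃ D : PathDecomp G, ∀ i, (D.bag i).card ≤ pathwidth G + 1 :=
  Nat.sInf_mem (pathwidth_set_nonempty G)



lemma pathwidth_attach_le {V : Type} [Fintype V] [DecidableEq V]
    (F : SimpleGraph V) (S : Set (Sym2 V)) (hSF : ∀ e ∈ S, e ∈ F.edgeSet) (K : ℕ)
    (hF : pathwidth F ≤ K) : pathwidth (attach F S) ≤ K + 1 := by
  classical
  obtain ⟨D, hD0⟩ := exists_decomp F
  have hD : ∀ i, (D.bag i).card ≤ K + 1 := fun i => le_trans (hD0 i) (by omega)
  have hMpos : 0 < (Fintype.card (Sym2 V) + 1) := Nat.succ_pos _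
  have hdiv : ∀ s a : ℕ, s < (Fintype.card (Sym2 V) + 1) → (s + a * (Fintype.card (Sym2 V) + 1)) / (Fintype.card (Sym2 V) + 1) = a := by
    intro s a hs
    rw [Nat.add_mul_div_right _ _ hMpos, Nat.div_eq_of_lt hs, Nat.zero_add]
  have hmod : ∀ s a : ℕ, s < (Fintype.card (Sym2 V) + 1) → (s + a * (Fintype.card (Sym2 V) + 1)) % (Fintype.card (Sym2 V) + 1) = s := by
    intro s a hs
    rw [Nat.add_mul_mod_self_right, Nat.mod_eq_of_lt hs]
  have hlt : ∀ s a : ℕ, s < (Fintype.card (Sym2 V) + 1) → a < D.len → s + a * (Fintype.card (Sym2 V) + 1) < D.len * (Fintype.card (Sym2 V) + 1) := by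
    intro s a hs ha
    calc s + a * (Fintype.card (Sym2 V) + 1) < (Fintype.card (Sym2 V) + 1) + a * (Fintype.card (Sym2 V) + 1) := by omega
    _ = (a + 1) * (Fintype.card (Sym2 V) + 1) := by ring
    _ ≤ D.len * (Fintype.card (Sym2 V) + 1) := Nat.mul_le_mul_right _ (by omega)
  have hexE : ∀ e ∈ S, ∃ j : Fin D.len, ∀ u ∈ e, u ∈ D.bag j := by
    intro e he
    have hee : e ∈ F.edgeSet := hSF e he
    induction e using Sym2.ind with
    | _ a b =>
      rw [SimpleGraph.mem_edgeSet] at hee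
      obtain ⟨j, hja, hjb⟩ := D.cover_edge hee
      refine ⟨j, fun u hu => ?_⟩
      rcases Sym2.mem_iff.1 hu with rfl | rfl
      · exact hja
      · exact hjb
  have tOf_unique : ∀ (e : Sym2 V) (t : ℕ), Sum.inr e ∈ auxBag F D S t →
      t = (if e ∈ S then ((Fintype.equivFin (Sym2 V)) e : ℕ) + 1 + pJ F D e * (Fintype.card (Sym2 V) + 1)
           else D.len * (Fintype.card (Sym2 V) + 1) + ((Fintype.equivFin (Sym2 V)) e : ℕ)) := by
    intro e t ht
    unfold auxBag at ht
    split_ifs at ht with h1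
    · rcases Finset.mem_union.1 ht with ht | ht
      · exact absurd ht not_mem_auxBase_inr
      · obtain ⟨hr, heS, hpJ⟩ := mem_auxExtra_inr.1 ht
        rw [if_pos heS, hpJ]
        have h2 := Nat.mod_add_div' t (Fintype.card (Sym2 V) + 1)
        omega
    · obtain ⟨hs, heS⟩ := mem_auxEnd_inr.1 ht
      rw [if_neg heS]
      omega
  refine pathwidth_le _ _ ⟨⟨D.len * (Fintype.card (Sym2 V) + 1) + Fintype.card (Sym2 V), fun t => auxBag F D S t.val, ?_, ?_, ?_⟩, ?_⟩
  · -- cover_vertex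
    rintro (v | e)
    · obtain ⟨j, hj⟩ := D.cover_vertex v
      have hjt : 0 + (j : ℕ) * (Fintype.card (Sym2 V) + 1) < D.len * (Fintype.card (Sym2 V) + 1) := hlt 0 j hMpos j.isLt
      refine ⟨⟨0 + (j : ℕ) * (Fintype.card (Sym2 V) + 1), by omega⟩, ?_⟩
      show Sum.inl v ∈ auxBag F D S (0 + (j : ℕ) * (Fintype.card (Sym2 V) + 1))
      unfold auxBag
      rw [if_pos hjt, hdiv 0 j hMpos]
      exact Finset.mem_union_left _ (mem_auxBase_inl.2 ⟨j.isLt, by simpa using hj⟩)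
    · by_cases heS : e ∈ S
      · obtain ⟨hj, hjmem⟩ := pJ_spec (hexE e heS)
        have hrM : (((Fintype.equivFin (Sym2 V)) e : ℕ) + 1) < (Fintype.card (Sym2 V) + 1) := by
          have := ((Fintype.equivFin (Sym2 V)) e).isLt
          omega
        have htlt : (((Fintype.equivFin (Sym2 V)) e : ℕ) + 1) + pJ F D e * (Fintype.card (Sym2 V) + 1) < D.len * (Fintype.card (Sym2 V) + 1) := hlt _ _ hrM hj
        refine ⟨⟨(((Fintype.equivFin (Sym2 V)) e : ℕ) + 1) + pJ F D e * (Fintype.card (Sym2 V) + 1), by omega⟩, ?_⟩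
        show Sum.inr e ∈ auxBag F D S ((((Fintype.equivFin (Sym2 V)) e : ℕ) + 1) + pJ F D e * (Fintype.card (Sym2 V) + 1))
        unfold auxBag
        rw [if_pos htlt, hdiv _ _ hrM, hmod _ _ hrM]
        exact Finset.mem_union_right _ (mem_auxExtra_inr.2 ⟨rfl, heS, rfl⟩)
      · refine ⟨⟨D.len * (Fintype.card (Sym2 V) + 1) + ((Fintype.equivFin (Sym2 V)) e : ℕ), by
          have := ((Fintype.equivFin (Sym2 V)) e).isLt; omega⟩, ?_⟩
        show Sum.inr e ∈ auxBag F D S (D.len * (Fintype.card (Sym2 V) + 1) + ((Fintype.equivFin (Sym2 V)) e : ℕ))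
        unfold auxBag
        rw [if_neg (by omega), Nat.add_sub_cancel_left]
        exact mem_auxEnd_inr.2 ⟨rfl, heS⟩
  · -- cover_edge
    rintro (u | e) (v | e') huv
    · have huv' : F.Adj u v := huv
      obtain ⟨j, hju, hjv⟩ := D.cover_edge huv'
      have hjt : 0 + (j : ℕ) * (Fintype.card (Sym2 V) + 1) < D.len * (Fintype.card (Sym2 V) + 1) := hlt 0 j hMpos j.isLt
      refine ⟨⟨0 + (j : ℕ) * (Fintype.card (Sym2 V) + 1), by omega⟩, ?_, ?_⟩
      · show Sum.inl u ∈ auxBag F D S (0 + (j : ℕ) * (Fintype.card (Sym2 V) + 1))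
        unfold auxBag
        rw [if_pos hjt, hdiv 0 j hMpos]
        exact Finset.mem_union_left _ (mem_auxBase_inl.2 ⟨j.isLt, by simpa using hju⟩)
      · show Sum.inl v ∈ auxBag F D S (0 + (j : ℕ) * (Fintype.card (Sym2 V) + 1))
        unfold auxBag
        rw [if_pos hjt, hdiv 0 j hMpos]
        exact Finset.mem_union_left _ (mem_auxBase_inl.2 ⟨j.isLt, by simpa using hjv⟩)
    · obtain ⟨heS, hue⟩ := (huv : e' ∈ S ∧ u ∈ e')
      obtain ⟨hj, hjmem⟩ := pJ_spec (hexE e' heS)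
      have hrM : (((Fintype.equivFin (Sym2 V)) e' : ℕ) + 1) < (Fintype.card (Sym2 V) + 1) := by
        have := ((Fintype.equivFin (Sym2 V)) e').isLt
        omega
      have htlt : (((Fintype.equivFin (Sym2 V)) e' : ℕ) + 1) + pJ F D e' * (Fintype.card (Sym2 V) + 1) < D.len * (Fintype.card (Sym2 V) + 1) := hlt _ _ hrM hj
      refine ⟨⟨(((Fintype.equivFin (Sym2 V)) e' : ℕ) + 1) + pJ F D e' * (Fintype.card (Sym2 V) + 1), by omega⟩, ?_, ?_⟩
      · show Sum.inl u ∈ auxBag F D S ((((Fintype.equivFin (Sym2 V)) e' : ℕ) + 1) + pJ F D e' * (Fintype.card (Sym2 V) + 1))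
        unfold auxBag
        rw [if_pos htlt, hdiv _ _ hrM, hmod _ _ hrM]
        exact Finset.mem_union_left _ (mem_auxBase_inl.2 ⟨hj, hjmem u hue⟩)
      · show Sum.inr e' ∈ auxBag F D S ((((Fintype.equivFin (Sym2 V)) e' : ℕ) + 1) + pJ F D e' * (Fintype.card (Sym2 V) + 1))
        unfold auxBag
        rw [if_pos htlt, hdiv _ _ hrM, hmod _ _ hrM]
        exact Finset.mem_union_right _ (mem_auxExtra_inr.2 ⟨rfl, heS, rfl⟩)
    · obtain ⟨heS, hue⟩ := (huv : e ∈ S ∧ v ∈ e)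
      obtain ⟨hj, hjmem⟩ := pJ_spec (hexE e heS)
      have hrM : (((Fintype.equivFin (Sym2 V)) e : ℕ) + 1) < (Fintype.card (Sym2 V) + 1) := by
        have := ((Fintype.equivFin (Sym2 V)) e).isLt
        omega
      have htlt : (((Fintype.equivFin (Sym2 V)) e : ℕ) + 1) + pJ F D e * (Fintype.card (Sym2 V) + 1) < D.len * (Fintype.card (Sym2 V) + 1) := hlt _ _ hrM hj
      refine ⟨⟨(((Fintype.equivFin (Sym2 V)) e : ℕ) + 1) + pJ F D e * (Fintype.card (Sym2 V) + 1), by omega⟩, ?_, ?_⟩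
      · show Sum.inr e ∈ auxBag F D S ((((Fintype.equivFin (Sym2 V)) e : ℕ) + 1) + pJ F D e * (Fintype.card (Sym2 V) + 1))
        unfold auxBag
        rw [if_pos htlt, hdiv _ _ hrM, hmod _ _ hrM]
        exact Finset.mem_union_right _ (mem_auxExtra_inr.2 ⟨rfl, heS, rfl⟩)
      · show Sum.inl v ∈ auxBag F D S ((((Fintype.equivFin (Sym2 V)) e : ℕ) + 1) + pJ F D e * (Fintype.card (Sym2 V) + 1))
        unfold auxBag
        rw [if_pos htlt, hdiv _ _ hrM, hmod _ _ hrM]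
        exact Finset.mem_union_left _ (mem_auxBase_inl.2 ⟨hj, hjmem v hue⟩)
    · exact absurd huv (fun h => h)
  · -- interval
    have bag_inl : ∀ (v : V) (t : ℕ), Sum.inl v ∈ auxBag F D S t ↔
        t < D.len * (Fintype.card (Sym2 V) + 1) ∧ ∃ hj : t / (Fintype.card (Sym2 V) + 1) < D.len, v ∈ D.bag ⟨t / (Fintype.card (Sym2 V) + 1), hj⟩ := by
      intro v t
      unfold auxBag
      split_ifs with h1
      · simp only [Finset.mem_union]
        constructor
        · rintro (h | h)
          · exact ⟨h1, mem_auxBase_inl.1 h⟩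
          · exact absurd h not_mem_auxExtra_inl
        · rintro ⟨_, hj, hmem⟩
          exact Or.inl (mem_auxBase_inl.2 ⟨hj, hmem⟩)
      · constructor
        · intro h
          exact absurd h not_mem_auxEnd_inl
        · rintro ⟨h, _⟩
          exact absurd h h1
    rintro (v | e) i j k hij hjk hi hk
    · obtain ⟨hi1, hij1, himem⟩ := (bag_inl v i.val).1 hi
      obtain ⟨hk1, hkj1, hkmem⟩ := (bag_inl v k.val).1 hk
      have hij' : (i : ℕ) ≤ (j : ℕ) := hij
      have hjk' : (j : ℕ) ≤ (k : ℕ) := hjk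
      have hj1 : j.val < D.len * (Fintype.card (Sym2 V) + 1) := lt_of_le_of_lt hjk' hk1
      have hdm1 : i.val / (Fintype.card (Sym2 V) + 1) ≤ j.val / (Fintype.card (Sym2 V) + 1) := Nat.div_le_div_right hij'
      have hdm2 : j.val / (Fintype.card (Sym2 V) + 1) ≤ k.val / (Fintype.card (Sym2 V) + 1) := Nat.div_le_div_right hjk'
      have hjj1 : j.val / (Fintype.card (Sym2 V) + 1) < D.len := by omega
      show Sum.inl v ∈ auxBag F D S j.val
      refine (bag_inl v j.val).2 ⟨hj1, hjj1, ?_⟩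
      exact D.interval v ⟨i.val / (Fintype.card (Sym2 V) + 1), hij1⟩ ⟨j.val / (Fintype.card (Sym2 V) + 1), hjj1⟩ ⟨k.val / (Fintype.card (Sym2 V) + 1), hkj1⟩
        hdm1 hdm2 himem hkmem
    · have hik : i.val = k.val := by
        rw [tOf_unique e i.val hi, tOf_unique e k.val hk]
      have hij' : (i : ℕ) ≤ (j : ℕ) := hij
      have hjk' : (j : ℕ) ≤ (k : ℕ) := hjk
      have hji : j = i := Fin.ext (by omega)
      rw [hji]
      exact hi
  · -- card bound
    intro t
    show (auxBag F D S t.val).card ≤ K + 1 + 1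
    unfold auxBag
    split_ifs with h1
    · refine le_trans (Finset.card_union_le _ _) ?_
      have h2 := card_auxBase (D := D) (j := t.val / (Fintype.card (Sym2 V) + 1)) hD
      have h3 := card_auxExtra (F := F) (D := D) (S := S) (j := t.val / (Fintype.card (Sym2 V) + 1)) (r := t.val % (Fintype.card (Sym2 V) + 1))
      omega
    · exact le_trans card_auxEnd (by omega)

lemma pathwidth_comap_inl {V W : Type} [Fintype V] [Fintype W]
    (h : SimpleGraph (V ⊕ W)) :
    pathwidth (h.comap Sum.inl) ≤ pathwidth h := by
  classical
  obtain ⟨D, hD⟩ := exists_decomp h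
  refine pathwidth_le _ _ ⟨⟨D.len,
    fun i => (D.bag i).preimage Sum.inl (Sum.inl_injective.injOn), ?_, ?_, ?_⟩, ?_⟩
  · intro v
    obtain ⟨i, hi⟩ := D.cover_vertex (Sum.inl v)
    exact ⟨i, Finset.mem_preimage.2 hi⟩
  · intro u v huv
    obtain ⟨i, hi1, hi2⟩ := D.cover_edge huv
    exact ⟨i, Finset.mem_preimage.2 hi1, Finset.mem_preimage.2 hi2⟩
  · intro v i j k hij hjk hi hk
    exact Finset.mem_preimage.2
      (D.interval _ i j k hij hjk (Finset.mem_preimage.1 hi) (Finset.mem_preimage.1 hk))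
  · intro i
    refine le_trans ?_ (hD i)
    refine Finset.card_le_card_of_injOn Sum.inl ?_ Sum.inl_injective.injOn
    intro a ha
    have ha' : a ∈ (D.bag i).preimage Sum.inl Sum.inl_injective.injOn := ha
    exact Finset.mem_preimage.1 ha'

lemma dPathwidth_set_nonempty {V : Type} [Fintype V] (d : ℕ) (hd : 1 ≤ d)
    (G : SimpleGraph V) :
    {k | ∃ f : Fin d → SimpleGraph V,
      (∀ i, f i ≤ G) ∧ (⨆ i, f i) = G ∧ ∀ i, pathwidth (f i) ≤ k}.Nonempty := by
  haveI : Nonempty (Fin d) := ⟨⟨0, hd⟩⟩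
  obtain ⟨k, hk⟩ := pathwidth_set_nonempty G
  exact ⟨k, fun _ => G, fun _ => le_rfl, iSup_const, fun _ => Nat.sInf_le hk⟩

lemma exists_dDecomp {V : Type} [Fintype V] (d : ℕ) (hd : 1 ≤ d) (G : SimpleGraph V) :
    ∃ f : Fin d → SimpleGraph V,
      (∀ i, f i ≤ G) ∧ (⨆ i, f i) = G ∧ ∀ i, pathwidth (f i) ≤ dPathwidth d G :=
  Nat.sInf_mem (dPathwidth_set_nonempty d hd G)

/-- `d-pw(G) ≤ d-pw(H) ≤ d-pw(G) + 1`, where `H` is the primal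
graph of `ψ(G)`. -/
theorem dPathwidth_psiPrimal_bounds {V : Type} [Fintype V] [DecidableEq V]
    (G : SimpleGraph V) (hno : ∀ v : V, ∃ u, G.Adj v u) (d : ℕ) (hd : 1 ≤ d) :
    dPathwidth d G ≤ dPathwidth d (psiPrimal G) ∧
    dPathwidth d (psiPrimal G) ≤ dPathwidth d G + 1 := by
  classical
  constructor
  · obtain ⟨f, hle, hsup, hpw⟩ := exists_dDecomp d hd (psiPrimal G)
    refine Nat.sInf_le ⟨fun i => (f i).comap Sum.inl, fun i u v huv => ?_, ?_, fun i =>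
      le_trans (pathwidth_comap_inl (f i)) (hpw i)⟩
    · exact hle i huv
    · ext u v
      simp only [SimpleGraph.iSup_adj, SimpleGraph.comap_adj]
      constructor
      · rintro ⟨i, hi⟩
        have : (psiPrimal G).Adj (Sum.inl u) (Sum.inl v) := hsup ▸ SimpleGraph.iSup_adj.2 ⟨i, hi⟩
        exact this
      · intro huv
        have : (⨆ i, f i).Adj (Sum.inl u) (Sum.inl v) := by rw [hsup]; exact huv
        exact SimpleGraph.iSup_adj.1 this
  · obtain ⟨f, hle, hsup, hpw⟩ := exists_dDecomp d hd G
    have hexi : ∀ e : Sym2 V, ∃ i : Fin d, e ∈ G.edgeSet → e ∈ (f i).edgeSet := by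
      intro e
      by_cases he : e ∈ G.edgeSet
      · have : ∃ i, e ∈ (f i).edgeSet := by
          induction e using Sym2.ind with
          | _ a b =>
            rw [SimpleGraph.mem_edgeSet] at he
            have h2 : (⨆ i, f i).Adj a b := by rw [hsup]; exact he
            obtain ⟨i, hi⟩ := SimpleGraph.iSup_adj.1 h2
            exact ⟨i, (f i).mem_edgeSet.2 hi⟩
        obtain ⟨i, hi⟩ := this
        exact ⟨i, fun _ => hi⟩
      · exact ⟨⟨0, hd⟩, fun h => absurd h he⟩
    choose assign hassign using hexi
    refine Nat.sInf_le
      ⟨fun i => attach (f i) {e | e ∈ G.edgeSet ∧ assign e = i}, ?_, ?_, ?_⟩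
    · rintro i (u | e) (v | e') h
      · exact hle i h
      · obtain ⟨⟨he, -⟩, hu⟩ := h
        exact ⟨he, hu⟩
      · obtain ⟨⟨he, -⟩, hu⟩ := h
        exact ⟨he, hu⟩
      · exact h.elim
    · ext x y
      rw [SimpleGraph.iSup_adj]
      rcases x with u | e <;> rcases y with v | e'
      · constructor
        · rintro ⟨i, hi⟩
          exact hle i hi
        · intro h
          have h' : G.Adj u v := h
          have h2 : (⨆ i, f i).Adj u v := by rw [hsup]; exact h'
          obtain ⟨i, hi⟩ := SimpleGraph.iSup_adj.1 h2
          exact ⟨i, hi⟩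
      · constructor
        · rintro ⟨i, ⟨he, -⟩, hu⟩
          exact ⟨he, hu⟩
        · rintro ⟨he, hu⟩
          exact ⟨assign e', ⟨he, rfl⟩, hu⟩
      · constructor
        · rintro ⟨i, ⟨he, -⟩, hu⟩
          exact ⟨he, hu⟩
        · rintro ⟨he, hu⟩
          exact ⟨assign e, ⟨he, rfl⟩, hu⟩
      · constructor
        · rintro ⟨i, hi⟩
          exact hi
        · exact fun h => h.elim
    · intro i
      refine pathwidth_attach_le (f i) _ ?_ _ (hpw i)
      intro e he
      obtain ⟨h1, h2⟩ := he
      rw [← h2]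
      exact hassign e h1
end

section
/- For every n ≥ 2 there is an n-SMNBP with at most n(2n − 1) edges that represents ψ(K_n), where K_n is the complete graph on n vertices; it can be obtained as the chained conjunction of n monotone read-once NBPs, one representing ψ(K_{1,n−1}) for each star of K_n centred at one of its vertices. -/
/-- The variables of the CNF `ψ(G)`: vertex variables and edge variables. -/
abbrev PsiVar (V : Type) := V ⊕ Sym2 V

/-- A total assignment to the variables of `ψ(G)`. -/
abbrev Assignment (V : Type) := PsiVar V → Bool

/-- `σ` satisfies the CNF `ψ(G)` whose clauses are `(u ∨ e ∨ v)`
for the edges `e = {u,v}` of `G`. -/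
def psiSat {V : Type} (G : SimpleGraph V) (σ : Assignment V) : Prop :=
  ∀ ⦃u v : V⦄, G.Adj u v →
    σ (Sum.inl u) = true ∨ σ (Sum.inr s(u, v)) = true ∨ σ (Sum.inl v) = true

/-- A (nondeterministic) branching program: a directed multigraph on `Fin n`
with edge set `Fin m`, a source, a sink, and an optional literal labelling
each edge. -/
structure BP (X : Type) where
  n : ℕ
  m : ℕ
  esrc : Fin m → Fin n
  edst : Fin m → Fin n
  source : Fin n
  sink : Fin n
  label : Fin m → Option (X × Bool)

namespace BP

variable {X : Type}

/-- `Z.IsPathFrom u v p`: the edge list `p` forms a directed path from `u` to `v`. -/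
def IsPathFrom (Z : BP X) : Fin Z.n → Fin Z.n → List (Fin Z.m) → Prop
  | u, v, [] => u = v
  | u, v, e :: p => Z.esrc e = u ∧ Z.IsPathFrom (Z.edst e) v p

/-- `v` is reachable from `u`. -/
def Reach (Z : BP X) (u v : Fin Z.n) : Prop := ∃ p, Z.IsPathFrom u v p

/-- `Z` is acyclic. -/
def Acyclic (Z : BP X) : Prop :=
  ∀ (u : Fin Z.n) (p : List (Fin Z.m)), Z.IsPathFrom u u p → p = []

/-- `Z` is a DAG with one source and one sink: no edge enters the source, no edge
leaves the sink, and every vertex lies on a source-sink path. -/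
def IsNBP (Z : BP X) : Prop :=
  Z.Acyclic ∧ (∀ e, Z.edst e ≠ Z.source) ∧ (∀ e, Z.esrc e ≠ Z.sink) ∧
    ∀ v : Fin Z.n, Z.Reach Z.source v ∧ Z.Reach v Z.sink

/-- The number of edges of the path `p` labelled with a literal of variable `x`. -/
def varCount [DecidableEq X] (Z : BP X) (p : List (Fin Z.m)) (x : X) : ℕ :=
  p.countP fun e => (Z.label e).elim false fun l => decide (l.1 = x)

/-- A path is read-once if no variable labels two of its edges. -/
def ReadOnce [DecidableEq X] (Z : BP X) (p : List (Fin Z.m)) : Prop :=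
  ∀ x : X, Z.varCount p x ≤ 1

/-- `Z` is a syntactic read-`d`-times BP. -/
def ReadTimes [DecidableEq X] (Z : BP X) (d : ℕ) : Prop :=
  ∀ (u v : Fin Z.n) (p : List (Fin Z.m)), Z.IsPathFrom u v p → ∀ x : X, Z.varCount p x ≤ d

/-- `Z` is monotone: no negative literal labels an edge. -/
def MonotoneBP (Z : BP X) : Prop :=
  ∀ (e : Fin Z.m) (l : X × Bool), Z.label e = some l → l.2 = true

/-- `Z` is separable with parameter `d`: every source-sink path is the
concatenation of at most `d` read-once subpaths. -/
def Separable [DecidableEq X] (Z : BP X) (d : ℕ) : Prop :=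
  ∀ p, Z.IsPathFrom Z.source Z.sink p →
    ∃ ps : List (List (Fin Z.m)), ps.length ≤ d ∧ ps.flatten = p ∧ ∀ q ∈ ps, Z.ReadOnce q

/-- `Z` is a monotone separable syntactic read-`d`-times NBP. -/
def IsSMNBP [DecidableEq X] (Z : BP X) (d : ℕ) : Prop :=
  Z.IsNBP ∧ Z.MonotoneBP ∧ Z.ReadTimes d ∧ Z.Separable d

/-- The path `p` agrees with the total assignment `σ` (so `p` is consistent
and its set of literals is contained in `σ`). -/
def PathAgrees (Z : BP X) (p : List (Fin Z.m)) (σ : X → Bool) : Prop :=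
  ∀ e ∈ p, ∀ l : X × Bool, Z.label e = some l → σ l.1 = l.2

/-- `σ` is a satisfying assignment of `Z`: some consistent source-sink path
carries it. -/
def Sat (Z : BP X) (σ : X → Bool) : Prop :=
  ∃ p, Z.IsPathFrom Z.source Z.sink p ∧ Z.PathAgrees p σ

end BP


namespace SMNBPK

variable {n : ℕ}

lemma mul_add_lt {a b c d : ℕ} (h1 : a < c) (h2 : b < d) : a * d + b < c * d := by
  have h3 : a * d + b < (a + 1) * d := by
    rw [add_one_mul]; exact Nat.add_lt_add_left h2 _
  exact h3.trans_le (Nat.mul_le_mul_right d h1)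

lemma interval_uniq {a a' c d : ℕ} (h1 : a * d ≤ c) (h2 : c < a * d + d)
    (h1' : a' * d ≤ c) (h2' : c < a' * d + d) : a = a' := by
  rcases lt_trichotomy a a' with h | h | h
  · exfalso
    have : a * d + d ≤ a' * d := by
      have := Nat.mul_le_mul_right d h
      rw [Nat.succ_mul] at this; exact this
    omega
  · exact h
  · exfalso
    have : a' * d + d ≤ a * d := by
      have := Nat.mul_le_mul_right d h
      rw [Nat.succ_mul] at this; exact this
    omega

lemma mul_add_inj {a a' b b' d : ℕ} (hb : b < d) (hb' : b' < d)
    (h : a * d + b = a' * d + b') : a = a' ∧ b = b' := by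
  have ha : a = a' := interval_uniq (a := a) (a' := a') (c := a * d + b) (d := d)
    (Nat.le_add_right _ _) (by omega) (by rw [h]; exact Nat.le_add_right _ _) (by omega)
  subst ha; omega

/-- the `t`-th vertex other than `i`. -/
def skipF (i : Fin n) (t : Fin (n - 1)) : Fin n :=
  if (t : ℕ) < (i : ℕ) then ⟨t, by have := t.isLt; omega⟩
  else ⟨(t : ℕ) + 1, by have := t.isLt; omega⟩

lemma skipF_ne (i : Fin n) (t : Fin (n - 1)) : skipF i t ≠ i := by
  unfold skipF; split <;> (intro h; apply_fun (Fin.val) at h; simp at h <;> omega)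

lemma skipF_inj {i : Fin n} {t t' : Fin (n - 1)} (h : skipF i t = skipF i t') : t = t' := by
  unfold skipF at h
  apply Fin.ext
  split at h <;> split at h <;> (apply_fun Fin.val at h; simp at h <;> omega)

lemma skipF_surj (i j : Fin n) (h : j ≠ i) : ∃ t, skipF i t = j := by
  have hj := j.isLt
  have hne : (j : ℕ) ≠ (i : ℕ) := fun hc => h (Fin.ext hc)
  rcases lt_or_gt_of_ne hne with hlt | hgt
  · have hi := i.isLt
    refine ⟨⟨j, by omega⟩, ?_⟩
    unfold skipF; rw [if_pos (by simpa using hlt)]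
  · refine ⟨⟨(j : ℕ) - 1, by omega⟩, ?_⟩
    unfold skipF; rw [if_neg (by simp; omega)]
    apply Fin.ext; simp; omega

lemma n_pos (e : Fin (n * (2 * n - 1))) : 0 < n := by
  rcases Nat.eq_zero_or_pos n with h | h
  · exact absurd e.isLt (by simp [h])
  · exact h

lemma D_pos (e : Fin (n * (2 * n - 1))) : 0 < 2 * n - 1 := by
  have := n_pos e; omega

lemma div_lt (e : Fin (n * (2 * n - 1))) : (e : ℕ) / (2 * n - 1) < n := by
  rw [Nat.div_lt_iff_lt_mul (D_pos e)]
  exact e.isLt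

lemma t_lt (e : Fin (n * (2 * n - 1))) (h : (e : ℕ) % (2 * n - 1) ≠ 0) :
    ((e : ℕ) % (2 * n - 1) - 1) / 2 < n - 1 := by
  have h1 : (e : ℕ) % (2 * n - 1) < 2 * n - 1 := Nat.mod_lt _ (D_pos e)
  omega

lemma t_lt' (e : Fin (n * (2 * n - 1))) :
    ((e : ℕ) % (2 * n - 1) - 1) / 2 ≤ n - 1 := by
  have h1 : (e : ℕ) % (2 * n - 1) < 2 * n - 1 := Nat.mod_lt _ (D_pos e)
  omega

def bypass (i : Fin n) : Fin (n * (2 * n - 1)) :=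
  ⟨(i : ℕ) * (2 * n - 1), by
    simpa using mul_add_lt i.isLt (show 0 < 2 * n - 1 by have := i.isLt; omega)⟩

def vedge (i : Fin n) (t : Fin (n - 1)) : Fin (n * (2 * n - 1)) :=
  ⟨(i : ℕ) * (2 * n - 1) + (2 * (t : ℕ) + 1),
    mul_add_lt i.isLt (by have := t.isLt; omega)⟩

def eedge (i : Fin n) (t : Fin (n - 1)) : Fin (n * (2 * n - 1)) :=
  ⟨(i : ℕ) * (2 * n - 1) + (2 * (t : ℕ) + 2),
    mul_add_lt i.isLt (by have := t.isLt; omega)⟩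

/-- The branching program. -/
def Z (n : ℕ) : BP (PsiVar (Fin n)) where
  n := n * (n - 1) + 1
  m := n * (2 * n - 1)
  esrc e := ⟨((e : ℕ) / (2 * n - 1)) * (n - 1) + ((e : ℕ) % (2 * n - 1) - 1) / 2, by
    have h1 := div_lt e
    have h2 := t_lt' e
    have h3 := mul_add_lt h1 (show 0 < 1 by omega)
    have h4 : ((e : ℕ) / (2 * n - 1)) * (n - 1) + (n - 1) ≤ n * (n - 1) := by
      have := Nat.mul_le_mul_right (n - 1) (show (e : ℕ) / (2 * n - 1) + 1 ≤ n from h1)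
      rw [add_one_mul] at this; exact this
    omega⟩
  edst e :=
    if h0 : (e : ℕ) % (2 * n - 1) = 0 then
      ⟨((e : ℕ) / (2 * n - 1)) * (n - 1) + (n - 1), by
        have h1 := div_lt e
        have h4 : ((e : ℕ) / (2 * n - 1)) * (n - 1) + (n - 1) ≤ n * (n - 1) := by
          have := Nat.mul_le_mul_right (n - 1) (show (e : ℕ) / (2 * n - 1) + 1 ≤ n from h1)
          rw [add_one_mul] at this; exact this
        omega⟩
    else
      ⟨((e : ℕ) / (2 * n - 1)) * (n - 1) + (((e : ℕ) % (2 * n - 1) - 1) / 2 + 1), by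
        have h1 := div_lt e
        have h2 := t_lt e h0
        have h4 : ((e : ℕ) / (2 * n - 1)) * (n - 1) + (n - 1) ≤ n * (n - 1) := by
          have := Nat.mul_le_mul_right (n - 1) (show (e : ℕ) / (2 * n - 1) + 1 ≤ n from h1)
          rw [add_one_mul] at this; exact this
        omega⟩
  source := ⟨0, Nat.succ_pos _⟩
  sink := ⟨n * (n - 1), Nat.lt_succ_self _⟩
  label e :=
    if h0 : (e : ℕ) % (2 * n - 1) = 0 then
      some (Sum.inl ⟨(e : ℕ) / (2 * n - 1), div_lt e⟩, true)
    else
      let i : Fin n := ⟨(e : ℕ) / (2 * n - 1), div_lt e⟩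
      let t : Fin (n - 1) := ⟨((e : ℕ) % (2 * n - 1) - 1) / 2, t_lt e h0⟩
      if ((e : ℕ) % (2 * n - 1) - 1) % 2 = 0 then
        some (Sum.inl (skipF i t), true)
      else
        some (Sum.inr s(i, skipF i t), true)


lemma D_pos' (i : Fin n) : 0 < 2 * n - 1 := by have := i.isLt; omega

lemma divD (i : Fin n) {r : ℕ} (hr : r < 2 * n - 1) :
    ((i : ℕ) * (2 * n - 1) + r) / (2 * n - 1) = i := by
  rw [add_comm, Nat.add_mul_div_right _ _ (D_pos' i), Nat.div_eq_of_lt hr, Nat.zero_add]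

lemma modD (i : Fin n) {r : ℕ} (hr : r < 2 * n - 1) :
    ((i : ℕ) * (2 * n - 1) + r) % (2 * n - 1) = r := by
  rw [add_comm, Nat.add_mul_mod_self_right, Nat.mod_eq_of_lt hr]

lemma esrc_bypass (i : Fin n) : ((Z n).esrc (bypass i) : ℕ) = (i : ℕ) * (n - 1) := by
  show ((bypass i : ℕ) / (2 * n - 1)) * (n - 1) + ((bypass i : ℕ) % (2 * n - 1) - 1) / 2
    = (i : ℕ) * (n - 1)
  have h0 : (bypass i : ℕ) = (i : ℕ) * (2 * n - 1) + 0 := by simp [bypass]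
  rw [h0, divD i (D_pos' i), modD i (D_pos' i)]
  simp

lemma edst_bypass (i : Fin n) :
    ((Z n).edst (bypass i) : ℕ) = (i : ℕ) * (n - 1) + (n - 1) := by
  have h0 : (bypass i : ℕ) = (i : ℕ) * (2 * n - 1) + 0 := by simp [bypass]
  show (((Z n).edst (bypass i)) : ℕ) = _
  unfold Z
  simp only [h0, divD i (D_pos' i), modD i (D_pos' i)]
  rfl

lemma label_bypass (i : Fin n) : (Z n).label (bypass i) = some (Sum.inl i, true) := by
  have h0 : (bypass i : ℕ) = (i : ℕ) * (2 * n - 1) + 0 := by simp [bypass]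
  unfold Z
  simp only [h0, divD i (D_pos' i), modD i (D_pos' i)]
  simp

lemma hv (t : Fin (n - 1)) : 2 * (t : ℕ) + 1 < 2 * n - 1 := by have := t.isLt; omega
lemma he' (t : Fin (n - 1)) : 2 * (t : ℕ) + 2 < 2 * n - 1 := by have := t.isLt; omega

lemma esrc_vedge (i : Fin n) (t : Fin (n - 1)) :
    ((Z n).esrc (vedge i t) : ℕ) = (i : ℕ) * (n - 1) + (t : ℕ) := by
  have h0 : (vedge i t : ℕ) = (i : ℕ) * (2 * n - 1) + (2 * (t : ℕ) + 1) := rfl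
  show ((vedge i t : ℕ) / (2 * n - 1)) * (n - 1) + ((vedge i t : ℕ) % (2 * n - 1) - 1) / 2 = _
  rw [h0, divD i (hv t), modD i (hv t)]
  congr 1
  omega

lemma edst_vedge (i : Fin n) (t : Fin (n - 1)) :
    ((Z n).edst (vedge i t) : ℕ) = (i : ℕ) * (n - 1) + (t : ℕ) + 1 := by
  have h0 : (vedge i t : ℕ) = (i : ℕ) * (2 * n - 1) + (2 * (t : ℕ) + 1) := rfl
  unfold Z
  simp only [h0, divD i (hv t), modD i (hv t)]
  rw [dif_neg (by omega)]
  simp only []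
  have : (2 * (t : ℕ) + 1 - 1) / 2 = (t : ℕ) := by omega
  rw [this]
  ring

lemma label_vedge (i : Fin n) (t : Fin (n - 1)) :
    (Z n).label (vedge i t) = some (Sum.inl (skipF i t), true) := by
  have h0 : (vedge i t : ℕ) = (i : ℕ) * (2 * n - 1) + (2 * (t : ℕ) + 1) := rfl
  unfold Z
  simp only [h0, divD i (hv t), modD i (hv t)]
  rw [dif_neg (by omega), if_pos (by omega)]
  have h1 : (2 * (t : ℕ) + 1 - 1) / 2 = (t : ℕ) := by omega
  simp only [h1, Fin.eta]

lemma esrc_eedge (i : Fin n) (t : Fin (n - 1)) :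
    ((Z n).esrc (eedge i t) : ℕ) = (i : ℕ) * (n - 1) + (t : ℕ) := by
  have h0 : (eedge i t : ℕ) = (i : ℕ) * (2 * n - 1) + (2 * (t : ℕ) + 2) := rfl
  show ((eedge i t : ℕ) / (2 * n - 1)) * (n - 1) + ((eedge i t : ℕ) % (2 * n - 1) - 1) / 2 = _
  rw [h0, divD i (he' t), modD i (he' t)]
  congr 1
  omega

lemma edst_eedge (i : Fin n) (t : Fin (n - 1)) :
    ((Z n).edst (eedge i t) : ℕ) = (i : ℕ) * (n - 1) + (t : ℕ) + 1 := by
  have h0 : (eedge i t : ℕ) = (i : ℕ) * (2 * n - 1) + (2 * (t : ℕ) + 2) := rfl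
  unfold Z
  simp only [h0, divD i (he' t), modD i (he' t)]
  rw [dif_neg (by omega)]
  simp only []
  have : (2 * (t : ℕ) + 2 - 1) / 2 = (t : ℕ) := by omega
  rw [this]
  ring

lemma label_eedge (i : Fin n) (t : Fin (n - 1)) :
    (Z n).label (eedge i t) = some (Sum.inr s(i, skipF i t), true) := by
  have h0 : (eedge i t : ℕ) = (i : ℕ) * (2 * n - 1) + (2 * (t : ℕ) + 2) := rfl
  unfold Z
  simp only [h0, divD i (he' t), modD i (he' t)]
  rw [dif_neg (by omega), if_neg (by omega)]
  have h1 : (2 * (t : ℕ) + 2 - 1) / 2 = (t : ℕ) := by omega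
  simp only [h1, Fin.eta]

/-- gadget index of an edge. -/
def gad (e : Fin (n * (2 * n - 1))) : ℕ := (e : ℕ) / (2 * n - 1)

lemma gad_bypass (i : Fin n) : gad (bypass i) = i := by
  have h0 : (bypass i : ℕ) = (i : ℕ) * (2 * n - 1) + 0 := by simp [bypass]
  unfold gad; rw [h0, divD i (D_pos' i)]

lemma gad_vedge (i : Fin n) (t : Fin (n - 1)) : gad (vedge i t) = i := by
  unfold gad; exact divD i (hv t)

lemma gad_eedge (i : Fin n) (t : Fin (n - 1)) : gad (eedge i t) = i := by
  unfold gad; exact divD i (he' t)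

lemma decode (e : Fin (n * (2 * n - 1))) :
    (∃ i, e = bypass i) ∨ (∃ i t, e = vedge i t) ∨ (∃ i t, e = eedge i t) := by
  set r := (e : ℕ) % (2 * n - 1) with hr
  have hrlt : r < 2 * n - 1 := Nat.mod_lt _ (D_pos e)
  have he : (e : ℕ) = ((e : ℕ) / (2 * n - 1)) * (2 * n - 1) + r :=
    (Nat.div_add_mod' _ _).symm
  set i : Fin n := ⟨(e : ℕ) / (2 * n - 1), div_lt e⟩ with hi
  by_cases h0 : r = 0
  · exact Or.inl ⟨i, Fin.ext (by rw [he, h0]; rfl)⟩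
  · have ht : (r - 1) / 2 < n - 1 := t_lt e h0
    set t : Fin (n - 1) := ⟨(r - 1) / 2, ht⟩ with htt
    by_cases hp : (r - 1) % 2 = 0
    · refine Or.inr (Or.inl ⟨i, t, Fin.ext ?_⟩)
      show (e : ℕ) = (i : ℕ) * (2 * n - 1) + (2 * (t : ℕ) + 1)
      rw [he]; congr 1; simp [htt]; omega
    · refine Or.inr (Or.inr ⟨i, t, Fin.ext ?_⟩)
      show (e : ℕ) = (i : ℕ) * (2 * n - 1) + (2 * (t : ℕ) + 2)
      rw [he]; congr 1; simp [htt]; omega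

lemma isPathFrom_append {X : Type} (M : BP X) {p q : List (Fin M.m)} {u v w : Fin M.n}
    (hp : M.IsPathFrom u v p) (hq : M.IsPathFrom v w q) : M.IsPathFrom u w (p ++ q) := by
  induction p generalizing u with
  | nil =>
    have huv : u = v := hp
    rw [List.nil_append, huv]; exact hq
  | cons e p ih =>
    obtain ⟨h1, h2⟩ : M.esrc e = u ∧ M.IsPathFrom (M.edst e) v p := hp
    exact ⟨h1, ih h2⟩

lemma step (hn : 2 ≤ n) (e : Fin (n * (2 * n - 1))) :
    gad e * (n - 1) ≤ ((Z n).esrc e : ℕ) ∧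
    ((Z n).esrc e : ℕ) < ((Z n).edst e : ℕ) ∧
    ((Z n).edst e : ℕ) ≤ gad e * (n - 1) + (n - 1) ∧
    ((Z n).esrc e : ℕ) < gad e * (n - 1) + (n - 1) := by
  rcases decode e with ⟨i, rfl⟩ | ⟨i, t, rfl⟩ | ⟨i, t, rfl⟩
  · rw [gad_bypass, esrc_bypass, edst_bypass]; omega
  · rw [gad_vedge, esrc_vedge, edst_vedge]; have := t.isLt; omega
  · rw [gad_eedge, esrc_eedge, edst_eedge]; have := t.isLt; omega

lemma path_bounds (hn : 2 ≤ n) {u v : Fin ((Z n).n)} {p : List (Fin ((Z n).m))}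
    (h : (Z n).IsPathFrom u v p) :
    (u : ℕ) ≤ (v : ℕ) ∧ ∀ e ∈ p, (u : ℕ) ≤ ((Z n).esrc e : ℕ) ∧ ((Z n).edst e : ℕ) ≤ (v : ℕ) := by
  induction p generalizing u with
  | nil =>
    have huv : u = v := h
    subst huv; exact ⟨le_refl _, by simp⟩
  | cons e p ih =>
    obtain ⟨h1, h2⟩ : (Z n).esrc e = u ∧ (Z n).IsPathFrom ((Z n).edst e) v p := h
    obtain ⟨ihv, ihm⟩ := ih h2
    have hse := (step hn e).2.1
    constructor
    · rw [← h1]; omega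
    · intro f hf
      rcases List.mem_cons.mp hf with rfl | hf
      · rw [← h1]; exact ⟨le_refl _, ihv⟩
      · have := ihm f hf
        rw [← h1]; omega

lemma acyclic (hn : 2 ≤ n) : (Z n).Acyclic := by
  intro u p h
  cases p with
  | nil => rfl
  | cons e p =>
    exfalso
    obtain ⟨h1, h2⟩ : (Z n).esrc e = u ∧ (Z n).IsPathFrom ((Z n).edst e) u p := h
    have hb := (path_bounds hn h2).1
    have hse := (step hn e).2.1
    rw [h1] at hse; omega

lemma path_pairwise (hn : 2 ≤ n) {u v : Fin ((Z n).n)} {p : List (Fin ((Z n).m))}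
    (h : (Z n).IsPathFrom u v p) :
    p.Pairwise (fun e f => ((Z n).edst e : ℕ) ≤ ((Z n).esrc f : ℕ)) := by
  induction p generalizing u with
  | nil => exact List.Pairwise.nil
  | cons e p ih =>
    obtain ⟨h1, h2⟩ : (Z n).esrc e = u ∧ (Z n).IsPathFrom ((Z n).edst e) v p := h
    exact List.Pairwise.cons (fun f hf => ((path_bounds hn h2).2 f hf).1) (ih h2)

lemma path_nodup (hn : 2 ≤ n) {u v : Fin ((Z n).n)} {p : List (Fin ((Z n).m))}
    (h : (Z n).IsPathFrom u v p) : p.Nodup := by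
  refine (path_pairwise hn h).imp ?_
  intro e f hef heq
  subst heq
  have := (step hn e).2.1
  omega

lemma crossing {u v : Fin ((Z n).n)} {p : List (Fin ((Z n).m))}
    (h : (Z n).IsPathFrom u v p) (c : ℕ) (hc1 : (u : ℕ) ≤ c) (hc2 : c < (v : ℕ)) :
    ∃ e ∈ p, ((Z n).esrc e : ℕ) ≤ c ∧ c < ((Z n).edst e : ℕ) := by
  induction p generalizing u with
  | nil =>
    have huv : u = v := h
    subst huv; omega
  | cons e p ih =>
    obtain ⟨h1, h2⟩ : (Z n).esrc e = u ∧ (Z n).IsPathFrom ((Z n).edst e) v p := h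
    by_cases hce : c < ((Z n).edst e : ℕ)
    · exact ⟨e, List.mem_cons_self, by rw [h1]; exact hc1, hce⟩
    · obtain ⟨f, hf, hf1, hf2⟩ := ih h2 (by omega)
      exact ⟨f, List.mem_cons_of_mem _ hf, hf1, hf2⟩

lemma gad_lt (e : Fin (n * (2 * n - 1))) : gad e < n := div_lt e

lemma gad_mono (hn : 2 ≤ n) {e f : Fin (n * (2 * n - 1))}
    (h : ((Z n).edst e : ℕ) ≤ ((Z n).esrc f : ℕ)) : gad e ≤ gad f := by
  have h1 := step hn e
  have h2 := step hn f
  have h3 : gad e * (n - 1) < gad f * (n - 1) + (n - 1) := by omega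
  have h4 : gad e * (n - 1) < (gad f + 1) * (n - 1) := by rw [add_one_mul]; exact h3
  have := Nat.lt_of_mul_lt_mul_right h4
  omega

lemma cut_class (hn : 2 ≤ n) (u : Fin n) (t : Fin (n - 1)) (e : Fin (n * (2 * n - 1)))
    (h1 : ((Z n).esrc e : ℕ) ≤ (u : ℕ) * (n - 1) + (t : ℕ))
    (h2 : (u : ℕ) * (n - 1) + (t : ℕ) < ((Z n).edst e : ℕ)) :
    e = bypass u ∨ e = vedge u t ∨ e = eedge u t := by
  have htl := t.isLt
  rcases decode e with ⟨i, rfl⟩ | ⟨i, s, rfl⟩ | ⟨i, s, rfl⟩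
  · left
    rw [esrc_bypass] at h1; rw [edst_bypass] at h2
    have hiu : (i : ℕ) = (u : ℕ) :=
      interval_uniq (d := n - 1) h1 (by omega) (Nat.le_add_right _ _) (by omega)
    rw [Fin.ext hiu]
  · right; left
    rw [esrc_vedge] at h1; rw [edst_vedge] at h2
    have hs := s.isLt
    have heq : (i : ℕ) * (n - 1) + (s : ℕ) = (u : ℕ) * (n - 1) + (t : ℕ) := by omega
    obtain ⟨hiu, hst⟩ := mul_add_inj hs htl heq
    rw [Fin.ext hiu, Fin.ext hst]
  · right; right
    rw [esrc_eedge] at h1; rw [edst_eedge] at h2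
    have hs := s.isLt
    have heq : (i : ℕ) * (n - 1) + (s : ℕ) = (u : ℕ) * (n - 1) + (t : ℕ) := by omega
    obtain ⟨hiu, hst⟩ := mul_add_inj hs htl heq
    rw [Fin.ext hiu, Fin.ext hst]

lemma label_some (e : Fin (n * (2 * n - 1))) : ∃ l, (Z n).label e = some l := by
  rcases decode e with ⟨i, rfl⟩ | ⟨i, t, rfl⟩ | ⟨i, t, rfl⟩
  · exact ⟨_, label_bypass i⟩
  · exact ⟨_, label_vedge i t⟩
  · exact ⟨_, label_eedge i t⟩

lemma same_gad_same_var (e f : Fin (n * (2 * n - 1))) (hg : gad e = gad f)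
    (a b : PsiVar (Fin n) × Bool)
    (ha : (Z n).label e = some a) (hb : (Z n).label f = some b) (hab : a.1 = b.1) :
    e = f := by
  rcases decode e with ⟨i, rfl⟩ | ⟨i, t, rfl⟩ | ⟨i, t, rfl⟩ <;>
    rcases decode f with ⟨j, rfl⟩ | ⟨j, s, rfl⟩ | ⟨j, s, rfl⟩
  · rw [gad_bypass, gad_bypass] at hg
    rw [Fin.ext hg]
  · rw [gad_bypass, gad_vedge] at hg
    rw [label_bypass] at ha; rw [label_vedge] at hb
    cases ha; cases hb
    simp only [Sum.inl.injEq] at hab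
    exact absurd (hab ▸ (Fin.ext hg : i = j) ▸ rfl : skipF j s = j).symm
      (Ne.symm (skipF_ne j s))
  · rw [label_bypass] at ha; rw [label_eedge] at hb
    cases ha; cases hb
    simp at hab
  · rw [gad_vedge, gad_bypass] at hg
    rw [label_vedge] at ha; rw [label_bypass] at hb
    cases ha; cases hb
    simp only [Sum.inl.injEq] at hab
    exact absurd ((Fin.ext hg : i = j) ▸ hab : skipF j t = j) (skipF_ne j t)
  · rw [gad_vedge, gad_vedge] at hg
    rw [label_vedge] at ha; rw [label_vedge] at hb
    cases ha; cases hb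
    simp only [Sum.inl.injEq] at hab
    cases (Fin.ext hg : i = j)
    rw [skipF_inj hab]
  · rw [label_vedge] at ha; rw [label_eedge] at hb
    cases ha; cases hb
    simp at hab
  · rw [label_eedge] at ha; rw [label_bypass] at hb
    cases ha; cases hb
    simp at hab
  · rw [label_eedge] at ha; rw [label_vedge] at hb
    cases ha; cases hb
    simp at hab
  · rw [gad_eedge, gad_eedge] at hg
    rw [label_eedge] at ha; rw [label_eedge] at hb
    cases ha; cases hb
    simp only [Sum.inr.injEq] at hab
    cases (Fin.ext hg : i = j)
    rw [Sym2.eq_iff] at hab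
    rcases hab with ⟨-, h2⟩ | ⟨h1, h2⟩
    · rw [skipF_inj h2]
    · exact absurd h2 (skipF_ne i t)

lemma nodup_len_le (N : ℕ) (l : List ℕ) (hnd : l.Nodup) (hb : ∀ a ∈ l, a < N) :
    l.length ≤ N := by
  classical
  have h1 := List.toFinset_card_of_nodup hnd
  have hsub : l.toFinset ⊆ Finset.range N := fun a ha =>
    Finset.mem_range.mpr (hb a (List.mem_toFinset.mp ha))
  have h2 := Finset.card_le_card hsub
  rw [Finset.card_range] at h2
  omega

lemma pred_true_iff (e : Fin (n * (2 * n - 1))) (x : PsiVar (Fin n)) {l : PsiVar (Fin n) × Bool}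
    (hl : (Z n).label e = some l) :
    (((Z n).label e).elim false fun l => decide (l.1 = x)) = true ↔ l.1 = x := by
  rw [hl]; simp

lemma readtimes (hn : 2 ≤ n) : (Z n).ReadTimes n := by
  intro u v p hp x
  unfold BP.varCount
  rw [List.countP_eq_length_filter]
  set pr : Fin (n * (2 * n - 1)) → Bool :=
    fun e => ((Z n).label e).elim false fun l => decide (l.1 = x) with hpr
  have hqnd : (p.filter pr).Nodup := (path_nodup hn hp).filter _
  have hmap : ((p.filter pr).map gad).Nodup := by
    refine List.Nodup.map_on ?_ hqnd
    intro e he f hf hgad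
    have hpe : pr e = true := List.of_mem_filter he
    have hpf : pr f = true := List.of_mem_filter hf
    obtain ⟨le, hle⟩ := label_some e
    obtain ⟨lf, hlf⟩ := label_some f
    have h1 : le.1 = x := (pred_true_iff e x hle).mp hpe
    have h2 : lf.1 = x := (pred_true_iff f x hlf).mp hpf
    exact same_gad_same_var e f hgad le lf hle hlf (by rw [h1, h2])
  have hlen := nodup_len_le n ((p.filter pr).map gad) hmap (by
    intro a ha
    obtain ⟨e, _, rfl⟩ := List.mem_map.mp ha
    exact gad_lt e)
  rw [List.length_map] at hlen; exact hlen

lemma countP_le_one {α : Type*} {l : List α} {pr : α → Bool} (hnd : l.Nodup)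
    (h : ∀ a ∈ l, ∀ b ∈ l, pr a = true → pr b = true → a = b) : l.countP pr ≤ 1 := by
  induction l with
  | nil => simp
  | cons a l ih =>
    rw [List.countP_cons]
    obtain ⟨hal, hl⟩ := List.nodup_cons.mp hnd
    by_cases hpa : pr a = true
    · have h0 : l.countP pr = 0 := by
        rw [List.countP_eq_zero]
        intro b hb hpb
        exact hal (h a (List.mem_cons_self) b (List.mem_cons_of_mem _ hb) hpa hpb ▸ hb)
      simp [h0, hpa]
    · have h0 : (if pr a then 1 else 0) = 0 := by simp [hpa]
      rw [h0, Nat.add_zero]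
      exact ih hl (fun b hb c hc => h b (List.mem_cons_of_mem _ hb) c (List.mem_cons_of_mem _ hc))

lemma sorted_filter_split {α : Type*} (f : α → ℕ) (s : ℕ) (l : List α)
    (hlo : ∀ a ∈ l, s ≤ f a) (hp : l.Pairwise fun x y => f x ≤ f y) :
    l = l.filter (fun a => decide (f a = s)) ++ l.filter (fun a => decide (f a ≠ s)) := by
  induction l with
  | nil => rfl
  | cons a l ih =>
    obtain ⟨hal, hl⟩ := List.pairwise_cons.mp hp
    by_cases h : f a = s
    · rw [List.filter_cons_of_pos (by simp [h]), List.filter_cons_of_neg (by simp [h]),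
        List.cons_append]
      exact congrArg (a :: ·) (ih (fun b hb => hlo b (List.mem_cons_of_mem _ hb)) hl)
    · have hgt : ∀ b ∈ a :: l, s < f b := by
        intro b hb
        rcases List.mem_cons.mp hb with rfl | hb
        · exact lt_of_le_of_ne (hlo b (List.mem_cons_self)) (Ne.symm h)
        · exact lt_of_lt_of_le
            (lt_of_le_of_ne (hlo a (List.mem_cons_self)) (Ne.symm h)) (hal b hb)
      have hnil : (a :: l).filter (fun a => decide (f a = s)) = [] := by
        rw [List.filter_eq_nil_iff]
        intro b hb
        simp only [decide_eq_true_eq]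
        have := hgt b hb
        omega
      have hself : (a :: l).filter (fun a => decide (f a ≠ s)) = a :: l := by
        rw [List.filter_eq_self]
        intro b hb
        simp only [ne_eq, decide_not, Bool.not_eq_true', decide_eq_false_iff_not]
        have := hgt b hb
        omega
      rw [hnil, hself, List.nil_append]

lemma flatten_blocks {α : Type*} (f : α → ℕ) :
    ∀ (m s : ℕ) (l : List α), (∀ a ∈ l, s ≤ f a ∧ f a < s + m) →
      l.Pairwise (fun x y => f x ≤ f y) →
      ((List.range' s m).map (fun i => l.filter (fun a => decide (f a = i)))).flatten = l := by
  intro m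
  induction m with
  | zero =>
    intro s l hb _
    cases l with
    | nil => rfl
    | cons a l => exact absurd (hb a (List.mem_cons_self)) (by omega)
  | succ m ih =>
    intro s l hb hp
    rw [List.range'_succ, List.map_cons, List.flatten_cons]
    have h2 : (List.range' (s + 1) m).map (fun i => l.filter (fun a => decide (f a = i)))
        = (List.range' (s + 1) m).map
            (fun i => (l.filter (fun a => decide (f a ≠ s))).filter
              (fun a => decide (f a = i))) := by
      apply List.map_congr_left
      intro i hi
      have his : s + 1 ≤ i ∧ i < s + 1 + m := List.mem_range'_1.mp hi
      rw [List.filter_filter]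
      apply List.filter_congr
      intro a _
      simp only [Bool.and_eq_true, decide_eq_true_eq, ne_eq, Bool.decide_and]
      rcases eq_or_ne (f a) i with hfa | hfa <;> simp [hfa] <;> omega
    rw [h2, ih (s + 1) (l.filter (fun a => decide (f a ≠ s)))
      (by
        intro a ha
        have h3 := List.of_mem_filter ha
        have h4 := hb a (List.mem_of_mem_filter ha)
        simp at h3
        omega)
      (hp.filter _)]
    exact (sorted_filter_split f s l (fun a ha => (hb a ha).1) hp).symm

lemma separable (hn : 2 ≤ n) : (Z n).Separable n := by
  intro p hp
  refine ⟨(List.range n).map (fun i => p.filter (fun e => decide (gad e = i))), by simp, ?_, ?_⟩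
  · rw [List.range_eq_range']
    exact flatten_blocks gad n 0 p
      (fun e _ => ⟨Nat.zero_le _, by simpa using gad_lt e⟩)
      ((path_pairwise hn hp).imp (fun h => gad_mono hn h))
  · intro q hq x
    obtain ⟨i, _, rfl⟩ := List.mem_map.mp hq
    unfold BP.varCount
    apply countP_le_one ((path_nodup hn hp).filter _)
    intro a ha b hb hpa hpb
    obtain ⟨la, hla⟩ := label_some a
    obtain ⟨lb, hlb⟩ := label_some b
    have h1 : la.1 = x := (pred_true_iff a x hla).mp hpa
    have h2 : lb.1 = x := (pred_true_iff b x hlb).mp hpb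
    have hga : gad a = i := by simpa using List.of_mem_filter ha
    have hgb : gad b = i := by simpa using List.of_mem_filter hb
    exact same_gad_same_var a b (hga.trans hgb.symm) la lb hla hlb (by rw [h1, h2])

lemma edge_exists (hn : 2 ≤ n) (k : ℕ) (hk : k < n * (n - 1)) :
    ∃ e : Fin (n * (2 * n - 1)), ((Z n).esrc e : ℕ) = k ∧ ((Z n).edst e : ℕ) = k + 1 := by
  have hK : 0 < n - 1 := by omega
  have hi : k / (n - 1) < n := by rw [Nat.div_lt_iff_lt_mul hK]; exact hk
  refine ⟨vedge ⟨k / (n - 1), hi⟩ ⟨k % (n - 1), Nat.mod_lt _ hK⟩, ?_, ?_⟩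
  · rw [esrc_vedge]
    show k / (n - 1) * (n - 1) + k % (n - 1) = k
    exact Nat.div_add_mod' k (n - 1)
  · rw [edst_vedge]
    show k / (n - 1) * (n - 1) + k % (n - 1) + 1 = k + 1
    have := Nat.div_add_mod' k (n - 1)
    omega

lemma reach_of_le (hn : 2 ≤ n) (a b : Fin ((Z n).n)) (hab : (a : ℕ) ≤ (b : ℕ)) :
    (Z n).Reach a b := by
  obtain ⟨d, hd⟩ : ∃ d, (b : ℕ) = (a : ℕ) + d := ⟨(b : ℕ) - (a : ℕ), by omega⟩
  clear hab
  induction d generalizing a with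
  | zero => exact ⟨[], Fin.ext (by omega)⟩
  | succ d ih =>
    have hb := b.isLt
    have ha : (a : ℕ) < n * (n - 1) := by
      have : (b : ℕ) < n * (n - 1) + 1 := hb
      omega
    obtain ⟨e, he1, he2⟩ := edge_exists hn (a : ℕ) ha
    have hb2 : (a : ℕ) + 1 < n * (n - 1) + 1 := by omega
    set a' : Fin ((Z n).n) := ⟨(a : ℕ) + 1, hb2⟩ with ha'
    have hva : (a' : ℕ) = (a : ℕ) + 1 := rfl
    obtain ⟨p, hp⟩ := ih a' (by omega)
    have hde : (Z n).edst e = a' := Fin.ext (by rw [he2, hva])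
    exact ⟨e :: p, Fin.ext he1, by rw [hde]; exact hp⟩

lemma monotoneBP : (Z n).MonotoneBP := by
  intro e l h
  rcases decode e with ⟨i, rfl⟩ | ⟨i, t, rfl⟩ | ⟨i, t, rfl⟩
  · rw [label_bypass] at h; cases h; rfl
  · rw [label_vedge] at h; cases h; rfl
  · rw [label_eedge] at h; cases h; rfl

lemma isNBP (hn : 2 ≤ n) : (Z n).IsNBP := by
  refine ⟨acyclic hn, ?_, ?_, ?_⟩
  · intro e heq
    have h := (step hn e).2.1
    apply_fun (Fin.val) at heq
    have : ((Z n).source : ℕ) = 0 := rfl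
    omega
  · intro e heq
    have h1 := (step hn e).2.1
    have h2 := ((Z n).edst e).isLt
    apply_fun (Fin.val) at heq
    have h3 : ((Z n).sink : ℕ) = n * (n - 1) := rfl
    have h4 : ((Z n).edst e : ℕ) < n * (n - 1) + 1 := h2
    omega
  · intro v
    constructor
    · exact reach_of_le hn _ v (Nat.zero_le _)
    · refine reach_of_le hn v _ ?_
      have h1 : (v : ℕ) < n * (n - 1) + 1 := v.isLt
      have h2 : ((Z n).sink : ℕ) = n * (n - 1) := rfl
      omega

lemma rep_forward (hn : 2 ≤ n) (σ : Assignment (Fin n)) (h : (Z n).Sat σ) :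
    psiSat (⊤ : SimpleGraph (Fin n)) σ := by
  obtain ⟨p, hp, hag⟩ := h
  intro u v huv
  have hne : v ≠ u := ((SimpleGraph.top_adj _ _).mp huv).symm
  obtain ⟨t, ht⟩ := skipF_surj u v hne
  have hc2 : (u : ℕ) * (n - 1) + (t : ℕ) < ((Z n).sink : ℕ) := by
    have := mul_add_lt u.isLt t.isLt
    have h2 : ((Z n).sink : ℕ) = n * (n - 1) := rfl
    omega
  obtain ⟨e, hep, he1, he2⟩ := crossing hp ((u : ℕ) * (n - 1) + (t : ℕ)) (Nat.zero_le _) hc2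
  rcases cut_class hn u t e he1 he2 with rfl | rfl | rfl
  · left
    simpa using hag _ hep _ (label_bypass u)
  · right; right
    have := hag _ hep _ (label_vedge u t)
    rw [ht] at this
    simpa using this
  · right; left
    have := hag _ hep _ (label_eedge u t)
    rw [ht] at this
    simpa using this

/-- the edge picked at stage `t` of gadget `i`. -/
def pick (σ : Assignment (Fin n)) (i : Fin n) (t : ℕ) : Fin (n * (2 * n - 1)) :=
  if h : t < n - 1 then
    (if σ (Sum.inl (skipF i ⟨t, h⟩)) then vedge i ⟨t, h⟩ else eedge i ⟨t, h⟩)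
  else bypass i

/-- the chosen path through gadget `i`. -/
def gpath (σ : Assignment (Fin n)) (i : Fin n) : List (Fin (n * (2 * n - 1))) :=
  if σ (Sum.inl i) then [bypass i] else (List.range' 0 (n - 1)).map (pick σ i)

lemma pick_src_dst (σ : Assignment (Fin n)) (i : Fin n) (t : ℕ) (h : t < n - 1) :
    ((Z n).esrc (pick σ i t) : ℕ) = (i : ℕ) * (n - 1) + t ∧
    ((Z n).edst (pick σ i t) : ℕ) = (i : ℕ) * (n - 1) + t + 1 := by
  unfold pick
  rw [dif_pos h]
  split
  · rw [esrc_vedge, edst_vedge]; exact ⟨rfl, rfl⟩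
  · rw [esrc_eedge, edst_eedge]; exact ⟨rfl, rfl⟩

lemma stage_path (σ : Assignment (Fin n)) (i : Fin n) :
    ∀ (c a : ℕ), a + c = n - 1 → ∀ (x y : Fin ((Z n).n)),
      (x : ℕ) = (i : ℕ) * (n - 1) + a → (y : ℕ) = (i : ℕ) * (n - 1) + (n - 1) →
      (Z n).IsPathFrom x y ((List.range' a c).map (pick σ i)) := by
  intro c
  induction c with
  | zero =>
    intro a hac x y hx hy
    show x = y
    exact Fin.ext (by omega)
  | succ c ih =>
    intro a hac x y hx hy
    rw [List.range'_succ]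
    show (Z n).IsPathFrom x y (pick σ i a :: (List.range' (a + 1) c).map (pick σ i))
    have hal : a < n - 1 := by omega
    obtain ⟨h1, h2⟩ := pick_src_dst σ i a hal
    refine ⟨Fin.ext (by omega), ?_⟩
    exact ih (a + 1) (by omega) _ y (by omega) hy

lemma gpath_isPath (σ : Assignment (Fin n)) (i : Fin n) (x y : Fin ((Z n).n))
    (hx : (x : ℕ) = (i : ℕ) * (n - 1)) (hy : (y : ℕ) = (i : ℕ) * (n - 1) + (n - 1)) :
    (Z n).IsPathFrom x y (gpath σ i) := by
  unfold gpath
  split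
  · refine ⟨Fin.ext (by rw [esrc_bypass]; omega), ?_⟩
    show (Z n).edst (bypass i) = y
    exact Fin.ext (by rw [edst_bypass]; omega)
  · exact stage_path σ i (n - 1) 0 (by omega) x y (by omega) hy

lemma gpath_agrees (σ : Assignment (Fin n)) (hσ : psiSat (⊤ : SimpleGraph (Fin n)) σ)
    (i : Fin n) : ∀ e ∈ gpath σ i, ∀ l : PsiVar (Fin n) × Bool,
      (Z n).label e = some l → σ l.1 = l.2 := by
  intro e he l hl
  unfold gpath at he
  split at he
  · rcases List.mem_singleton.mp he with rfl
    rw [label_bypass] at hl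
    cases hl
    assumption
  · rename_i hσi
    obtain ⟨a, ha, rfl⟩ := List.mem_map.mp he
    have hal : a < n - 1 := by
      have := List.mem_range'_1.mp ha
      omega
    unfold pick at hl
    rw [dif_pos hal] at hl
    by_cases hsk : σ (Sum.inl (skipF i ⟨a, hal⟩)) = true
    · rw [if_pos hsk, label_vedge] at hl
      cases hl
      exact hsk
    · rw [if_neg hsk, label_eedge] at hl
      cases hl
      have hadj : (⊤ : SimpleGraph (Fin n)).Adj i (skipF i ⟨a, hal⟩) :=
        (SimpleGraph.top_adj _ _).mpr (Ne.symm (skipF_ne i ⟨a, hal⟩))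
      rcases hσ hadj with h1 | h2 | h3
      · exact absurd h1 hσi
      · exact h2
      · exact absurd h3 hsk

lemma full_path (σ : Assignment (Fin n)) :
    ∀ (c a : ℕ), a + c = n → ∀ (x y : Fin ((Z n).n)),
      (x : ℕ) = a * (n - 1) → (y : ℕ) = n * (n - 1) →
      (Z n).IsPathFrom x y
        (((List.range' a c).map (fun i => if h : i < n then gpath σ ⟨i, h⟩ else [])).flatten) := by
  intro c
  induction c with
  | zero =>
    intro a hac x y hx hy
    show x = y
    have : a = n := by omega
    exact Fin.ext (by rw [hx, hy, this])
  | succ c ih =>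
    intro a hac x y hx hy
    rw [List.range'_succ, List.map_cons, List.flatten_cons]
    have han : a < n := by omega
    have hw : a * (n - 1) + (n - 1) < n * (n - 1) + 1 := by
      have := Nat.mul_le_mul_right (n - 1) (show a + 1 ≤ n by omega)
      rw [add_one_mul] at this
      omega
    set w : Fin ((Z n).n) := ⟨a * (n - 1) + (n - 1), hw⟩ with hwdef
    refine isPathFrom_append (Z n) (v := w) ?_ ?_
    · rw [dif_pos han]
      exact gpath_isPath σ ⟨a, han⟩ x w hx rfl
    · have hw2 : (w : ℕ) = (a + 1) * (n - 1) := by rw [hwdef, add_one_mul]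
      exact ih (a + 1) (by omega) w y hw2 hy

lemma rep_backward (hn : 2 ≤ n) (σ : Assignment (Fin n))
    (hσ : psiSat (⊤ : SimpleGraph (Fin n)) σ) : (Z n).Sat σ := by
  refine ⟨((List.range' 0 n).map (fun i => if h : i < n then gpath σ ⟨i, h⟩ else [])).flatten,
    full_path σ n 0 (by omega) _ _ (by show (0 : ℕ) = 0 * (n - 1); omega) rfl, ?_⟩
  intro e he l hl
  obtain ⟨q, hq, heq⟩ := List.mem_flatten.mp he
  obtain ⟨i, hi, rfl⟩ := List.mem_map.mp hq
  have hin : i < n := by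
    have := List.mem_range'_1.mp hi
    omega
  rw [dif_pos hin] at heq
  exact gpath_agrees σ hσ ⟨i, hin⟩ e heq l hl

end SMNBPK


/-- `Z` represents the CNF `ψ(G)`. -/
def RepresentsPsi {V : Type} (G : SimpleGraph V) (Z : BP (PsiVar V)) : Prop :=
  ∀ σ : Assignment V, Z.Sat σ ↔ psiSat G σ

/-- for every `n ≥ 2` there is an `n`-SMNBP with at most
`n(2n − 1)` edges representing `ψ(K_n)`. -/
theorem smnbp_upper_bound_complete_graph (n : ℕ) (hn : 2 ≤ n) :
    ∃ Z : BP (PsiVar (Fin n)), Z.IsSMNBP n ∧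
      RepresentsPsi (⊤ : SimpleGraph (Fin n)) Z ∧ Z.m ≤ n * (2 * n - 1) := by
  refine ⟨SMNBPK.Z n, ⟨SMNBPK.isNBP hn, SMNBPK.monotoneBP, SMNBPK.readtimes hn,
    SMNBPK.separable hn⟩, ?_, le_refl _⟩
  intro σ
  exact ⟨SMNBPK.rep_forward hn σ, SMNBPK.rep_backward hn σ⟩
end

section
/- For every d-SMNBP Z there exists a d-SMNBP Z' with yardsticks that has the same set of satisfying assignments as Z (over the same variables) and has at most 3·|Z| edges. -/
/-- `Z` has yardsticks: every source-sink path `p` splits into `a ≤ d`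
consecutive segments delimited by vertices `u 0 = source, …, u a = sink`
such that every path of `Z` between consecutive delimiters is read-once. -/
def BP.HasYardsticks {X : Type} [DecidableEq X] (Z : BP X) (d : ℕ) : Prop :=
  ∀ p, Z.IsPathFrom Z.source Z.sink p →
    ∃ a : ℕ, a ≤ d ∧ ∃ (u : Fin (a + 1) → Fin Z.n) (ps : Fin a → List (Fin Z.m)),
      u 0 = Z.source ∧ u (Fin.last a) = Z.sink ∧
      p = (List.ofFn ps).flatten ∧
      (∀ i : Fin a, Z.IsPathFrom (u i.castSucc) (u i.succ) (ps i)) ∧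
      (∀ i : Fin a, ∀ q, Z.IsPathFrom (u i.castSucc) (u i.succ) q → Z.ReadOnce q)


/-! ### Auxiliary development -/

namespace BP

variable {X : Type}

section PathLemmas

variable (Z : BP X)

lemma isPathFrom_append {u v w : Fin Z.n} {p q : List (Fin Z.m)}
    (hp : Z.IsPathFrom u v p) (hq : Z.IsPathFrom v w q) :
    Z.IsPathFrom u w (p ++ q) := by
  induction p generalizing u with
  | nil => cases hp; simpa using hq
  | cons e p ih => exact ⟨hp.1, ih hp.2⟩

lemma isPathFrom_split {u w : Fin Z.n} {p q : List (Fin Z.m)}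
    (h : Z.IsPathFrom u w (p ++ q)) :
    ∃ v, Z.IsPathFrom u v p ∧ Z.IsPathFrom v w q := by
  induction p generalizing u with
  | nil => exact ⟨u, rfl, h⟩
  | cons e p ih =>
    obtain ⟨v, h1, h2⟩ := ih h.2
    exact ⟨v, ⟨h.1, h1⟩, h2⟩

lemma isPathFrom_snoc {u w : Fin Z.n} {p : List (Fin Z.m)} {e : Fin Z.m}
    (h : Z.IsPathFrom u w (p ++ [e])) :
    Z.IsPathFrom u (Z.esrc e) p ∧ Z.edst e = w := by
  obtain ⟨v, h1, h2⟩ := Z.isPathFrom_split h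
  obtain ⟨he, h3⟩ := h2
  cases h3
  exact ⟨he ▸ h1, rfl⟩

lemma isPathFrom_snoc' {u : Fin Z.n} {p : List (Fin Z.m)} {e : Fin Z.m}
    (h : Z.IsPathFrom u (Z.esrc e) p) :
    Z.IsPathFrom u (Z.edst e) (p ++ [e]) :=
  Z.isPathFrom_append h ⟨rfl, rfl⟩

lemma isPathFrom_head {u v : Fin Z.n} {e : Fin Z.m} {p : List (Fin Z.m)}
    (h : Z.IsPathFrom u v (e :: p)) : Z.esrc e = u := h.1

end PathLemmas

section CountLemmas

variable [DecidableEq X] (Z : BP X)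

/-- The predicate used by `varCount`. -/
def vpred (x : X) : Fin Z.m → Bool := fun e => (Z.label e).elim false fun l => decide (l.1 = x)

lemma varCount_eq_countP (p : List (Fin Z.m)) (x : X) :
    Z.varCount p x = p.countP (Z.vpred x) := rfl

lemma varCount_append (p q : List (Fin Z.m)) (x : X) :
    Z.varCount (p ++ q) x = Z.varCount p x + Z.varCount q x :=
  List.countP_append

lemma readOnce_nil : Z.ReadOnce [] := by
  intro x
  rw [varCount_eq_countP, List.countP_nil]
  omega

lemma readOnce_singleton (e : Fin Z.m) : Z.ReadOnce [e] := by
  intro x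
  have := List.countP_le_length (l := [e]) (p := Z.vpred x)
  simpa [varCount_eq_countP] using this

lemma readOnce_of_none {p : List (Fin Z.m)} (h : ∀ e ∈ p, Z.label e = none) :
    Z.ReadOnce p := by
  intro x
  rw [varCount_eq_countP]
  have : ∀ e ∈ p, ¬ (Z.vpred x e = true) := by
    intro e he
    simp [vpred, h e he]
  calc p.countP (Z.vpred x) = 0 := by
        rw [List.countP_eq_zero]; exact this
    _ ≤ 1 := by omega

lemma not_readOnce_iff (p : List (Fin Z.m)) :
    ¬ Z.ReadOnce p ↔ ∃ x, 2 ≤ Z.varCount p x := by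
  unfold ReadOnce
  push_neg
  exact exists_congr fun x => by omega

/-- Splitting a list at a second occurrence of a predicate. -/
lemma second_occ_split {α : Type*} (pr : α → Bool) :
    ∀ (l : List α), 2 ≤ l.countP pr →
      ∃ a g b, l = a ++ g :: b ∧ pr g = true ∧ ∃ h ∈ a, pr h = true := by
  intro l hl
  induction l with
  | nil => rw [List.countP_nil] at hl; omega
  | cons c l ih =>
    by_cases hc : pr c = true
    · have h1 : 0 < l.countP pr := by
        simp only [List.countP_cons, hc, if_true] at hl; omega
      obtain ⟨g, hg, hgp⟩ := List.countP_pos_iff.mp h1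
      obtain ⟨a, b, rfl⟩ := List.append_of_mem hg
      exact ⟨c :: a, g, b, rfl, hgp, c, by simp, hc⟩
    · have h2 : 2 ≤ l.countP pr := by
        have hcf : pr c = false := Bool.not_eq_true _ |>.mp hc
        simp [List.countP_cons, hcf] at hl; omega
      obtain ⟨a, g, b, rfl, hgp, h, hha, hhp⟩ := ih h2
      exact ⟨c :: a, g, b, rfl, hgp, h, by simp [hha], hhp⟩

end CountLemmas

section ChainDef

variable [DecidableEq X] (Z : BP X)

/-- `ChainW k q`: the path `q` contains `k` successive "repeats"
`i₁ < j₁ ≤ i₂ < j₂ ≤ …` (consecutive repeats may share an endpoint edge). -/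
def ChainW : ℕ → List (Fin Z.m) → Prop
  | 0, _ => True
  | (k+1), q => ∃ a g b x, q = a ++ g :: b ∧ Z.vpred x g = true ∧
      (∃ h ∈ a, Z.vpred x h = true) ∧ ChainW k (g :: b)

lemma chainW_zero (q : List (Fin Z.m)) : Z.ChainW 0 q := trivial

lemma chainW_prepend {k : ℕ} {q : List (Fin Z.m)} (c : List (Fin Z.m))
    (h : Z.ChainW k q) : Z.ChainW k (c ++ q) := by
  cases k with
  | zero => trivial
  | succ k =>
    obtain ⟨a, g, b, x, rfl, hg, ⟨h0, hh0, hp0⟩, hch⟩ := h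
    exact ⟨c ++ a, g, b, x, by simp, hg, ⟨h0, by simp [hh0], hp0⟩, hch⟩

lemma chainW_cons_none {k : ℕ} {c : Fin Z.m} {q : List (Fin Z.m)}
    (hc : Z.label c = none) (h : Z.ChainW k (c :: q)) : Z.ChainW k q := by
  cases k with
  | zero => trivial
  | succ k =>
    obtain ⟨a, g, b, x, heq, hg, ⟨h0, hh0, hp0⟩, hch⟩ := h
    cases a with
    | nil =>
      simp only [List.nil_append] at heq
      have : g = c := (List.cons.inj heq).1.symm
      exfalso
      rw [this] at hg
      simp [vpred, hc] at hg
    | cons a0 a =>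
      rw [List.cons_append] at heq
      have h1 : a0 = c := (List.cons.inj heq).1.symm
      have h2 : q = a ++ g :: b := (List.cons.inj heq).2
      rcases List.mem_cons.mp hh0 with rfl | hh0
      · exfalso; rw [h1] at hp0; simp [vpred, hc] at hp0
      · rw [h2]; exact ⟨a, g, b, x, rfl, hg, ⟨h0, hh0, hp0⟩, hch⟩

lemma chainW_has_labeled {k : ℕ} {q : List (Fin Z.m)}
    (h : Z.ChainW (k+1) q) : ∃ e ∈ q, (Z.label e).isSome := by
  obtain ⟨a, g, b, x, rfl, hg, _, _⟩ := h
  refine ⟨g, by simp, ?_⟩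
  simp only [vpred] at hg
  cases hl : Z.label g with
  | none => rw [hl] at hg; simp at hg
  | some l => simp

/-- Key counting lemma: a path containing `k` chained repeats cannot be split
into at most `k` read-once pieces. -/
lemma chainW_lt_pieces :
    ∀ (ps : List (List (Fin Z.m))), (∀ s ∈ ps, Z.ReadOnce s) →
      ∀ k, Z.ChainW k ps.flatten → k = 0 ∨ k < ps.length := by
  intro ps
  induction ps with
  | nil =>
    intro _ k hk
    cases k with
    | zero => exact Or.inl rfl
    | succ k =>
      obtain ⟨a, g, b, x, heq, _, _, _⟩ := hk
      exfalso
      simpa using congrArg List.length heq.symm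
  | cons P tail ih =>
    intro hro k hk
    cases k with
    | zero => exact Or.inl rfl
    | succ k =>
      right
      obtain ⟨a, g, b, x, heq, hg, ⟨h0, hh0, hp0⟩, hch⟩ := hk
      simp only [List.flatten_cons] at heq
      rcases List.append_eq_append_iff.mp heq.symm with ⟨c, hc1, hc2⟩ | ⟨c, hc1, hc2⟩
      · -- P = a ++ c, g :: b = c ++ tail.flatten
        cases c with
        | nil =>
          -- g :: b = tail.flatten
          have hch' : Z.ChainW k tail.flatten := by
            simp only [List.nil_append] at hc2
            rw [← hc2]; exact hch
          have htail : tail ≠ [] := by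
            intro h
            rw [h] at hc2; simp at hc2
          rcases ih (fun s hs => hro s (by simp [hs])) k hch' with rfl | hlt
          · simp only [List.length_cons]
            have : 0 < tail.length := List.length_pos_iff.mpr htail
            omega
          · simp only [List.length_cons]; omega
        | cons c0 c' =>
          -- then g = c0 ∈ P together with h0 ∈ a ⊆ P : P not read-once
          exfalso
          have hg0 : c0 = g := (List.cons.inj hc2).1.symm
          have hPro := hro P (by simp)
          have h2c : 2 ≤ Z.varCount P x := by
            rw [hc1, varCount_eq_countP, List.countP_append]
            have h1 : 0 < a.countP (Z.vpred x) :=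
              List.countP_pos_iff.mpr ⟨h0, hh0, hp0⟩
            have h2 : 0 < (c0 :: c').countP (Z.vpred x) :=
              List.countP_pos_iff.mpr ⟨c0, by simp, hg0 ▸ hg⟩
            omega
          have := hPro x
          omega
      · -- a = P ++ c, tail.flatten = c ++ g :: b
        have hch' : Z.ChainW k tail.flatten := by
          rw [hc2]; exact Z.chainW_prepend c hch
        have htail : tail ≠ [] := by
          intro h
          rw [h] at hc2; simp at hc2
        rcases ih (fun s hs => hro s (by simp [hs])) k hch' with rfl | hlt
        · simp only [List.length_cons]
          have : 0 < tail.length := List.length_pos_iff.mpr htail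
          omega
        · simp only [List.length_cons]; omega

end ChainDef


section Tri

variable (Z : BP X)

/-- Vertex of the subdivided program corresponding to an original vertex. -/
def vO (v : Fin Z.n) : Fin (Z.n + Z.m + Z.m) := (v.castAdd Z.m).castAdd Z.m
/-- First midpoint of the subdivision of edge `e`. -/
def vA (e : Fin Z.m) : Fin (Z.n + Z.m + Z.m) := ((e.natAdd Z.n).castAdd Z.m)
/-- Second midpoint of the subdivision of edge `e`. -/
def vB (e : Fin Z.m) : Fin (Z.n + Z.m + Z.m) := e.natAdd (Z.n + Z.m)

/-- First third of the subdivision of edge `e` (unlabelled). -/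
def eIn (e : Fin Z.m) : Fin (Z.m + Z.m + Z.m) := (e.castAdd Z.m).castAdd Z.m
/-- Middle third of the subdivision of edge `e` (carries the label). -/
def eMid (e : Fin Z.m) : Fin (Z.m + Z.m + Z.m) := ((e.natAdd Z.m).castAdd Z.m)
/-- Last third of the subdivision of edge `e` (unlabelled). -/
def eOut (e : Fin Z.m) : Fin (Z.m + Z.m + Z.m) := e.natAdd (Z.m + Z.m)

/-- The subdivision of `Z`: every edge is split in three, the middle part
carrying the label. -/
@[reducible] def tri : BP X where
  n := Z.n + Z.m + Z.m
  m := Z.m + Z.m + Z.m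
  esrc := Fin.addCases (Fin.addCases (fun e => Z.vO (Z.esrc e)) (fun e => Z.vA e))
    (fun e => Z.vB e)
  edst := Fin.addCases (Fin.addCases (fun e => Z.vA e) (fun e => Z.vB e))
    (fun e => Z.vO (Z.edst e))
  source := Z.vO Z.source
  sink := Z.vO Z.sink
  label := Fin.addCases (Fin.addCases (fun _ => none) (fun e => Z.label e)) (fun _ => none)

@[simp] lemma tri_source : (Z.tri).source = Z.vO Z.source := rfl
@[simp] lemma tri_sink : (Z.tri).sink = Z.vO Z.sink := rfl
@[simp] lemma tri_n : (Z.tri).n = Z.n + Z.m + Z.m := rfl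
@[simp] lemma tri_m : (Z.tri).m = Z.m + Z.m + Z.m := rfl

@[simp] lemma tri_esrc_eIn (e : Fin Z.m) : (Z.tri).esrc (Z.eIn e) = Z.vO (Z.esrc e) := by
  simp [tri, eIn, Fin.addCases_left]
@[simp] lemma tri_esrc_eMid (e : Fin Z.m) : (Z.tri).esrc (Z.eMid e) = Z.vA e := by
  simp only [tri, eMid, Fin.addCases_left, Fin.addCases_right]
@[simp] lemma tri_esrc_eOut (e : Fin Z.m) : (Z.tri).esrc (Z.eOut e) = Z.vB e := by
  simp [tri, eOut, Fin.addCases_right]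
@[simp] lemma tri_edst_eIn (e : Fin Z.m) : (Z.tri).edst (Z.eIn e) = Z.vA e := by
  simp [tri, eIn, Fin.addCases_left]
@[simp] lemma tri_edst_eMid (e : Fin Z.m) : (Z.tri).edst (Z.eMid e) = Z.vB e := by
  simp only [tri, eMid, Fin.addCases_left, Fin.addCases_right]
@[simp] lemma tri_edst_eOut (e : Fin Z.m) : (Z.tri).edst (Z.eOut e) = Z.vO (Z.edst e) := by
  simp [tri, eOut, Fin.addCases_right]
@[simp] lemma tri_label_eIn (e : Fin Z.m) : (Z.tri).label (Z.eIn e) = none := by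
  simp [tri, eIn, Fin.addCases_left]
@[simp] lemma tri_label_eMid (e : Fin Z.m) : (Z.tri).label (Z.eMid e) = Z.label e := by
  simp only [tri, eMid, Fin.addCases_left, Fin.addCases_right]
@[simp] lemma tri_label_eOut (e : Fin Z.m) : (Z.tri).label (Z.eOut e) = none := by
  simp [tri, eOut, Fin.addCases_right]

lemma tri_edge_cases (f : Fin (Z.tri).m) :
    (∃ e, f = Z.eIn e) ∨ (∃ e, f = Z.eMid e) ∨ (∃ e, f = Z.eOut e) := by
  have hval : (f : ℕ) < Z.m + Z.m + Z.m := f.isLt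
  by_cases h1 : (f : ℕ) < Z.m
  · exact Or.inl ⟨⟨f, h1⟩, by simp [eIn, Fin.ext_iff]⟩
  · by_cases h2 : (f : ℕ) < Z.m + Z.m
    · refine Or.inr (Or.inl ⟨⟨(f : ℕ) - Z.m, by omega⟩, ?_⟩)
      simp [eMid, Fin.ext_iff]
      omega
    · refine Or.inr (Or.inr ⟨⟨(f : ℕ) - (Z.m + Z.m), by omega⟩, ?_⟩)
      simp [eOut, Fin.ext_iff]
      omega

lemma tri_vertex_cases (w : Fin (Z.tri).n) :
    (∃ v, w = Z.vO v) ∨ (∃ e, w = Z.vA e) ∨ (∃ e, w = Z.vB e) := by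
  have hval : (w : ℕ) < Z.n + Z.m + Z.m := w.isLt
  by_cases h1 : (w : ℕ) < Z.n
  · exact Or.inl ⟨⟨w, h1⟩, by simp [vO, Fin.ext_iff]⟩
  · by_cases h2 : (w : ℕ) < Z.n + Z.m
    · refine Or.inr (Or.inl ⟨⟨(w : ℕ) - Z.n, by omega⟩, ?_⟩)
      simp [vA, Fin.ext_iff]
      omega
    · refine Or.inr (Or.inr ⟨⟨(w : ℕ) - (Z.n + Z.m), by omega⟩, ?_⟩)
      simp [vB, Fin.ext_iff]
      omega

@[simp] lemma vO_val (v : Fin Z.n) : (Z.vO v : ℕ) = v := rfl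
@[simp] lemma vA_val (e : Fin Z.m) : (Z.vA e : ℕ) = Z.n + e := by simp [vA, Nat.add_comm]
@[simp] lemma vB_val (e : Fin Z.m) : (Z.vB e : ℕ) = Z.n + Z.m + e := by simp [vB, Nat.add_comm]

lemma vO_inj {u v : Fin Z.n} (h : Z.vO u = Z.vO v) : u = v := by
  have := congrArg (fun w : Fin (Z.tri).n => (w : ℕ)) h
  simp at this
  exact Fin.ext this
lemma vA_inj {e f : Fin Z.m} (h : Z.vA e = Z.vA f) : e = f := by
  have := congrArg (fun w : Fin (Z.tri).n => (w : ℕ)) h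
  simp at this
  exact Fin.ext this
lemma vB_inj {e f : Fin Z.m} (h : Z.vB e = Z.vB f) : e = f := by
  have := congrArg (fun w : Fin (Z.tri).n => (w : ℕ)) h
  simp at this
  exact Fin.ext this

lemma vO_ne_vA (v : Fin Z.n) (e : Fin Z.m) : Z.vO v ≠ Z.vA e := by
  intro h
  have := congrArg (fun w : Fin (Z.tri).n => (w : ℕ)) h
  have hv : (v : ℕ) < Z.n := v.isLt
  simp at this
  omega
lemma vO_ne_vB (v : Fin Z.n) (e : Fin Z.m) : Z.vO v ≠ Z.vB e := by
  intro h
  have := congrArg (fun w : Fin (Z.tri).n => (w : ℕ)) h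
  have hv : (v : ℕ) < Z.n := v.isLt
  simp at this
  omega
lemma vA_ne_vB (e f : Fin Z.m) : Z.vA e ≠ Z.vB f := by
  intro h
  have := congrArg (fun w : Fin (Z.tri).n => (w : ℕ)) h
  have hv : (e : ℕ) < Z.m := e.isLt
  simp at this
  omega

end Tri

section Lift

variable (Z : BP X)

/-- Lift of a path of `Z` to the subdivision. -/
def liftP (p : List (Fin Z.m)) : List (Fin (Z.tri).m) :=
  p.flatMap fun e => [Z.eIn e, Z.eMid e, Z.eOut e]

@[simp] lemma liftP_nil : Z.liftP [] = [] := rfl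

@[simp] lemma liftP_cons (e : Fin Z.m) (p : List (Fin Z.m)) :
    Z.liftP (e :: p) = Z.eIn e :: Z.eMid e :: Z.eOut e :: Z.liftP p := rfl

lemma liftP_append (p q : List (Fin Z.m)) :
    Z.liftP (p ++ q) = Z.liftP p ++ Z.liftP q := List.flatMap_append ..

lemma liftP_path {u v : Fin Z.n} {p : List (Fin Z.m)} (h : Z.IsPathFrom u v p) :
    (Z.tri).IsPathFrom (Z.vO u) (Z.vO v) (Z.liftP p) := by
  induction p generalizing u with
  | nil =>
    have h' : u = v := h
    rw [h']
    rfl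
  | cons e p ih =>
    obtain ⟨h1, h2⟩ := h
    exact ⟨by rw [tri_esrc_eIn, h1], by rw [tri_edst_eIn, tri_esrc_eMid],
      by rw [tri_edst_eMid, tri_esrc_eOut], by rw [tri_edst_eOut]; exact ih h2⟩

lemma liftP_unlift_aux :
    ∀ (L : ℕ) (q : List (Fin (Z.tri).m)) (u v : Fin Z.n),
      q.length ≤ L →
      (Z.tri).IsPathFrom (Z.vO u) (Z.vO v) q →
      ∃ p, Z.IsPathFrom u v p ∧ q = Z.liftP p := by
  intro L
  induction L with
  | zero =>
    intro q u v hlen h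
    have hq : q = [] := List.eq_nil_of_length_eq_zero (by omega)
    subst hq
    exact ⟨[], Z.vO_inj h, rfl⟩
  | succ L ih =>
    intro q u v hlen h
    cases q with
    | nil => exact ⟨[], Z.vO_inj h, rfl⟩
    | cons f q1 =>
      obtain ⟨hf, h2⟩ := h
      rcases Z.tri_edge_cases f with ⟨e, rfl⟩ | ⟨e, rfl⟩ | ⟨e, rfl⟩
      · rw [tri_esrc_eIn] at hf
        have he : Z.esrc e = u := Z.vO_inj hf
        rw [tri_edst_eIn] at h2
        cases q1 with
        | nil =>
          have h2' : Z.vA e = Z.vO v := h2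
          exact absurd h2'.symm (Z.vO_ne_vA v e)
        | cons f2 q2 =>
          obtain ⟨hf2, h3⟩ := h2
          rcases Z.tri_edge_cases f2 with ⟨e2, rfl⟩ | ⟨e2, rfl⟩ | ⟨e2, rfl⟩
          · rw [tri_esrc_eIn] at hf2
            exact absurd hf2 (Z.vO_ne_vA _ _)
          · rw [tri_esrc_eMid] at hf2
            have he2 : e2 = e := Z.vA_inj hf2
            subst he2
            rw [tri_edst_eMid] at h3
            cases q2 with
            | nil =>
              have h3' : Z.vB e2 = Z.vO v := h3
              exact absurd h3'.symm (Z.vO_ne_vB v e2)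
            | cons f3 q3 =>
              obtain ⟨hf3, h4⟩ := h3
              rcases Z.tri_edge_cases f3 with ⟨e3, rfl⟩ | ⟨e3, rfl⟩ | ⟨e3, rfl⟩
              · rw [tri_esrc_eIn] at hf3
                exact absurd hf3 (Z.vO_ne_vB _ _)
              · rw [tri_esrc_eMid] at hf3
                exact absurd hf3 (Z.vA_ne_vB _ _)
              · rw [tri_esrc_eOut] at hf3
                have he3 : e3 = e2 := Z.vB_inj hf3
                subst he3
                rw [tri_edst_eOut] at h4
                have hlen3 : q3.length ≤ L := by
                  simp only [List.length_cons] at hlen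
                  omega
                obtain ⟨p, hp, rfl⟩ := ih q3 (Z.edst e3) v hlen3 h4
                exact ⟨e3 :: p, ⟨he, hp⟩, by simp⟩
          · rw [tri_esrc_eOut] at hf2
            exact absurd hf2.symm (Z.vA_ne_vB _ _)
      · rw [tri_esrc_eMid] at hf
        exact absurd hf.symm (Z.vO_ne_vA _ _)
      · rw [tri_esrc_eOut] at hf
        exact absurd hf.symm (Z.vO_ne_vB _ _)

lemma liftP_unlift {q : List (Fin (Z.tri).m)} {u v : Fin Z.n}
    (h : (Z.tri).IsPathFrom (Z.vO u) (Z.vO v) q) :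
    ∃ p, Z.IsPathFrom u v p ∧ q = Z.liftP p :=
  Z.liftP_unlift_aux q.length q u v le_rfl h

end Lift

section TriCount

variable [DecidableEq X] (Z : BP X)

@[simp] lemma vpred_eIn (x : X) (e : Fin Z.m) : (Z.tri).vpred x (Z.eIn e) = false := by
  unfold vpred
  rw [tri_label_eIn]
  rfl
@[simp] lemma vpred_eOut (x : X) (e : Fin Z.m) : (Z.tri).vpred x (Z.eOut e) = false := by
  unfold vpred
  rw [tri_label_eOut]
  rfl
@[simp] lemma vpred_eMid (x : X) (e : Fin Z.m) : (Z.tri).vpred x (Z.eMid e) = Z.vpred x e := by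
  unfold vpred
  rw [tri_label_eMid]

lemma liftP_varCount (p : List (Fin Z.m)) (x : X) :
    (Z.tri).varCount (Z.liftP p) x = Z.varCount p x := by
  induction p with
  | nil => rfl
  | cons e p ih =>
    rw [liftP_cons]
    simp only [varCount_eq_countP, List.countP_cons] at *
    rw [ih]
    simp only [vpred_eIn, vpred_eMid, vpred_eOut, if_false, Bool.false_eq_true]
    omega

lemma liftP_readOnce {p : List (Fin Z.m)} (h : Z.ReadOnce p) :
    (Z.tri).ReadOnce (Z.liftP p) := by
  intro x
  rw [liftP_varCount]
  exact h x

lemma liftP_readOnce' {p : List (Fin Z.m)} (h : (Z.tri).ReadOnce (Z.liftP p)) :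
    Z.ReadOnce p := by
  intro x
  rw [← Z.liftP_varCount]
  exact h x

end TriCount

section Forced

variable (Z : BP X)

/-- Classification of a path step leaving `vA e`. -/
lemma from_vA {e : Fin Z.m} {w : Fin (Z.tri).n} {q : List (Fin (Z.tri).m)}
    (h : (Z.tri).IsPathFrom (Z.vA e) w q) :
    (q = [] ∧ w = Z.vA e) ∨
      ∃ q', q = Z.eMid e :: q' ∧ (Z.tri).IsPathFrom (Z.vB e) w q' := by
  cases q with
  | nil => exact Or.inl ⟨rfl, (show Z.vA e = w from h).symm⟩
  | cons f q' =>
    obtain ⟨hf, h2⟩ := h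
    rcases Z.tri_edge_cases f with ⟨e2, rfl⟩ | ⟨e2, rfl⟩ | ⟨e2, rfl⟩
    · rw [tri_esrc_eIn] at hf
      exact absurd hf (Z.vO_ne_vA _ _)
    · rw [tri_esrc_eMid] at hf
      have : e2 = e := Z.vA_inj hf
      subst this
      rw [tri_edst_eMid] at h2
      exact Or.inr ⟨q', rfl, h2⟩
    · rw [tri_esrc_eOut] at hf
      exact absurd hf.symm (Z.vA_ne_vB _ _)

/-- Classification of a path step leaving `vB e`. -/
lemma from_vB {e : Fin Z.m} {w : Fin (Z.tri).n} {q : List (Fin (Z.tri).m)}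
    (h : (Z.tri).IsPathFrom (Z.vB e) w q) :
    (q = [] ∧ w = Z.vB e) ∨
      ∃ q', q = Z.eOut e :: q' ∧ (Z.tri).IsPathFrom (Z.vO (Z.edst e)) w q' := by
  cases q with
  | nil => exact Or.inl ⟨rfl, (show Z.vB e = w from h).symm⟩
  | cons f q' =>
    obtain ⟨hf, h2⟩ := h
    rcases Z.tri_edge_cases f with ⟨e2, rfl⟩ | ⟨e2, rfl⟩ | ⟨e2, rfl⟩
    · rw [tri_esrc_eIn] at hf
      exact absurd hf (Z.vO_ne_vB _ _)
    · rw [tri_esrc_eMid] at hf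
      exact absurd hf (Z.vA_ne_vB _ _)
    · rw [tri_esrc_eOut] at hf
      have : e2 = e := Z.vB_inj hf
      subst this
      rw [tri_edst_eOut] at h2
      exact Or.inr ⟨q', rfl, h2⟩

/-- Classification of a nonempty path entering `vA f`. -/
lemma into_vA {f : Fin Z.m} {w : Fin (Z.tri).n} {q : List (Fin (Z.tri).m)}
    (h : (Z.tri).IsPathFrom w (Z.vA f) q) (hne : q ≠ []) :
    ∃ q0 : List (Fin (Z.tri).m), q = q0.concat (Z.eIn f) ∧
      (Z.tri).IsPathFrom w (Z.vO (Z.esrc f)) q0 := by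
  rcases List.eq_nil_or_concat q with rfl | ⟨q0, g, rfl⟩
  · exact absurd rfl hne
  rw [List.concat_eq_append] at h
  obtain ⟨h1, h2⟩ := (Z.tri).isPathFrom_snoc h
  rcases Z.tri_edge_cases g with ⟨e, rfl⟩ | ⟨e, rfl⟩ | ⟨e, rfl⟩
  · rw [tri_edst_eIn] at h2
    have : e = f := Z.vA_inj h2
    subst this
    rw [tri_esrc_eIn] at h1
    exact ⟨q0, rfl, h1⟩
  · rw [tri_edst_eMid] at h2
    exact absurd h2.symm (Z.vA_ne_vB _ _)
  · rw [tri_edst_eOut] at h2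
    exact absurd h2 (Z.vO_ne_vA _ _)

/-- Classification of a nonempty path entering `vB f`. -/
lemma into_vB {f : Fin Z.m} {w : Fin (Z.tri).n} {q : List (Fin (Z.tri).m)}
    (h : (Z.tri).IsPathFrom w (Z.vB f) q) (hne : q ≠ []) :
    ∃ q0 : List (Fin (Z.tri).m), q = q0.concat (Z.eMid f) ∧
      (Z.tri).IsPathFrom w (Z.vA f) q0 := by
  rcases List.eq_nil_or_concat q with rfl | ⟨q0, g, rfl⟩
  · exact absurd rfl hne
  rw [List.concat_eq_append] at h
  obtain ⟨h1, h2⟩ := (Z.tri).isPathFrom_snoc h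
  rcases Z.tri_edge_cases g with ⟨e, rfl⟩ | ⟨e, rfl⟩ | ⟨e, rfl⟩
  · rw [tri_edst_eIn] at h2
    exact absurd h2 (Z.vA_ne_vB _ _)
  · rw [tri_edst_eMid] at h2
    have : e = f := Z.vB_inj h2
    subst this
    rw [tri_esrc_eMid] at h1
    exact ⟨q0, rfl, h1⟩
  · rw [tri_edst_eOut] at h2
    exact absurd h2 (Z.vO_ne_vB _ _)

end Forced

section TriNBP

variable (Z : BP X)

/-- Projection of subdivision edges to original edges (only `eOut` thirds count). -/
def projOut : Fin (Z.tri).m → Option (Fin Z.m) :=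
  Fin.addCases (Fin.addCases (fun _ => none) (fun _ => none)) (fun e => some e)

@[simp] lemma projOut_eIn (e : Fin Z.m) : Z.projOut (Z.eIn e) = none := by
  simp [projOut, eIn, Fin.addCases_left]
@[simp] lemma projOut_eMid (e : Fin Z.m) : Z.projOut (Z.eMid e) = none := by
  simp only [projOut, eMid, Fin.addCases_left, Fin.addCases_right]
@[simp] lemma projOut_eOut (e : Fin Z.m) : Z.projOut (Z.eOut e) = some e := by
  simp [projOut, eOut, Fin.addCases_right]

/-- Projection of subdivision vertices. -/
def projV : Fin (Z.tri).n → Fin Z.n :=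
  Fin.addCases (Fin.addCases (fun v => v) (fun e => Z.esrc e)) (fun e => Z.esrc e)

@[simp] lemma projV_vO (v : Fin Z.n) : Z.projV (Z.vO v) = v := by
  simp [projV, vO, Fin.addCases_left]
@[simp] lemma projV_vA (e : Fin Z.m) : Z.projV (Z.vA e) = Z.esrc e := by
  simp only [projV, vA, Fin.addCases_left, Fin.addCases_right]
@[simp] lemma projV_vB (e : Fin Z.m) : Z.projV (Z.vB e) = Z.esrc e := by
  simp [projV, vB, Fin.addCases_right]

lemma proj_path {w w' : Fin (Z.tri).n} {q : List (Fin (Z.tri).m)}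
    (h : (Z.tri).IsPathFrom w w' q) :
    Z.IsPathFrom (Z.projV w) (Z.projV w') (q.filterMap Z.projOut) := by
  induction q generalizing w with
  | nil =>
    have h' : w = w' := h
    rw [h']
    rfl
  | cons f q ih =>
    obtain ⟨hf, h2⟩ := h
    rcases Z.tri_edge_cases f with ⟨e, rfl⟩ | ⟨e, rfl⟩ | ⟨e, rfl⟩
    · rw [tri_esrc_eIn] at hf
      rw [tri_edst_eIn] at h2
      subst hf
      have := ih h2
      rw [projV_vA] at this
      rw [projV_vO]
      simpa using this
    · rw [tri_esrc_eMid] at hf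
      rw [tri_edst_eMid] at h2
      subst hf
      have := ih h2
      rw [projV_vB] at this
      rw [projV_vA]
      simpa using this
    · rw [tri_esrc_eOut] at hf
      rw [tri_edst_eOut] at h2
      subst hf
      have := ih h2
      rw [projV_vO] at this
      simp only [List.filterMap_cons, projOut_eOut, projV_vB]
      exact ⟨rfl, this⟩

/-- Phase of a subdivision vertex. -/
def phase : Fin (Z.tri).n → ℕ :=
  Fin.addCases (Fin.addCases (fun _ => 0) (fun _ => 1)) (fun _ => 2)

@[simp] lemma phase_vO (v : Fin Z.n) : Z.phase (Z.vO v) = 0 := by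
  simp [phase, vO, Fin.addCases_left]
@[simp] lemma phase_vA (e : Fin Z.m) : Z.phase (Z.vA e) = 1 := by
  simp only [phase, vA, Fin.addCases_left, Fin.addCases_right]
@[simp] lemma phase_vB (e : Fin Z.m) : Z.phase (Z.vB e) = 2 := by
  simp [phase, vB, Fin.addCases_right]

lemma tri_acyclic (hZ : Z.Acyclic) : (Z.tri).Acyclic := by
  intro w q h
  have hfm : Z.IsPathFrom (Z.projV w) (Z.projV w) (q.filterMap Z.projOut) := by
    simpa using Z.proj_path h
  have hnil : q.filterMap Z.projOut = [] := hZ _ _ hfm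
  -- so q contains no eOut edges; phases strictly increase
  have key : ∀ (q' : List (Fin (Z.tri).m)) (w1 w2 : Fin (Z.tri).n),
      (Z.tri).IsPathFrom w1 w2 q' → q'.filterMap Z.projOut = [] →
      Z.phase w1 + q'.length ≤ Z.phase w2 := by
    intro q'
    induction q' with
    | nil =>
      intro w1 w2 h1 _
      have h' : w1 = w2 := h1
      rw [h']
      simp
    | cons f q' ih =>
      intro w1 w2 h1 h2
      obtain ⟨hf, hrest⟩ := h1
      rcases Z.tri_edge_cases f with ⟨e, rfl⟩ | ⟨e, rfl⟩ | ⟨e, rfl⟩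
      · rw [tri_esrc_eIn] at hf
        rw [tri_edst_eIn] at hrest
        simp only [List.filterMap_cons, projOut_eIn] at h2
        subst hf
        have := ih _ _ hrest h2
        rw [phase_vA] at this
        rw [phase_vO]
        simp only [List.length_cons]
        omega
      · rw [tri_esrc_eMid] at hf
        rw [tri_edst_eMid] at hrest
        simp only [List.filterMap_cons, projOut_eMid] at h2
        subst hf
        have := ih _ _ hrest h2
        rw [phase_vB] at this
        rw [phase_vA]
        simp only [List.length_cons]
        omega
      · simp only [List.filterMap_cons, projOut_eOut] at h2
        exact absurd h2 (List.cons_ne_nil _ _)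
  have := key q w w h hnil
  cases q with
  | nil => rfl
  | cons f q' =>
    exfalso
    simp only [List.length_cons] at this
    omega

end TriNBP

section TriNBP2

variable (Z : BP X)

lemma tri_no_into_source (hZ : ∀ e, Z.edst e ≠ Z.source) :
    ∀ f, (Z.tri).edst f ≠ (Z.tri).source := by
  intro f
  rcases Z.tri_edge_cases f with ⟨e, rfl⟩ | ⟨e, rfl⟩ | ⟨e, rfl⟩
  · rw [tri_edst_eIn, tri_source]
    exact (Z.vO_ne_vA _ _).symm
  · rw [tri_edst_eMid, tri_source]
    exact (Z.vO_ne_vB _ _).symm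
  · rw [tri_edst_eOut, tri_source]
    intro h
    exact hZ e (Z.vO_inj h)

lemma tri_no_from_sink (hZ : ∀ e, Z.esrc e ≠ Z.sink) :
    ∀ f, (Z.tri).esrc f ≠ (Z.tri).sink := by
  intro f
  rcases Z.tri_edge_cases f with ⟨e, rfl⟩ | ⟨e, rfl⟩ | ⟨e, rfl⟩
  · rw [tri_esrc_eIn, tri_sink]
    intro h
    exact hZ e (Z.vO_inj h)
  · rw [tri_esrc_eMid, tri_sink]
    exact (Z.vO_ne_vA _ _).symm
  · rw [tri_esrc_eOut, tri_sink]
    exact (Z.vO_ne_vB _ _).symm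

lemma tri_reach (hZ : ∀ v : Fin Z.n, Z.Reach Z.source v ∧ Z.Reach v Z.sink) :
    ∀ w : Fin (Z.tri).n, (Z.tri).Reach (Z.tri).source w ∧ (Z.tri).Reach w (Z.tri).sink := by
  intro w
  rcases Z.tri_vertex_cases w with ⟨v, rfl⟩ | ⟨e, rfl⟩ | ⟨e, rfl⟩
  · obtain ⟨⟨p1, hp1⟩, ⟨p2, hp2⟩⟩ := hZ v
    exact ⟨⟨Z.liftP p1, Z.liftP_path hp1⟩, ⟨Z.liftP p2, Z.liftP_path hp2⟩⟩
  · obtain ⟨⟨p1, hp1⟩, _⟩ := hZ (Z.esrc e)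
    obtain ⟨_, ⟨p2, hp2⟩⟩ := hZ (Z.edst e)
    refine ⟨⟨Z.liftP p1 ++ [Z.eIn e], ?_⟩, ⟨Z.eMid e :: Z.eOut e :: Z.liftP p2, ?_⟩⟩
    · have := (Z.tri).isPathFrom_append (Z.liftP_path hp1)
        (show (Z.tri).IsPathFrom (Z.vO (Z.esrc e)) (Z.vA e) [Z.eIn e] from
          ⟨by rw [tri_esrc_eIn], by rw [tri_edst_eIn]; rfl⟩)
      exact this
    · exact ⟨by rw [tri_esrc_eMid], by rw [tri_edst_eMid, tri_esrc_eOut],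
        by rw [tri_edst_eOut]; exact Z.liftP_path hp2⟩
  · obtain ⟨⟨p1, hp1⟩, _⟩ := hZ (Z.esrc e)
    obtain ⟨_, ⟨p2, hp2⟩⟩ := hZ (Z.edst e)
    refine ⟨⟨Z.liftP p1 ++ [Z.eIn e, Z.eMid e], ?_⟩, ⟨Z.eOut e :: Z.liftP p2, ?_⟩⟩
    · have := (Z.tri).isPathFrom_append (Z.liftP_path hp1)
        (show (Z.tri).IsPathFrom (Z.vO (Z.esrc e)) (Z.vB e) [Z.eIn e, Z.eMid e] from
          ⟨by rw [tri_esrc_eIn], by rw [tri_edst_eIn, tri_esrc_eMid],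
            by rw [tri_edst_eMid]; rfl⟩)
      exact this
    · exact ⟨by rw [tri_esrc_eOut], by rw [tri_edst_eOut]; exact Z.liftP_path hp2⟩

lemma tri_monotone (hZ : Z.MonotoneBP) : (Z.tri).MonotoneBP := by
  intro f l hf
  rcases Z.tri_edge_cases f with ⟨e, rfl⟩ | ⟨e, rfl⟩ | ⟨e, rfl⟩
  · rw [tri_label_eIn] at hf; exact absurd hf (by simp)
  · rw [tri_label_eMid] at hf; exact hZ e l hf
  · rw [tri_label_eOut] at hf; exact absurd hf (by simp)

/-- A completion of any subdivision vertex to an original vertex, backwards. -/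
lemma tri_pre (w : Fin (Z.tri).n) :
    ∃ (u : Fin Z.n) (pre : List (Fin (Z.tri).m)),
      (Z.tri).IsPathFrom (Z.vO u) w pre := by
  rcases Z.tri_vertex_cases w with ⟨v, rfl⟩ | ⟨e, rfl⟩ | ⟨e, rfl⟩
  · exact ⟨v, [], rfl⟩
  · exact ⟨Z.esrc e, [Z.eIn e], ⟨by rw [tri_esrc_eIn], by rw [tri_edst_eIn]; rfl⟩⟩
  · exact ⟨Z.esrc e, [Z.eIn e, Z.eMid e],
      ⟨by rw [tri_esrc_eIn], by rw [tri_edst_eIn, tri_esrc_eMid], by rw [tri_edst_eMid]; rfl⟩⟩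

lemma tri_post (w : Fin (Z.tri).n) :
    ∃ (u : Fin Z.n) (post : List (Fin (Z.tri).m)),
      (Z.tri).IsPathFrom w (Z.vO u) post := by
  rcases Z.tri_vertex_cases w with ⟨v, rfl⟩ | ⟨e, rfl⟩ | ⟨e, rfl⟩
  · exact ⟨v, [], rfl⟩
  · exact ⟨Z.edst e, [Z.eMid e, Z.eOut e],
      ⟨by rw [tri_esrc_eMid], by rw [tri_edst_eMid, tri_esrc_eOut], by rw [tri_edst_eOut]; rfl⟩⟩
  · exact ⟨Z.edst e, [Z.eOut e], ⟨by rw [tri_esrc_eOut], by rw [tri_edst_eOut]; rfl⟩⟩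

end TriNBP2

section TriSMNBP

variable [DecidableEq X] (Z : BP X) {d : ℕ}

lemma tri_readTimes (hZ : Z.ReadTimes d) : (Z.tri).ReadTimes d := by
  intro w w' q hq x
  obtain ⟨u, pre, hpre⟩ := Z.tri_pre w
  obtain ⟨u', post, hpost⟩ := Z.tri_post w'
  have htot : (Z.tri).IsPathFrom (Z.vO u) (Z.vO u') (pre ++ q ++ post) :=
    (Z.tri).isPathFrom_append ((Z.tri).isPathFrom_append hpre hq) hpost
  obtain ⟨p, hp, heq⟩ := Z.liftP_unlift htot
  have hcount : (Z.tri).varCount (pre ++ q ++ post) x = Z.varCount p x := by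
    rw [heq, liftP_varCount]
  have hle := hZ u u' p hp x
  rw [varCount_append, varCount_append] at hcount
  omega

lemma tri_separable (hZ : Z.Separable d) : (Z.tri).Separable d := by
  intro q hq
  obtain ⟨p, hp, rfl⟩ := Z.liftP_unlift hq
  obtain ⟨ps, hlen, hfl, hro⟩ := hZ p hp
  refine ⟨ps.map Z.liftP, by simpa using hlen, ?_, ?_⟩
  · rw [← hfl]
    clear hfl hlen hro hp
    induction ps with
    | nil => rfl
    | cons s ps ih => simp [liftP_append, ih]
  · intro s hs
    obtain ⟨s', hs', rfl⟩ := List.mem_map.mp hs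
    exact Z.liftP_readOnce (hro s' hs')

omit [DecidableEq X] in
lemma tri_sat (σ : X → Bool) : (Z.tri).Sat σ ↔ Z.Sat σ := by
  constructor
  · rintro ⟨q, hq, hag⟩
    obtain ⟨p, hp, rfl⟩ := Z.liftP_unlift hq
    refine ⟨p, hp, ?_⟩
    intro e he l hl
    refine hag (Z.eMid e) ?_ l (by rw [tri_label_eMid]; exact hl)
    simp only [liftP]
    exact List.mem_flatMap.mpr ⟨e, he, by simp⟩
  · rintro ⟨p, hp, hag⟩
    refine ⟨Z.liftP p, Z.liftP_path hp, ?_⟩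
    intro f hf l hl
    simp only [liftP] at hf
    obtain ⟨e, he, hf⟩ := List.mem_flatMap.mp hf
    simp only [List.mem_cons, List.not_mem_nil, or_false] at hf
    rcases hf with rfl | rfl | rfl
    · rw [tri_label_eIn] at hl; exact absurd hl (by simp)
    · rw [tri_label_eMid] at hl; exact hag e he l hl
    · rw [tri_label_eOut] at hl; exact absurd hl (by simp)

lemma tri_isSMNBP (hZ : Z.IsSMNBP d) : (Z.tri).IsSMNBP d := by
  obtain ⟨⟨hac, hsrc, hsin, hreach⟩, hmono, hrt, hsep⟩ := hZ
  exact ⟨⟨Z.tri_acyclic hac, Z.tri_no_into_source hsrc, Z.tri_no_from_sink hsin,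
    Z.tri_reach hreach⟩, Z.tri_monotone hmono, Z.tri_readTimes hrt, Z.tri_separable hsep⟩

end TriSMNBP

section Yard1

/-- States of the scanning process along a lifted path: a current breakpoint
(original vertex, first midpoint or second midpoint) together with the
remaining original path. -/
inductive YState (Z : BP X) where
  | O (u : Fin Z.n) (r : List (Fin Z.m))
  | A (e : Fin Z.m) (r : List (Fin Z.m))
  | B (e : Fin Z.m) (r : List (Fin Z.m))

variable {Z : BP X}

namespace YState

/-- Vertex of the subdivision at which the state sits. -/
def wOf : YState Z → Fin (Z.tri).n
  | O u _ => Z.vO u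
  | A e _ => Z.vA e
  | B e _ => Z.vB e

/-- Remaining (lifted) path from the state to the sink. -/
def qOf : YState Z → List (Fin (Z.tri).m)
  | O _ r => Z.liftP r
  | A e r => Z.eMid e :: Z.eOut e :: Z.liftP r
  | B e r => Z.eOut e :: Z.liftP r

/-- Well-formedness: the remaining original path indeed leads to the sink. -/
def WFS : YState Z → Prop
  | O u r => Z.IsPathFrom u Z.sink r
  | A e r => Z.IsPathFrom (Z.edst e) Z.sink r
  | B e r => Z.IsPathFrom (Z.edst e) Z.sink r

/-- Termination measure. -/
def mu : YState Z → ℕ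
  | O _ r => 3 * r.length
  | A _ r => 3 * r.length + 2
  | B _ r => 3 * r.length + 1

/-- The next candidate state. -/
def nextS : YState Z → YState Z
  | O u [] => O u []
  | O _ (e :: r) => A e r
  | A e r => B e r
  | B _ [] => O Z.sink []
  | B _ (e' :: r) => A e' r

end YState

open YState

lemma wf_qpath {s : YState Z} (h : s.WFS) :
    (Z.tri).IsPathFrom s.wOf (Z.tri).sink s.qOf := by
  cases s with
  | O u r =>
    simp only [wOf, qOf, WFS] at h ⊢
    exact Z.liftP_path h
  | A e r =>
    simp only [wOf, qOf, WFS] at h ⊢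
    exact ⟨by rw [tri_esrc_eMid], by rw [tri_edst_eMid, tri_esrc_eOut],
      by rw [tri_edst_eOut]; exact Z.liftP_path h⟩
  | B e r =>
    simp only [wOf, qOf, WFS] at h ⊢
    exact ⟨by rw [tri_esrc_eOut], by rw [tri_edst_eOut]; exact Z.liftP_path h⟩

lemma qOf_nil {s : YState Z} (hwf : s.WFS) (h : s.qOf = []) : s.wOf = (Z.tri).sink := by
  cases s with
  | O u r =>
    cases r with
    | nil =>
      have hu : u = Z.sink := hwf
      simp only [wOf]
      rw [hu]
    | cons e r => exact absurd h (by simp [qOf])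
  | A e r => exact absurd h (by simp [qOf])
  | B e r => exact absurd h (by simp [qOf])

/-- The adjacency step lemma: moving to the next candidate. -/
lemma step_adj [DecidableEq X] (hac : Z.Acyclic) {s : YState Z} (hwf : s.WFS)
    (hne : s.qOf ≠ []) :
    s.nextS.WFS ∧ s.nextS.mu < s.mu ∧
      ∃ gap, s.qOf = gap ++ s.nextS.qOf ∧
        (Z.tri).IsPathFrom s.wOf s.nextS.wOf gap ∧
        (∀ pth, (Z.tri).IsPathFrom s.wOf s.nextS.wOf pth → pth = gap) ∧
        (Z.tri).ReadOnce gap := by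
  have triac : (Z.tri).Acyclic := Z.tri_acyclic hac
  cases s with
  | O u r =>
    cases r with
    | nil => exact absurd rfl hne
    | cons e r =>
      obtain ⟨he, hr⟩ := hwf
      simp only [nextS, WFS, mu, wOf, qOf]
      refine ⟨hr, by simp only [List.length_cons]; omega, [Z.eIn e], by simp, ?_, ?_, ?_⟩
      · exact ⟨by rw [tri_esrc_eIn, he], by rw [tri_edst_eIn]; rfl⟩
      · intro pth hpth
        have hne' : pth ≠ [] := by
          intro hnil
          subst hnil
          exact Z.vO_ne_vA u e hpth
        obtain ⟨q0, rfl, h0⟩ := Z.into_vA hpth hne'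
        rw [he] at h0
        rw [triac _ _ h0]
        rfl
      · exact (Z.tri).readOnce_singleton _
  | A e r =>
    simp only [nextS, WFS, mu, wOf, qOf] at hwf ⊢
    refine ⟨hwf, by omega, [Z.eMid e], by simp, ?_, ?_, ?_⟩
    · exact ⟨by rw [tri_esrc_eMid], by rw [tri_edst_eMid]; rfl⟩
    · intro pth hpth
      rcases Z.from_vA hpth with ⟨rfl, hw⟩ | ⟨q', rfl, h'⟩
      · exact absurd hw.symm (Z.vA_ne_vB _ _)
      · rw [triac _ _ h']
    · exact (Z.tri).readOnce_singleton _
  | B e r =>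
    cases r with
    | nil =>
      have hsink : Z.edst e = Z.sink := hwf
      simp only [nextS, WFS, mu, wOf, qOf]
      refine ⟨rfl, by simp only [List.length_nil]; omega, [Z.eOut e], by simp, ?_, ?_, ?_⟩
      · exact ⟨by rw [tri_esrc_eOut], by rw [tri_edst_eOut, hsink]; rfl⟩
      · intro pth hpth
        rcases Z.from_vB hpth with ⟨rfl, hw⟩ | ⟨q', rfl, h'⟩
        · exact absurd hw (Z.vO_ne_vB _ _)
        · rw [hsink] at h'
          rw [triac _ _ h']
      · exact (Z.tri).readOnce_singleton _
    | cons e' r' =>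
      obtain ⟨he', hr⟩ := hwf
      simp only [nextS, WFS, mu, wOf, qOf]
      refine ⟨hr, by simp only [List.length_cons]; omega, [Z.eOut e, Z.eIn e'], by simp, ?_, ?_, ?_⟩
      · exact ⟨by rw [tri_esrc_eOut], by rw [tri_edst_eOut, tri_esrc_eIn, he'],
          by rw [tri_edst_eIn]; rfl⟩
      · intro pth hpth
        rcases Z.from_vB hpth with ⟨rfl, hw⟩ | ⟨q', rfl, h'⟩
        · exact absurd hw.symm (Z.vA_ne_vB _ _).symm
        · have hq' : q' ≠ [] := by
            intro hnil
            subst hnil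
            exact Z.vO_ne_vA (Z.edst e) e' h'
          obtain ⟨q0, rfl, h0⟩ := Z.into_vA h' hq'
          rw [he'] at h0
          rw [triac _ _ h0]
          rfl
      · refine (Z.tri).readOnce_of_none ?_
        intro f hf
        rcases List.mem_cons.mp hf with rfl | hf
        · exact Z.tri_label_eOut e
        · rcases List.mem_cons.mp hf with rfl | hf
          · exact Z.tri_label_eIn e'
          · exact absurd hf List.not_mem_nil

end Yard1

section Yard2

open YState

/-- A chain of "yardstick" segments from a vertex to the sink. -/
def SegChain [DecidableEq X] (W : BP X) : Fin W.n → List (List (Fin W.m)) → Prop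
  | w, [] => w = W.sink
  | w, sg :: rest => ∃ w', W.IsPathFrom w w' sg ∧
      (∀ q, W.IsPathFrom w w' q → W.ReadOnce q) ∧ SegChain W w' rest

variable {Z : BP X}

/-- Scanning states that can occur after at least one step. -/
def okS : YState Z → Prop
  | .O u r => u = Z.sink ∧ r = []
  | .A _ _ => True
  | .B _ _ => True

lemma okS_next {s : YState Z} (h : s.qOf ≠ []) : okS s.nextS := by
  cases s with
  | O u r =>
    cases r with
    | nil => exact absurd rfl h
    | cons e r => trivial
  | A e r => trivial
  | B e r =>
    cases r with
    | nil => exact ⟨rfl, rfl⟩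
    | cons e' r => trivial

lemma mu_pos {s : YState Z} (h : s.qOf ≠ []) : 0 < s.mu := by
  cases s with
  | O u r =>
    cases r with
    | nil => exact absurd rfl h
    | cons e r => simp [mu]
  | A e r => simp [mu]
  | B e r => simp [mu]

lemma scan [DecidableEq X] (hac : Z.Acyclic) :
    ∀ (N : ℕ) (s : YState Z), s.mu ≤ N → s.WFS → okS s →
    ∀ (w0 : Fin (Z.tri).n) (pf q0 : List (Fin (Z.tri).m)),
      (Z.tri).IsPathFrom w0 s.wOf pf → q0 = pf ++ s.qOf →
      (∀ q, (Z.tri).IsPathFrom w0 s.wOf q → (Z.tri).ReadOnce q) →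
      (∀ q, (Z.tri).IsPathFrom w0 (Z.tri).sink q → (Z.tri).ReadOnce q) ∨
      ∃ (s' : YState Z) (pf' : List (Fin (Z.tri).m)), s'.WFS ∧ okS s' ∧ s'.mu ≤ s.mu ∧
        s'.qOf ≠ [] ∧
        (Z.tri).IsPathFrom w0 s'.wOf pf' ∧ q0 = pf' ++ s'.qOf ∧
        (∀ q, (Z.tri).IsPathFrom w0 s'.wOf q → (Z.tri).ReadOnce q) ∧
        ¬ (∀ q, (Z.tri).IsPathFrom w0 s'.nextS.wOf q → (Z.tri).ReadOnce q) := by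
  intro N
  induction N with
  | zero =>
    intro s hmu hwf hok w0 pf q0 hpf hq0 hgood
    left
    have hq : s.qOf = [] := by
      by_contra hne
      have := mu_pos hne
      omega
    rw [qOf_nil hwf hq] at hgood
    exact hgood
  | succ N ih =>
    intro s hmu hwf hok w0 pf q0 hpf hq0 hgood
    rcases Classical.em (s.qOf = []) with hq | hne
    · left
      rw [qOf_nil hwf hq] at hgood
      exact hgood
    · obtain ⟨hwf1, hmu1, gap, hgapeq, hgappath, huniq, hgapro⟩ := step_adj hac hwf hne
      rcases Classical.em
        (∀ q, (Z.tri).IsPathFrom w0 s.nextS.wOf q → (Z.tri).ReadOnce q) with hg1 | hb1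
      · have hres := ih s.nextS (by omega) hwf1 (okS_next hne) w0 (pf ++ gap) q0
          ((Z.tri).isPathFrom_append hpf hgappath)
          (by rw [hq0, hgapeq, List.append_assoc]) hg1
        rcases hres with hres | ⟨s', pf', h1, h2, h3, h4, h5, h6, h7, h8⟩
        · exact Or.inl hres
        · exact Or.inr ⟨s', pf', h1, h2, le_trans h3 (le_of_lt hmu1), h4, h5, h6, h7, h8⟩
      · right
        exact ⟨s, pf, hwf, hok, le_rfl, hne, hpf, hq0, hgood, hb1⟩

end Yard2

section Yard3

open YState

variable {Z : BP X} [DecidableEq X]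

omit [DecidableEq X] in
lemma varCount_concat (W : BP X) [DecidableEq X] (l : List (Fin W.m)) (e : Fin W.m) (x : X) :
    W.varCount (l.concat e) x = W.varCount l x + W.varCount [e] x := by
  rw [List.concat_eq_append, varCount_append]

lemma main_yard (hac : Z.Acyclic) :
    ∀ (N : ℕ) (s : YState Z), s.mu ≤ N → s.WFS → ∀ k : ℕ,
      (∀ W, (Z.tri).IsPathFrom s.wOf (Z.tri).sink W → ¬ (Z.tri).ChainW (k+1) W) →
      ∃ segs : List (List (Fin (Z.tri).m)), segs.length ≤ k + 1 ∧
        segs.flatten = s.qOf ∧ SegChain (Z.tri) s.wOf segs := by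
  intro N
  induction N with
  | zero =>
    intro s hmu hwf k _
    have hq : s.qOf = [] := by
      by_contra hne
      have := mu_pos hne
      omega
    exact ⟨[], by simp, by rw [hq]; rfl, qOf_nil hwf hq⟩
  | succ N ih =>
    intro s hmu hwf k hH
    rcases Classical.em (s.qOf = []) with hq | hne
    · exact ⟨[], by simp, by rw [hq]; rfl, qOf_nil hwf hq⟩
    · obtain ⟨hwf1, hmu1, gap, hgapeq, hgappath, huniq, hgapro⟩ := step_adj hac hwf hne
      have hgood1 : ∀ q, (Z.tri).IsPathFrom s.wOf s.nextS.wOf q → (Z.tri).ReadOnce q := by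
        intro q hqp
        rw [huniq q hqp]
        exact hgapro
      have hscan := scan hac s.nextS.mu s.nextS le_rfl hwf1 (okS_next hne) s.wOf gap s.qOf
        hgappath hgapeq hgood1
      rcases hscan with hGoodSink | ⟨s', pf', hwf', hok', hmu', hne', hpf', heq', hgood', hbad'⟩
      · refine ⟨[s.qOf], by simp, by simp, ?_⟩
        exact ⟨(Z.tri).sink, wf_qpath hwf, hGoodSink, rfl⟩
      · -- adversary path
        push_neg at hbad'
        obtain ⟨Aadv, hAp, hAro⟩ := hbad'
        obtain ⟨hwfn', _, _⟩ := step_adj hac hwf' hne'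
        obtain ⟨x, hx2⟩ := ((Z.tri).not_readOnce_iff Aadv).mp hAro
        cases k with
        | zero =>
          -- contradiction: a single repeat gives a chain of length 1
          exfalso
          have hC : (Z.tri).IsPathFrom s.wOf (Z.tri).sink (Aadv ++ s'.nextS.qOf) :=
            (Z.tri).isPathFrom_append hAp (wf_qpath hwfn')
          refine hH _ hC ?_
          obtain ⟨al, g, bl, haeq, hg, hmem⟩ := second_occ_split ((Z.tri).vpred x) Aadv hx2
          exact ⟨al, g, bl ++ s'.nextS.qOf, x, by rw [haeq]; simp, hg, hmem, trivial⟩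
        | succ k' =>
          -- establish the hypothesis at s'
          have hHstar : ∀ W, (Z.tri).IsPathFrom s'.wOf (Z.tri).sink W →
              ¬ (Z.tri).ChainW (k'+1) W := by
            intro W hW hch
            cases s' with
            | O u r =>
              obtain ⟨rfl, rfl⟩ := hok'
              exact hne' rfl
            | A e r =>
              -- nextS = B e r; adversary ends at vB e
              have hAp' : (Z.tri).IsPathFrom s.wOf (Z.vB e) Aadv := hAp
              have hAne : Aadv ≠ [] := by
                intro hnil
                subst hnil
                exact hAro ((Z.tri).readOnce_nil)
              obtain ⟨q0a, rfl, h0a⟩ := Z.into_vB hAp' hAne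
              -- W leaves vA e
              rcases Z.from_vA (show (Z.tri).IsPathFrom (Z.vA e) (Z.tri).sink W from hW) with
                ⟨rfl, hw⟩ | ⟨W1, rfl, hW1⟩
              · exact absurd hw (Z.vO_ne_vA _ _)
              · have hC : (Z.tri).IsPathFrom s.wOf (Z.tri).sink (q0a.concat (Z.eMid e) ++ W1) :=
                  (Z.tri).isPathFrom_append hAp' hW1
                refine hH _ hC ?_
                rw [varCount_concat] at hx2
                have hmid : (Z.tri).varCount [Z.eMid e] x ≤ 1 := (Z.tri).readOnce_singleton _ x
                rcases Nat.lt_or_ge ((Z.tri).varCount q0a x) 2 with hlt | hge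
                · -- the middle edge is an occurrence, one occurrence inside q0a
                  have hxm : (Z.tri).vpred x (Z.eMid e) = true := by
                    by_contra hxf
                    have : (Z.tri).varCount [Z.eMid e] x = 0 := by
                      rw [varCount_eq_countP, List.countP_eq_zero]
                      intro f hf
                      rcases List.mem_cons.mp hf with rfl | hf
                      · exact hxf
                      · exact absurd hf List.not_mem_nil
                    omega
                  have hq0pos : 0 < (Z.tri).varCount q0a x := by omega
                  obtain ⟨h, hhm, hhp⟩ := List.countP_pos_iff.mp hq0pos
                  refine ⟨q0a, Z.eMid e, W1, x, by simp [List.concat_eq_append], hxm,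
                    ⟨h, hhm, hhp⟩, hch⟩
                · -- two occurrences inside q0a
                  obtain ⟨al, g, bl, haeq, hg, hmem⟩ :=
                    second_occ_split ((Z.tri).vpred x) q0a hge
                  refine ⟨al, g, bl ++ (Z.eMid e :: W1), x,
                    by rw [haeq]; simp [List.concat_eq_append], hg, hmem, ?_⟩
                  have := (Z.tri).chainW_prepend (g :: bl) hch
                  simpa using this
            | B e r =>
              cases r with
              | nil =>
                -- W is forced to be the single unlabelled edge
                have hsink : Z.edst e = Z.sink := hwf'
                rcases Z.from_vB (show (Z.tri).IsPathFrom (Z.vB e) (Z.tri).sink W from hW) with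
                  ⟨rfl, hw⟩ | ⟨Q0, rfl, hQ0⟩
                · exact absurd hw (Z.vO_ne_vB _ _)
                · rw [hsink] at hQ0
                  have : Q0 = [] := (Z.tri_acyclic hac) _ _ hQ0
                  subst this
                  obtain ⟨f, hf, hfs⟩ := (Z.tri).chainW_has_labeled hch
                  rcases List.mem_cons.mp hf with rfl | hf
                  · rw [tri_label_eOut] at hfs
                    simp at hfs
                  · exact absurd hf List.not_mem_nil
              | cons e' r'' =>
                -- nextS = A e' r''; adversary ends at vA e'
                have he' : Z.esrc e' = Z.edst e := hwf'.1
                have hAp' : (Z.tri).IsPathFrom s.wOf (Z.vA e') Aadv := hAp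
                have hAne : Aadv ≠ [] := by
                  intro hnil
                  subst hnil
                  exact hAro ((Z.tri).readOnce_nil)
                obtain ⟨R0, rfl, h0a⟩ := Z.into_vA hAp' hAne
                rcases Z.from_vB (show (Z.tri).IsPathFrom (Z.vB e) (Z.tri).sink W from hW) with
                  ⟨rfl, hw⟩ | ⟨Q0, rfl, hQ0⟩
                · exact absurd hw (Z.vO_ne_vB _ _)
                · rw [he'] at h0a
                  have hC : (Z.tri).IsPathFrom s.wOf (Z.tri).sink (R0 ++ Q0) :=
                    (Z.tri).isPathFrom_append h0a hQ0
                  refine hH _ hC ?_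
                  rw [varCount_concat] at hx2
                  have hzero : (Z.tri).varCount [Z.eIn e'] x = 0 := by
                    rw [varCount_eq_countP, List.countP_eq_zero]
                    intro f hf
                    rcases List.mem_cons.mp hf with rfl | hf
                    · simp
                    · exact absurd hf List.not_mem_nil
                  have hge : 2 ≤ (Z.tri).varCount R0 x := by omega
                  obtain ⟨al, g, bl, haeq, hg, hmem⟩ :=
                    second_occ_split ((Z.tri).vpred x) R0 hge
                  refine ⟨al, g, bl ++ Q0, x, by rw [haeq]; simp, hg, hmem, ?_⟩
                  have hQch : (Z.tri).ChainW (k'+1) Q0 :=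
                    (Z.tri).chainW_cons_none (Z.tri_label_eOut e) hch
                  have := (Z.tri).chainW_prepend (g :: bl) hQch
                  simpa using this
          -- recurse at s'
          have hmus' : s'.mu ≤ N := by omega
          obtain ⟨segs, hlen, hfl, hchain⟩ := ih s' hmus' hwf' k' hHstar
          refine ⟨pf' :: segs, by simp; omega, ?_, ?_⟩
          · rw [List.flatten_cons, hfl, heq']
          · exact ⟨s'.wOf, hpf', hgood', hchain⟩

end Yard3

section Yard4

open YState

lemma flatten_map_liftP (Z : BP X) (qs : List (List (Fin Z.m))) :
    (qs.map Z.liftP).flatten = Z.liftP qs.flatten := by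
  induction qs with
  | nil => rfl
  | cons q qs ih => simp [liftP_append, ih]

lemma segChain_toFin [DecidableEq X] (W : BP X) :
    ∀ (segs : List (List (Fin W.m))) (w : Fin W.n), SegChain W w segs →
      ∃ u : Fin (segs.length + 1) → Fin W.n, u 0 = w ∧ u (Fin.last _) = W.sink ∧
        (∀ i : Fin segs.length, W.IsPathFrom (u i.castSucc) (u i.succ) (segs.get i)) ∧
        (∀ i : Fin segs.length, ∀ q, W.IsPathFrom (u i.castSucc) (u i.succ) q →
          W.ReadOnce q) := by
  intro segs
  induction segs with
  | nil =>
    intro w hsc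
    have hw : w = W.sink := hsc
    exact ⟨fun _ => w, rfl, hw, fun i => i.elim0, fun i => i.elim0⟩
  | cons sg rest ih =>
    intro w hsc
    obtain ⟨w', hpath, hgood, hrest⟩ := hsc
    obtain ⟨u', h0, hlast, hp, hg⟩ := ih w' hrest
    refine ⟨Fin.cons w u', Fin.cons_zero .., ?_, ?_, ?_⟩
    · show (Fin.cons w u' : Fin (rest.length + 1 + 1) → Fin W.n) (Fin.last (rest.length + 1))
          = W.sink
      rw [← Fin.succ_last, Fin.cons_succ]
      exact hlast
    · intro i
      induction i using Fin.cases with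
      | zero =>
        rw [Fin.castSucc_zero, Fin.cons_zero]
        have h1 : (Fin.cons w u' : Fin (rest.length + 1 + 1) → Fin W.n) (0 : Fin _).succ
            = u' 0 := Fin.cons_succ ..
        rw [h1, h0]
        exact hpath
      | succ j =>
        rw [← Fin.succ_castSucc, Fin.cons_succ, Fin.cons_succ]
        exact hp j
    · intro i
      induction i using Fin.cases with
      | zero =>
        rw [Fin.castSucc_zero, Fin.cons_zero]
        have h1 : (Fin.cons w u' : Fin (rest.length + 1 + 1) → Fin W.n) (0 : Fin _).succ
            = u' 0 := Fin.cons_succ ..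
        rw [h1, h0]
        exact hgood
      | succ j =>
        rw [← Fin.succ_castSucc, Fin.cons_succ, Fin.cons_succ]
        exact hg j

lemma tri_yardsticks [DecidableEq X] {d : ℕ} (Z : BP X) (hZ : Z.IsSMNBP d) :
    (Z.tri).HasYardsticks d := by
  obtain ⟨⟨hac, hsrc, hsin, hreach⟩, hmono, hrt, hsep⟩ := hZ
  intro p'' hp''
  obtain ⟨p, hp, rfl⟩ := Z.liftP_unlift hp''
  rcases Classical.em (p = []) with rfl | hpne
  · have hss : Z.source = Z.sink := hp
    refine ⟨0, Nat.zero_le d, fun _ => (Z.tri).source, fun i => i.elim0, rfl, ?_, by simp, ?_, ?_⟩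
    · rw [tri_source, tri_sink, hss]
    · intro i; exact i.elim0
    · intro i; exact i.elim0
  · have hd1 : 1 ≤ d := by
      obtain ⟨ps, hlen, hfl, _⟩ := hsep p hp
      have : ps ≠ [] := by
        intro h
        rw [h] at hfl
        exact hpne hfl.symm
      have := List.length_pos_iff.mpr this
      omega
    have hwf0 : (YState.O Z.source p).WFS := hp
    have hH : ∀ W, (Z.tri).IsPathFrom (YState.O Z.source p).wOf (Z.tri).sink W →
        ¬ (Z.tri).ChainW ((d-1)+1) W := by
      intro W hW hch
      have hd' : d - 1 + 1 = d := by omega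
      rw [hd'] at hch
      have hW' : (Z.tri).IsPathFrom (Z.vO Z.source) (Z.vO Z.sink) W := hW
      obtain ⟨q, hq, rfl⟩ := Z.liftP_unlift hW'
      obtain ⟨qs, hlen, hfl, hro⟩ := hsep q hq
      have hpieces : ∀ sgl ∈ qs.map Z.liftP, (Z.tri).ReadOnce sgl := by
        intro sgl hsgl
        obtain ⟨sgl', hmem, rfl⟩ := List.mem_map.mp hsgl
        exact Z.liftP_readOnce (hro sgl' hmem)
      have hflat : (qs.map Z.liftP).flatten = Z.liftP q := by
        rw [Z.flatten_map_liftP, hfl]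
      rcases (Z.tri).chainW_lt_pieces (qs.map Z.liftP) hpieces d (by rw [hflat]; exact hch)
        with h0 | hlt
      · omega
      · rw [List.length_map] at hlt
        omega
    obtain ⟨segs, hlen, hfl, hchain⟩ :=
      main_yard hac (YState.O Z.source p).mu (YState.O Z.source p) le_rfl hwf0 (d-1) hH
    obtain ⟨u, h0, hlast, hpth, hgd⟩ := segChain_toFin (Z.tri) segs _ hchain
    refine ⟨segs.length, by omega, u, fun i => segs.get i, ?_, hlast, ?_, hpth, hgd⟩
    · rw [h0]; rfl
    · have : List.ofFn (fun i => segs.get i) = segs := List.ofFn_get segs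
      rw [this]
      exact hfl.symm

end Yard4

end BP


/-- every `d`-SMNBP `Z` can be simulated by a `d`-SMNBP with
yardsticks having the same satisfying assignments and at most `3·|Z|` edges. -/
theorem smnbp_yardstick_simulation {X : Type} [DecidableEq X] (d : ℕ) (Z : BP X)
    (hZ : Z.IsSMNBP d) :
    ∃ Z' : BP X, Z'.IsSMNBP d ∧ Z'.HasYardsticks d ∧
      (∀ σ : X → Bool, Z'.Sat σ ↔ Z.Sat σ) ∧ Z'.m ≤ 3 * Z.m := by
  refine ⟨Z.tri, Z.tri_isSMNBP hZ, BP.tri_yardsticks Z hZ, fun σ => Z.tri_sat σ, ?_⟩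
  show Z.m + Z.m + Z.m ≤ 3 * Z.m
  omega
end

section
/- Let Z be a subdivided d-SMNBP, let P be a source-sink path of Z that is not read-once, and let v be the pre-pivot of P. Then Z_v, the branching program induced by v and all vertices reachable from v (with v as source and the sink of Z as sink, labels preserved), is a subdivided (d−1)-SMNBP. -/
/-- The in-degree of a vertex of `Z`. -/
noncomputable def BP.inDeg {X : Type} (Z : BP X) (w : Fin Z.n) : ℕ :=
  Nat.card {e : Fin Z.m // Z.edst e = w}

/-- The out-degree of a vertex of `Z`. -/
noncomputable def BP.outDeg {X : Type} (Z : BP X) (w : Fin Z.n) : ℕ :=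
  Nat.card {e : Fin Z.m // Z.esrc e = w}

/-- A junction vertex: in-degree or out-degree greater than one. -/
def BP.Junction {X : Type} (Z : BP X) (w : Fin Z.n) : Prop :=
  1 < Z.inDeg w ∨ 1 < Z.outDeg w

/-- `Z` is subdivided: no edge joins two junction vertices and both endpoints of
every labelled edge are subdivision (non-junction) vertices. -/
def BP.Subdivided {X : Type} (Z : BP X) : Prop :=
  (∀ e : Fin Z.m, ¬(Z.Junction (Z.esrc e) ∧ Z.Junction (Z.edst e))) ∧
  (∀ e : Fin Z.m, (Z.label e).isSome →
    ¬Z.Junction (Z.esrc e) ∧ ¬Z.Junction (Z.edst e))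

/-- `v` is a read-once vertex: every path from the source to `v` is read-once. -/
def BP.VertexReadOnce {X : Type} [DecidableEq X] (Z : BP X) (v : Fin Z.n) : Prop :=
  ∀ p, Z.IsPathFrom Z.source v p → Z.ReadOnce p

/-- `u` occurs on the path `p` from `s` to `t`. -/
def BP.OnPath {X : Type} (Z : BP X) (u s t : Fin Z.n) (p : List (Fin Z.m)) : Prop :=
  ∃ p1 p2, p = p1 ++ p2 ∧ Z.IsPathFrom s u p1 ∧ Z.IsPathFrom u t p2

/-- The in-degree of `w` within `Z_v`, the sub-branching-program induced by `v`
and all vertices reachable from `v` (whose edges are those with source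
reachable from `v`). -/
noncomputable def BP.inDegFrom {X : Type} (Z : BP X) (v w : Fin Z.n) : ℕ :=
  Nat.card {e : Fin Z.m // Z.Reach v (Z.esrc e) ∧ Z.edst e = w}

/-- The out-degree of `w` within `Z_v`. -/
noncomputable def BP.outDegFrom {X : Type} (Z : BP X) (v w : Fin Z.n) : ℕ :=
  Nat.card {e : Fin Z.m // Z.Reach v (Z.esrc e) ∧ Z.esrc e = w}

/-- `w` is a junction vertex of `Z_v`. -/
def BP.JunctionFrom {X : Type} (Z : BP X) (v w : Fin Z.n) : Prop :=
  1 < Z.inDegFrom v w ∨ 1 < Z.outDegFrom v w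

/-- `Z_v` is subdivided. -/
def BP.SubdividedFrom {X : Type} (Z : BP X) (v : Fin Z.n) : Prop :=
  (∀ e : Fin Z.m, Z.Reach v (Z.esrc e) →
    ¬(Z.JunctionFrom v (Z.esrc e) ∧ Z.JunctionFrom v (Z.edst e))) ∧
  (∀ e : Fin Z.m, Z.Reach v (Z.esrc e) → (Z.label e).isSome →
    ¬Z.JunctionFrom v (Z.esrc e) ∧ ¬Z.JunctionFrom v (Z.edst e))

/-- `Z_v` (with source `v` and the sink of `Z`) is separable with parameter `d`. -/
def BP.SeparableFrom {X : Type} [DecidableEq X] (Z : BP X) (v : Fin Z.n) (d : ℕ) : Prop :=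
  ∀ p, Z.IsPathFrom v Z.sink p →
    ∃ ps : List (List (Fin Z.m)), ps.length ≤ d ∧ ps.flatten = p ∧ ∀ q ∈ ps, Z.ReadOnce q

/-- `Z_v` is a syntactic read-`d`-times BP. -/
def BP.ReadTimesFrom {X : Type} [DecidableEq X] (Z : BP X) (v : Fin Z.n) (d : ℕ) : Prop :=
  ∀ (u w : Fin Z.n) (p : List (Fin Z.m)), Z.Reach v u → Z.IsPathFrom u w p →
    ∀ x : X, Z.varCount p x ≤ d


namespace SubBPAux

open List

set_option linter.unusedSectionVars false

variable {X : Type} [DecidableEq X] {Z : BP X}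

lemma isPathFrom_append {u v w : Fin Z.n} {p q : List (Fin Z.m)}
    (hp : Z.IsPathFrom u v p) (hq : Z.IsPathFrom v w q) :
    Z.IsPathFrom u w (p ++ q) := by
  induction p generalizing u with
  | nil =>
    have h : u = v := hp
    simpa [h] using hq
  | cons a t ih => exact ⟨hp.1, ih hp.2⟩

lemma isPathFrom_concat {u w : Fin Z.n} {p : List (Fin Z.m)} {g : Fin Z.m} :
    Z.IsPathFrom u w (p ++ [g]) ↔ Z.IsPathFrom u (Z.esrc g) p ∧ Z.edst g = w := by
  induction p generalizing u with
  | nil =>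
    show (Z.esrc g = u ∧ Z.edst g = w) ↔ (u = Z.esrc g ∧ Z.edst g = w)
    rw [eq_comm]
  | cons a t ih =>
    show (Z.esrc a = u ∧ Z.IsPathFrom (Z.edst a) w (t ++ [g])) ↔
      (Z.esrc a = u ∧ Z.IsPathFrom (Z.edst a) (Z.esrc g) t) ∧ Z.edst g = w
    rw [ih, and_assoc]

lemma varCount_append (p q : List (Fin Z.m)) (x : X) :
    Z.varCount (p ++ q) x = Z.varCount p x + Z.varCount q x :=
  List.countP_append

lemma varCount_le_of_sublist {p q : List (Fin Z.m)} (h : p <+ q) (x : X) :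
    Z.varCount p x ≤ Z.varCount q x :=
  h.countP_le

lemma readOnce_of_sublist {p q : List (Fin Z.m)} (h : p <+ q) (hq : Z.ReadOnce q) :
    Z.ReadOnce p := fun x => (varCount_le_of_sublist h x).trans (hq x)

lemma varCount_flatten_le (ps : List (List (Fin Z.m))) (h : ∀ q ∈ ps, Z.ReadOnce q) (x : X) :
    Z.varCount ps.flatten x ≤ ps.length := by
  induction ps with
  | nil => simp [BP.varCount]
  | cons a t ih =>
    simp only [List.flatten_cons, List.length_cons]
    rw [varCount_append]
    have h1 := h a (List.mem_cons_self) x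
    have h2 := ih fun q hq => h q (List.mem_cons_of_mem _ hq)
    omega

lemma exists_sub_decomp {α : Type*} (ps : List (List α)) (l s : List α)
    (h : s ++ l = ps.flatten) :
    ∃ ps' : List (List α), ps'.length ≤ ps.length ∧ ps'.flatten = l ∧
      ∀ q ∈ ps', ∃ q₀ ∈ ps, q <+ q₀ := by
  induction ps generalizing s l with
  | nil =>
    simp only [List.flatten_nil, List.append_eq_nil_iff] at h
    exact ⟨[], by simp [h.2]⟩
  | cons a t ih =>
    rw [List.flatten_cons] at h
    rcases List.append_eq_append_iff.mp h with ⟨a', ha, hl⟩ | ⟨s', hs, hfl⟩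
    · refine ⟨a' :: t, le_rfl, by simp [hl], ?_⟩
      intro q hq
      rcases List.mem_cons.mp hq with rfl | hq
      · exact ⟨a, List.mem_cons_self, by rw [ha]; exact List.sublist_append_right _ _⟩
      · exact ⟨q, List.mem_cons_of_mem _ hq, List.Sublist.refl _⟩
    · obtain ⟨ps', h1, h2, h3⟩ := ih l s' hfl.symm
      exact ⟨ps', h1.trans (Nat.le_succ _), h2,
        fun q hq => (h3 q hq).imp fun q₀ hq₀ => ⟨List.mem_cons_of_mem _ hq₀.1, hq₀.2⟩⟩

lemma inDegFrom_le (v u : Fin Z.n) : Z.inDegFrom v u ≤ Z.inDeg u :=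
  Nat.card_le_card_of_injective (fun x => ⟨x.1, x.2.2⟩)
    (fun a b h => Subtype.ext (by simpa [Subtype.ext_iff] using h))

lemma outDegFrom_le (v u : Fin Z.n) : Z.outDegFrom v u ≤ Z.outDeg u :=
  Nat.card_le_card_of_injective (fun x => ⟨x.1, x.2.2⟩)
    (fun a b h => Subtype.ext (by simpa [Subtype.ext_iff] using h))

lemma junction_of_junctionFrom {v u : Fin Z.n} (h : Z.JunctionFrom v u) : Z.Junction u :=
  h.imp (fun h' => lt_of_lt_of_le h' (inDegFrom_le v u))
    (fun h' => lt_of_lt_of_le h' (outDegFrom_le v u))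

lemma esrc_eq_of_not_junction {v : Fin Z.n} {f g : Fin Z.m} (hnj : ¬Z.Junction v)
    (hf : Z.esrc f = v) (hg : Z.esrc g = v) : f = g := by
  by_contra hne
  exact hnj (Or.inr (Finite.one_lt_card_iff_nontrivial.mpr
    ⟨⟨f, hf⟩, ⟨g, hg⟩, by simpa [Subtype.ext_iff] using hne⟩))

lemma edst_eq_of_not_junction {v : Fin Z.n} {f g : Fin Z.m} (hnj : ¬Z.Junction v)
    (hf : Z.edst f = v) (hg : Z.edst g = v) : f = g := by
  by_contra hne
  exact hnj (Or.inl (Finite.one_lt_card_iff_nontrivial.mpr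
    ⟨⟨f, hf⟩, ⟨g, hg⟩, by simpa [Subtype.ext_iff] using hne⟩))

end SubBPAux

/-- if `Z` is a subdivided `d`-SMNBP, `P` a non-read-once
source-sink path with pivot `w` and pre-pivot `v`, then `Z_v` is a subdivided
`(d−1)`-SMNBP. -/
theorem prePivot_subBP_is_subdivided_smnbp {X : Type} [DecidableEq X] (d : ℕ)
    (Z : BP X) (hZ : Z.IsSMNBP d) (hsub : Z.Subdivided)
    (p : List (Fin Z.m)) (hp : Z.IsPathFrom Z.source Z.sink p)
    (hnro : ¬Z.ReadOnce p)
    (v w : Fin Z.n) (e : Fin Z.m) (p1 p2 : List (Fin Z.m))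
    (hsplit : p = p1 ++ e :: p2)
    (hp1 : Z.IsPathFrom Z.source v p1) (hev : Z.esrc e = v) (hew : Z.edst e = w)
    (hp2 : Z.IsPathFrom w Z.sink p2)
    (hwnro : ¬Z.VertexReadOnce w)
    (hmin : ∀ u : Fin Z.n, Z.OnPath u Z.source Z.sink p →
      ¬Z.VertexReadOnce u → Z.Reach w u) :
    Z.SubdividedFrom v ∧ Z.SeparableFrom v (d - 1) ∧ Z.ReadTimesFrom v (d - 1) := by
  classical
  obtain ⟨⟨hacyc, hnotsrc, hnotsink, hreach⟩, hmono, hrt, hsep⟩ := hZ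
  -- d ≥ 2
  have hd2 : 2 ≤ d := by
    by_contra hd
    push_neg at hd
    apply hnro
    obtain ⟨ps, hlen, hfl, hro⟩ := hsep p hp
    intro x
    calc Z.varCount p x = Z.varCount ps.flatten x := by rw [hfl]
    _ ≤ ps.length := SubBPAux.varCount_flatten_le ps hro x
    _ ≤ 1 := by omega
  have hpe : Z.IsPathFrom v Z.sink (e :: p2) := ⟨hev, by rw [hew]; exact hp2⟩
  have hvw : Z.IsPathFrom v w [e] := ⟨hev, hew⟩
  -- v is a read-once vertex
  have hvro : Z.VertexReadOnce v := by
    by_contra hv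
    obtain ⟨s, hs⟩ := hmin v ⟨p1, e :: p2, hsplit, hp1, hpe⟩ hv
    have hcyc : Z.IsPathFrom w w (s ++ [e]) := SubBPAux.isPathFrom_append hs hvw
    have := hacyc w _ hcyc
    simp at this
  -- v is not a junction
  have hnjv : ¬Z.Junction v := by
    intro hjv
    have hnjw : ¬Z.Junction w := fun hjw => hsub.1 e (by rw [hev, hew]; exact ⟨hjv, hjw⟩)
    have hnone : Z.label e = none := by
      by_contra hne
      exact (hsub.2 e (Option.ne_none_iff_isSome.mp hne)).1 (by rw [hev]; exact hjv)
    apply hwnro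
    intro r hr
    rcases List.eq_nil_or_concat r with rfl | ⟨r', g, rfl⟩
    · intro x; simp [BP.varCount]
    · rw [List.concat_eq_append] at hr ⊢
      rw [SubBPAux.isPathFrom_concat] at hr
      obtain ⟨hr', hgw⟩ := hr
      have hge : g = e := SubBPAux.edst_eq_of_not_junction hnjw hgw hew
      rw [hge] at hr' ⊢
      rw [hev] at hr'
      have hro' := hvro r' hr'
      intro x
      rw [SubBPAux.varCount_append]
      have h0 : Z.varCount [e] x = 0 := by simp [BP.varCount, hnone]
      have := hro' x
      omega
  have houtv : ∀ f, Z.esrc f = v → f = e := fun f hf =>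
    SubBPAux.esrc_eq_of_not_junction hnjv hf hev
  -- a non-read-once path into w
  unfold BP.VertexReadOnce at hwnro
  push_neg at hwnro
  obtain ⟨r, hr, hrnro⟩ := hwnro
  unfold BP.ReadOnce at hrnro
  push_neg at hrnro
  obtain ⟨y, hy⟩ := hrnro
  -- Claim: Z_v is separable with parameter d - 1
  have claimC : Z.SeparableFrom v (d - 1) := by
    intro q hq
    rcases q with _ | ⟨f, q'⟩
    · exact ⟨[], by simp, rfl, by simp⟩
    obtain ⟨hf, hq'⟩ := hq
    have hfe : f = e := houtv f hf
    rw [hfe] at hq' ⊢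
    rw [hew] at hq'
    by_cases hjw : Z.Junction w
    · -- w is a junction, hence e is unlabelled
      have hnone : Z.label e = none := by
        by_contra hne
        exact (hsub.2 e (Option.ne_none_iff_isSome.mp hne)).2 (by rw [hew]; exact hjw)
      have hfull : Z.IsPathFrom Z.source Z.sink (r ++ q') := SubBPAux.isPathFrom_append hr hq'
      obtain ⟨ps, hlen, hfl, hro⟩ := hsep _ hfull
      rcases ps with _ | ⟨a, ps'⟩
      · exfalso
        have hrnil : r = [] := by
          have : ([] : List (Fin Z.m)) = r ++ q' := by simpa using hfl
          exact (List.append_eq_nil_iff.mp this.symm).1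
        subst hrnil
        simp [BP.varCount] at hy
      have hfl' : a ++ ps'.flatten = r ++ q' := by simpa using hfl
      have hale : a.length ≤ r.length := by
        by_contra hlt
        push_neg at hlt
        have hpref : r <+: a :=
          List.prefix_of_prefix_length_le ⟨q', hfl'.symm⟩ ⟨ps'.flatten, rfl⟩ (le_of_lt hlt)
        have h1 := SubBPAux.varCount_le_of_sublist (Z := Z) hpref.sublist y
        have h2 := hro a (List.mem_cons_self) y
        omega
      obtain ⟨s, hs⟩ : a <+: r :=
        List.prefix_of_prefix_length_le ⟨ps'.flatten, rfl⟩ ⟨q', hfl'.symm⟩ hale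
      have hsq : s ++ q' = ps'.flatten := by
        have hh : a ++ ps'.flatten = a ++ (s ++ q') := by
          rw [hfl', ← hs, List.append_assoc]
        exact (List.append_cancel_left hh).symm
      obtain ⟨ps'', h1, h2, h3⟩ := SubBPAux.exists_sub_decomp ps' q' s hsq
      have hlen'' : ps''.length ≤ ps'.length := h1
      have hdlen : ps'.length + 1 ≤ d := by simpa using hlen
      have hro'' : ∀ t ∈ ps'', Z.ReadOnce t := fun t ht => by
        obtain ⟨q₀, hq₀, hsubl⟩ := h3 t ht
        exact SubBPAux.readOnce_of_sublist hsubl (hro q₀ (List.mem_cons_of_mem _ hq₀))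
      rcases ps'' with _ | ⟨b, rest⟩
      · have hq'nil : q' = [] := by simpa using h2.symm
        subst hq'nil
        refine ⟨[[e]], by simp; omega, by simp, ?_⟩
        intro t ht
        simp only [List.mem_singleton] at ht
        subst ht
        intro x
        simp [BP.varCount, hnone]
      · refine ⟨(e :: b) :: rest, ?_, ?_, ?_⟩
        · simp only [List.length_cons] at hlen'' ⊢; omega
        · simp only [List.flatten_cons] at h2 ⊢
          rw [List.cons_append, h2]
        · intro t ht
          rcases List.mem_cons.mp ht with rfl | ht
          · intro x
            have hb := hro'' b (List.mem_cons_self) x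
            have : Z.varCount (e :: b) x = Z.varCount b x := by
              simp [BP.varCount, List.countP_cons, hnone]
            omega
          · exact hro'' t (List.mem_cons_of_mem _ ht)
    · -- w is not a junction: every edge into w is e
      rcases List.eq_nil_or_concat r with rfl | ⟨r'', g, rfl⟩
      · exfalso; simp [BP.varCount] at hy
      rw [List.concat_eq_append] at hr hy
      rw [SubBPAux.isPathFrom_concat] at hr
      obtain ⟨hr'', hgw⟩ := hr
      have hge : g = e := SubBPAux.edst_eq_of_not_junction hjw hgw hew
      rw [hge] at hr'' hy
      rw [hev] at hr''
      have hfull : Z.IsPathFrom Z.source Z.sink (r'' ++ e :: q') :=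
        SubBPAux.isPathFrom_append hr'' ⟨hev, by rw [hew]; exact hq'⟩
      obtain ⟨ps, hlen, hfl, hro⟩ := hsep _ hfull
      rcases ps with _ | ⟨a, ps'⟩
      · exfalso
        simp at hfl
      have hfl' : a ++ ps'.flatten = r'' ++ e :: q' := by simpa using hfl
      have hale : a.length ≤ r''.length := by
        by_contra hlt
        push_neg at hlt
        have hpref : (r'' ++ [e]) <+: a :=
          List.prefix_of_prefix_length_le ⟨q', by rw [hfl']; simp⟩ ⟨ps'.flatten, rfl⟩
            (by simp only [List.length_append, List.length_singleton]; omega)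
        have h1 := SubBPAux.varCount_le_of_sublist (Z := Z) hpref.sublist y
        have h2 := hro a (List.mem_cons_self) y
        omega
      obtain ⟨s, hs⟩ : a <+: r'' :=
        List.prefix_of_prefix_length_le ⟨ps'.flatten, rfl⟩ ⟨e :: q', hfl'.symm⟩ hale
      have hsq : s ++ (e :: q') = ps'.flatten := by
        have hh : a ++ ps'.flatten = a ++ (s ++ e :: q') := by
          rw [hfl', ← hs, List.append_assoc]
        exact (List.append_cancel_left hh).symm
      obtain ⟨ps'', h1, h2, h3⟩ := SubBPAux.exists_sub_decomp ps' (e :: q') s hsq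
      have hdlen : ps'.length + 1 ≤ d := by simpa using hlen
      refine ⟨ps'', by omega, h2, fun t ht => ?_⟩
      obtain ⟨q₀, hq₀, hsubl⟩ := h3 t ht
      exact SubBPAux.readOnce_of_sublist hsubl (hro q₀ (List.mem_cons_of_mem _ hq₀))
  refine ⟨⟨fun e' _ hj => hsub.1 e' ⟨SubBPAux.junction_of_junctionFrom hj.1,
      SubBPAux.junction_of_junctionFrom hj.2⟩,
    fun e' _ hsome => ⟨fun hj => (hsub.2 e' hsome).1 (SubBPAux.junction_of_junctionFrom hj),
      fun hj => (hsub.2 e' hsome).2 (SubBPAux.junction_of_junctionFrom hj)⟩⟩, claimC, ?_⟩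
  intro u w' q hvu hq x
  obtain ⟨s, hs⟩ := hvu
  obtain ⟨ext, hext⟩ := (hreach w').2
  have hfull : Z.IsPathFrom v Z.sink (s ++ (q ++ ext)) :=
    SubBPAux.isPathFrom_append hs (SubBPAux.isPathFrom_append hq hext)
  obtain ⟨ps, hlen, hfl, hro⟩ := claimC _ hfull
  have hsubq : List.Sublist q (s ++ (q ++ ext)) :=
    (List.sublist_append_left q ext).trans (List.sublist_append_right s _)
  calc Z.varCount q x ≤ Z.varCount (s ++ (q ++ ext)) x :=
        SubBPAux.varCount_le_of_sublist hsubq x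
  _ = Z.varCount ps.flatten x := by rw [hfl]
  _ ≤ ps.length := SubBPAux.varCount_flatten_le ps hro x
  _ ≤ d - 1 := hlen
end
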